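/- arXiv:math/9910189 — 11 statements merged into one kernel-verified Lean document; each statement's English description precedes it below -/
import Mathlib

section
/- Let k be a real number with k ≠ -1, and let u be a solution of E(-1,1) on (0,∞) × I (I ⊆ ℝ an open interval). Then the function ũ defined for y > 0, t ∈ I by ũ(y,t) = (k+1)^{-2} · y^{-2k/(k+1)} · u(y^{1/(k+1)}, t) is again a solution of E(-1,1) on (0,∞) × I. (This is the finite form of the transformation x' = x^{k+1}, t' = t, u' = (k+1)^{-2} x^{-2k} u.) -/
open Real Set
open Topology Filter

/-- `u` is a smooth positive solution of the porous medium equation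
`E(n,μ) : u_t = ∂ₓ(uⁿ uₓ) + (μ/x) uⁿ uₓ` on the set `D ⊆ (0,∞) × ℝ`. -/
def IsSolE (n μ : ℝ) (u : ℝ → ℝ → ℝ) (D : Set (ℝ × ℝ)) : Prop :=
  ContDiffOn ℝ (⊤ : ℕ∞) (fun p : ℝ × ℝ => u p.1 p.2) D ∧
  (∀ p ∈ D, 0 < u p.1 p.2) ∧
  ∀ p ∈ D,
    deriv (fun t => u p.1 t) p.2 =
      deriv (fun x => u x p.2 ^ n * deriv (fun x' => u x' p.2) x) p.1 +
        (μ / p.1) * u p.1 p.2 ^ n * deriv (fun x => u x p.2) p.1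

set_option maxHeartbeats 1000000 in
/-- for `k ≠ -1`, the transformation
`x' = x^{k+1}, t' = t, u' = (k+1)⁻² x^{-2k} u` maps `E(-1,1)` into itself:
if `u` solves `E(-1,1)` on `(0,∞) × I`, then
`ũ(y,t) = (k+1)⁻² y^{-2k/(k+1)} u(y^{1/(k+1)}, t)` also solves `E(-1,1)` there. -/
theorem stmt0 (k : ℝ) (hk : k ≠ -1) (I : Set ℝ) (hIopen : IsOpen I)
    (hIconn : I.OrdConnected) (u : ℝ → ℝ → ℝ)
    (hu : IsSolE (-1) 1 u (Ioi 0 ×ˢ I)) :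
    IsSolE (-1) 1
      (fun y t => ((k + 1) ^ 2)⁻¹ * y ^ (-2 * k / (k + 1)) * u (y ^ (1 / (k + 1))) t)
      (Ioi 0 ×ˢ I) := by
  obtain ⟨hsm, hpos, heq⟩ := hu
  have hk1 : k + 1 ≠ 0 := fun h => hk (by linarith)
  have hD : IsOpen (Ioi (0:ℝ) ×ˢ I) := isOpen_Ioi.prod hIopen
  set a : ℝ := -2 * k / (k + 1) with ha
  set b : ℝ := 1 / (k + 1) with hb
  set c : ℝ := ((k + 1) ^ 2)⁻¹ with hc
  have hab : a = b - 1 + (b - 1) := by rw [ha, hb]; field_simp; ring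
  have hcb : c = b * b := by rw [hc, hb]; field_simp
  have hc0 : (0:ℝ) < c := inv_pos.2 (pow_two_pos_of_ne_zero hk1)
  set U : ℝ × ℝ → ℝ := fun p => u p.1 p.2 with hU
  set F : ℝ × ℝ → ℝ := fun p => fderiv ℝ U p (1, 0) with hF
  have hUc : ∀ p ∈ Ioi (0:ℝ) ×ˢ I, ContDiffAt ℝ (⊤ : ℕ∞) U p :=
    fun p hp => hsm.contDiffAt (hD.mem_nhds hp)
  have hux : ∀ x t, (x, t) ∈ Ioi (0:ℝ) ×ˢ I → HasDerivAt (fun x' => u x' t) (F (x, t)) x := by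
    intro x t hp
    have h1 : HasDerivAt (fun x' : ℝ => (x', t)) ((1:ℝ), (0:ℝ)) x :=
      (hasDerivAt_id x).prodMk (hasDerivAt_const x t)
    exact (((hUc _ hp).differentiableAt (by simp)).hasFDerivAt).comp_hasDerivAt x h1
  have hut : ∀ x t, (x, t) ∈ Ioi (0:ℝ) ×ˢ I →
      HasDerivAt (fun t' => u x t') (fderiv ℝ U (x, t) (0, 1)) t := by
    intro x t hp
    have h1 : HasDerivAt (fun t' : ℝ => (x, t')) ((0:ℝ), (1:ℝ)) t :=
      (hasDerivAt_const t x).prodMk (hasDerivAt_id t)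
    exact (((hUc _ hp).differentiableAt (by simp)).hasFDerivAt).comp_hasDerivAt t h1
  have hFc : ∀ p ∈ Ioi (0:ℝ) ×ˢ I, ContDiffAt ℝ (⊤ : ℕ∞) F p := by
    intro p hp
    exact ((hUc p hp).fderiv_right (le_of_eq (by simp))).clm_apply contDiffAt_const
  refine ⟨?_, ?_, ?_⟩
  · -- smoothness
    intro p hp
    apply ContDiffAt.contDiffWithinAt
    obtain ⟨y, t⟩ := p
    obtain ⟨hy, ht⟩ := hp
    have hy0 : (0:ℝ) < y := hy
    have hyb : (0:ℝ) < y ^ b := Real.rpow_pos_of_pos hy0 b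
    have h1 : ContDiffAt ℝ (⊤ : ℕ∞) (fun p : ℝ × ℝ => p.1 ^ a) (y, t) :=
      (Real.contDiffAt_rpow_const_of_ne hy0.ne').comp (y, t) contDiffAt_fst
    have hmap : ContDiffAt ℝ (⊤ : ℕ∞) (fun p : ℝ × ℝ => (p.1 ^ b, p.2)) (y, t) :=
      ((Real.contDiffAt_rpow_const_of_ne hy0.ne').comp (y, t) contDiffAt_fst).prodMk contDiffAt_snd
    have h2 : ContDiffAt ℝ (⊤ : ℕ∞) (fun p : ℝ × ℝ => u (p.1 ^ b) p.2) (y, t) :=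
      ContDiffAt.comp (g := U) (y, t) (hUc (y ^ b, t) (Set.mk_mem_prod hyb ht)) hmap
    exact (contDiffAt_const.mul h1).mul h2
  · -- positivity
    rintro ⟨y, t⟩ ⟨hy, ht⟩
    have hy0 : (0:ℝ) < y := hy
    exact mul_pos (mul_pos hc0 (Real.rpow_pos_of_pos hy0 a))
      (hpos _ (Set.mk_mem_prod (Real.rpow_pos_of_pos hy0 b) ht))
  · -- the equation
    rintro ⟨y, t⟩ ⟨hy, ht⟩
    have hy0 : (0:ℝ) < y := hy
    have hyb : (0:ℝ) < y ^ b := Real.rpow_pos_of_pos hy0 b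
    have hxt : (y ^ b, t) ∈ Ioi (0:ℝ) ×ˢ I := Set.mk_mem_prod hyb ht
    dsimp only
    -- smooth slice version of u⁻¹ uₓ
    set w : ℝ → ℝ := fun x' => u x' t ^ (-1 : ℝ) * F (x', t) with hwdef
    have hwd : ∀ x' ∈ Ioi (0:ℝ), DifferentiableAt ℝ w x' := by
      intro x' hx'
      have hmem : (x', t) ∈ Ioi (0:ℝ) ×ˢ I := Set.mk_mem_prod hx' ht
      have hus : ContDiffAt ℝ (⊤ : ℕ∞) (fun z : ℝ => u z t) x' :=
        (hUc _ hmem).comp x' (contDiffAt_id.prodMk contDiffAt_const)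
      have hinv : ContDiffAt ℝ (⊤ : ℕ∞) (fun z : ℝ => u z t ^ (-1:ℝ)) x' :=
        (Real.contDiffAt_rpow_const_of_ne (ne_of_gt (hpos _ hmem))).comp (g := fun x => x ^ (-1:ℝ)) x' hus
      have hFs : ContDiffAt ℝ (⊤ : ℕ∞) (fun z : ℝ => F (z, t)) x' :=
        (hFc _ hmem).comp x' (contDiffAt_id.prodMk contDiffAt_const)
      exact (hinv.mul hFs).differentiableAt (by simp)
    -- the u equation rewritten using w
    have hw_ev : ∀ x' ∈ Ioi (0:ℝ),
        (fun x'' => u x'' t ^ (-1:ℝ) * deriv (fun z => u z t) x'') =ᶠ[𝓝 x'] w := by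
      intro x' hx'
      filter_upwards [Ioi_mem_nhds hx'] with z hz
      rw [hwdef, (hux z t (Set.mk_mem_prod hz ht)).deriv]
    have hequ : fderiv ℝ U (y ^ b, t) (0, 1)
        = deriv w (y ^ b) + 1 / (y ^ b) * u (y ^ b) t ^ (-1:ℝ) * F (y ^ b, t) := by
      have h0 := heq (y ^ b, t) hxt
      dsimp only at h0
      rw [(hux (y ^ b) t hxt).deriv, (hw_ev (y ^ b) hyb).deriv_eq] at h0
      rw [← (hut (y ^ b) t hxt).deriv]
      exact h0
    -- derivative in y of ũ
    have hUy : ∀ y' ∈ Ioi (0:ℝ), HasDerivAt (fun z => c * z ^ a * u (z ^ b) t)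
        (c * (a * y' ^ (a - 1) * u (y' ^ b) t
          + y' ^ a * (F (y' ^ b, t) * (b * y' ^ (b - 1))))) y' := by
      intro y' hy'
      have hy'0 : (0:ℝ) < y' := hy'
      have h1 : HasDerivAt (fun z : ℝ => z ^ a) (a * y' ^ (a - 1)) y' :=
        Real.hasDerivAt_rpow_const (Or.inl hy'0.ne')
      have h2 : HasDerivAt (fun z : ℝ => z ^ b) (b * y' ^ (b - 1)) y' :=
        Real.hasDerivAt_rpow_const (Or.inl hy'0.ne')
      have h3 : HasDerivAt (fun z : ℝ => u (z ^ b) t) (F (y' ^ b, t) * (b * y' ^ (b - 1))) y' :=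
        (hux _ t (Set.mk_mem_prod (Real.rpow_pos_of_pos hy'0 b) ht)).comp (h₂ := fun x' => u x' t) y' h2
      have h4 := (h1.mul h3).const_mul c
      have hfun : (fun z : ℝ => c * (z ^ a * u (z ^ b) t)) = fun z => c * z ^ a * u (z ^ b) t := by
        funext z; ring
      simp only [Pi.mul_apply] at h4
      rw [hfun] at h4
      exact h4
    -- ũ⁻¹ ũ_y
    have hGt : ∀ y' ∈ Ioi (0:ℝ),
        (c * y' ^ a * u (y' ^ b) t) ^ (-1:ℝ) * deriv (fun z => c * z ^ a * u (z ^ b) t) y'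
          = a * y'⁻¹ + b * y' ^ (b - 1) * w (y' ^ b) := by
      intro y' hy'
      have hy'0 : (0:ℝ) < y' := hy'
      have hup : 0 < u (y' ^ b) t := hpos _ (Set.mk_mem_prod (Real.rpow_pos_of_pos hy'0 b) ht)
      have hpa : (0:ℝ) < y' ^ a := Real.rpow_pos_of_pos hy'0 a
      rw [(hUy y' hy').deriv]
      simp only [hwdef, Real.rpow_neg_one]
      rw [Real.rpow_sub_one hy'0.ne' a]
      field_simp
    have h2 : HasDerivAt (fun z : ℝ => z ^ b) (b * y ^ (b - 1)) y :=
      Real.hasDerivAt_rpow_const (Or.inl hy0.ne')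
    -- derivative of the G function
    have hGd : HasDerivAt (fun z => a * z⁻¹ + b * z ^ (b - 1) * w (z ^ b))
        (a * -(y ^ 2)⁻¹ + b * ((b - 1) * y ^ (b - 1 - 1) * w (y ^ b)
          + y ^ (b - 1) * (deriv w (y ^ b) * (b * y ^ (b - 1))))) y := by
      have p1 : HasDerivAt (fun z : ℝ => z⁻¹) (-(y ^ 2)⁻¹) y := hasDerivAt_inv hy0.ne'
      have p2 : HasDerivAt (fun z : ℝ => z ^ (b - 1)) ((b - 1) * y ^ (b - 1 - 1)) y :=
        Real.hasDerivAt_rpow_const (Or.inl hy0.ne')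
      have p3 : HasDerivAt (fun z : ℝ => w (z ^ b)) (deriv w (y ^ b) * (b * y ^ (b - 1))) y :=
        ((hwd _ hyb).hasDerivAt).comp (h₂ := w) y h2
      have p4 := (p2.mul p3).const_mul b
      have hfun : (fun z : ℝ => b * (z ^ (b - 1) * w (z ^ b)))
          = fun z => b * z ^ (b - 1) * w (z ^ b) := by funext z; ring
      simp only [Pi.mul_apply] at p4
      rw [hfun] at p4
      exact (p1.const_mul a).add p4
    have hGev : (fun z => (c * z ^ a * u (z ^ b) t) ^ (-1:ℝ)
          * deriv (fun z' => c * z' ^ a * u (z' ^ b) t) z)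
        =ᶠ[𝓝 y] (fun z => a * z⁻¹ + b * z ^ (b - 1) * w (z ^ b)) := by
      filter_upwards [Ioi_mem_nhds hy0] with z hz using hGt z hz
    rw [((hut (y ^ b) t hxt).const_mul (c * y ^ a)).deriv, hGev.deriv_eq, hGd.deriv,
      (hUy y hy0).deriv, hequ]
    -- final algebra
    have hBy : y ^ (b - 1) * y = y ^ b := by
      rw [Real.rpow_sub_one hy0.ne' b]; field_simp
    have hup : 0 < u (y ^ b) t := hpos _ hxt
    simp only [hwdef, Real.rpow_neg_one]
    rw [Real.rpow_sub_one hy0.ne' a, Real.rpow_sub_one hy0.ne' (b - 1), hcb, hab,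
      Real.rpow_add hy0, ← hBy]
    have hB0 : y ^ (b - 1) ≠ 0 := (Real.rpow_pos_of_pos hy0 _).ne'
    have hup' : u (y ^ (b - 1) * y) t ≠ 0 := by rw [hBy]; exact hup.ne'
    have hb0 : b ≠ 0 := by rw [hb]; exact one_div_ne_zero hk1
    field_simp
    ring
end

section
/- The map T : (0,∞) × (0,∞) → (0,∞) × (0,∞), T(x,u) = (1/x, x^4 u), is an involution (T ∘ T = id). Moreover, if u is a solution of E(-1,1) on (0,∞) × I, then the function ũ(y,t) = y^{-4} u(1/y, t) is again a solution of E(-1,1) on (0,∞) × I. (This is the case k = -2 of the transformation x' = x^{k+1}, t' = t, u' = (k+1)^{-2} x^{-2k} u, which forms a cyclic group of order 2.) -/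
open Real Set

/-- The map `T(x,u) = (1/x, x⁴ u)`, the spatial part of the case `k = -2` of the
transformation `x' = x^{k+1}, t' = t, u' = (k+1)⁻² x^{-2k} u`. -/
noncomputable def Tinv : ℝ × ℝ → ℝ × ℝ := fun p => (p.1⁻¹, p.1 ^ 4 * p.2)

lemma rpow_neg_one' (z : ℝ) : z ^ (-1:ℝ) = z⁻¹ := by
  rw [show (-1:ℝ) = ((-1:ℤ):ℝ) by norm_num, Real.rpow_intCast, zpow_neg_one]

/-- `T(x,u) = (1/x, x⁴u)` is an involution of `(0,∞) × (0,∞)`, and if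
`u` solves `E(-1,1)` on `(0,∞) × I` then so does `ũ(y,t) = y⁻⁴ u(1/y, t)`; thus the
transformation `x' = 1/x, t' = t, u' = x⁴ u` forms a cyclic group of order 2. -/
theorem stmt2 (I : Set ℝ) (hIopen : IsOpen I) (hIconn : I.OrdConnected)
    (u : ℝ → ℝ → ℝ) (hu : IsSolE (-1) 1 u (Ioi 0 ×ˢ I)) :
    (∀ p : ℝ × ℝ, 0 < p.1 → 0 < p.2 → Tinv (Tinv p) = p) ∧
    IsSolE (-1) 1 (fun y t => (y ^ 4)⁻¹ * u y⁻¹ t) (Ioi 0 ×ˢ I) := by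
  obtain ⟨husm, hupos, hupde⟩ := hu
  have hUopen : IsOpen (Ioi (0:ℝ) ×ˢ I) := isOpen_Ioi.prod hIopen
  constructor
  · rintro ⟨x, w⟩ hx _
    simp only [Tinv]
    rw [inv_inv, inv_pow, ← mul_assoc, inv_mul_cancel₀ (pow_ne_zero _ (ne_of_gt hx)), one_mul]
  -- the solution part
  refine ⟨?_, ?_, ?_⟩
  · -- smoothness
    have hmaps : MapsTo (fun p : ℝ × ℝ => (p.1⁻¹, p.2)) (Ioi 0 ×ˢ I) (Ioi 0 ×ˢ I) := by
      rintro ⟨y, t⟩ ⟨hy, ht⟩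
      exact ⟨Set.mem_Ioi.2 (inv_pos.2 hy), ht⟩
    have hinner : ContDiffOn ℝ (⊤ : ℕ∞) (fun p : ℝ × ℝ => (p.1⁻¹, p.2)) (Ioi 0 ×ˢ I) := by
      refine ContDiffOn.prodMk ?_ contDiff_snd.contDiffOn
      exact contDiff_fst.contDiffOn.inv fun p hp => ne_of_gt hp.1
    have hcomp : ContDiffOn ℝ (⊤ : ℕ∞) (fun p : ℝ × ℝ => u p.1⁻¹ p.2) (Ioi 0 ×ˢ I) :=
      husm.comp hinner hmaps
    have hfac : ContDiffOn ℝ (⊤ : ℕ∞) (fun p : ℝ × ℝ => ((p.1 ^ 4)⁻¹ : ℝ)) (Ioi 0 ×ˢ I) :=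
      ((contDiff_fst.pow 4).contDiffOn).inv fun p hp => pow_ne_zero _ (ne_of_gt hp.1)
    exact hfac.mul hcomp
  · -- positivity
    rintro ⟨y, t⟩ ⟨hy, ht⟩
    exact mul_pos (inv_pos.2 (pow_pos hy 4)) (hupos (y⁻¹, t) ⟨Set.mem_Ioi.2 (inv_pos.2 hy), ht⟩)
  · -- the PDE
    rintro ⟨y, t⟩ ⟨hy, ht⟩
    simp only at hy ht ⊢
    have hy0 : (y:ℝ) ≠ 0 := ne_of_gt hy
    set x : ℝ := y⁻¹ with hxdef
    have hx : x ∈ Ioi (0:ℝ) := Set.mem_Ioi.2 (inv_pos.2 hy)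
    have hx0 : x ≠ 0 := ne_of_gt hx
    have hxy : x⁻¹ = y := by rw [hxdef, inv_inv]
    -- slice in x
    set f : ℝ → ℝ := fun x' => u x' t with hfdef
    have hfsm : ContDiffOn ℝ (⊤ : ℕ∞) f (Ioi 0) := by
      have : ContDiffOn ℝ (⊤ : ℕ∞) (fun x' : ℝ => ((x', t) : ℝ × ℝ)) (Ioi 0) :=
        (contDiff_id.prodMk contDiff_const).contDiffOn
      exact husm.comp this (fun x' hx' => ⟨hx', ht⟩)
    have hf'sm : ContDiffOn ℝ (⊤ : ℕ∞) (deriv f) (Ioi 0) :=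
      hfsm.deriv_of_isOpen isOpen_Ioi (by simp)
    have hfd : ∀ s ∈ Ioi (0:ℝ), HasDerivAt f (deriv f s) s := fun s hs =>
      ((hfsm.differentiableOn (by simp)).differentiableAt
        (isOpen_Ioi.mem_nhds hs)).hasDerivAt
    have hf'd : ∀ s ∈ Ioi (0:ℝ), HasDerivAt (deriv f) (deriv (deriv f) s) s := fun s hs =>
      ((hf'sm.differentiableOn (by simp)).differentiableAt
        (isOpen_Ioi.mem_nhds hs)).hasDerivAt
    have hfpos : ∀ s ∈ Ioi (0:ℝ), 0 < f s := fun s hs => hupos (s, t) ⟨hs, ht⟩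
    -- G = u⁻¹ u_x
    set G : ℝ → ℝ := fun s => (f s)⁻¹ * deriv f s with hGdef
    have hGd : ∀ s ∈ Ioi (0:ℝ), HasDerivAt G (deriv G s) s := by
      intro s hs
      exact (((hfd s hs).inv (ne_of_gt (hfpos s hs))).mul (hf'd s hs)).deriv ▸
        (((hfd s hs).inv (ne_of_gt (hfpos s hs))).mul (hf'd s hs))
    -- rewrite the PDE for u in terms of G
    have hGeq : (fun x' => u x' t ^ (-1:ℝ) * deriv (fun x'' => u x'' t) x') = G := by
      funext x'
      rw [hGdef, rpow_neg_one']
    have hpde := hupde (x, t) ⟨hx, ht⟩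
    simp only at hpde
    rw [hGeq] at hpde
    -- hpde : deriv (fun τ => u x τ) t = deriv G x + 1/x * (u x t)^(-1) * deriv f x
    -- slice of the transformed function in s
    set vf : ℝ → ℝ := fun s => (s ^ 4)⁻¹ * u s⁻¹ t with hvfdef
    have hvfeq : vf = fun s => (s ^ 4)⁻¹ * f s⁻¹ := rfl
    -- derivative of vf at points of Ioi 0
    have hvfd : ∀ s ∈ Ioi (0:ℝ), HasDerivAt vf
        (-(4 * s ^ 3) / (s ^ 4) ^ 2 * f s⁻¹ + (s ^ 4)⁻¹ * (deriv f s⁻¹ * -(s ^ 2)⁻¹)) s := by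
      intro s hs
      have hs0 : s ≠ 0 := ne_of_gt hs
      have h1 : HasDerivAt (fun s' : ℝ => (s' ^ 4)⁻¹) (-(4 * s ^ 3) / (s ^ 4) ^ 2) s := by
        have := (hasDerivAt_pow 4 s).inv (pow_ne_zero 4 hs0)
        norm_num at this ⊢
        exact this
      have h2 : HasDerivAt (fun s' : ℝ => f s'⁻¹) (deriv f s⁻¹ * -(s ^ 2)⁻¹) s :=
        (hfd s⁻¹ (Set.mem_Ioi.2 (inv_pos.2 hs))).comp s (hasDerivAt_inv hs0)
      exact h1.mul h2
    -- the inner function of the transformed PDE eventually equals a closed form H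
    set H : ℝ → ℝ := fun s => -4 * s⁻¹ - (s ^ 2)⁻¹ * G s⁻¹ with hHdef
    have hFH : (fun s => vf s ^ (-1:ℝ) * deriv vf s) =ᶠ[nhds y] H := by
      filter_upwards [isOpen_Ioi.mem_nhds hy] with s hs
      have hs0 : s ≠ 0 := ne_of_gt hs
      have hfs0 : f s⁻¹ ≠ 0 := ne_of_gt (hfpos s⁻¹ (Set.mem_Ioi.2 (inv_pos.2 hs)))
      rw [rpow_neg_one', (hvfd s hs).deriv, hHdef, hGdef, hvfeq]
      simp only
      generalize f s⁻¹ = a at hfs0 ⊢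
      generalize deriv f s⁻¹ = d
      field_simp
      ring
    -- derivative of H at y
    have hGx : HasDerivAt (fun s : ℝ => G s⁻¹) (deriv G x * -(y ^ 2)⁻¹) y := by
      have := (hGd x hx).comp y (hasDerivAt_inv hy0)
      rwa [hxdef] at this
    have hHd : HasDerivAt H
        (-4 * -(y ^ 2)⁻¹ - (-(2 * y) / (y ^ 2) ^ 2 * G x + (y ^ 2)⁻¹ * (deriv G x * -(y ^ 2)⁻¹))) y := by
      have h1 : HasDerivAt (fun s : ℝ => -4 * s⁻¹) (-4 * -(y ^ 2)⁻¹) y :=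
        (hasDerivAt_inv hy0).const_mul (-4)
      have h2 : HasDerivAt (fun s' : ℝ => (s' ^ 2)⁻¹) (-(2 * y) / (y ^ 2) ^ 2) y := by
        have := (hasDerivAt_pow 2 y).inv (pow_ne_zero 2 hy0)
        norm_num at this ⊢
        exact this
      have h3 := h2.mul hGx
      have := h1.sub h3
      exact this
    -- time derivative of transformed function
    have hutdiff : DifferentiableAt ℝ (fun τ => u x τ) t := by
      have h2d : DifferentiableAt ℝ (fun p : ℝ × ℝ => u p.1 p.2) (x, t) :=
        (husm.differentiableOn (by simp)).differentiableAt (hUopen.mem_nhds ⟨hx, ht⟩)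
      exact h2d.comp t ((differentiableAt_const x).prodMk differentiableAt_id)
    have hLHS : deriv (fun τ => (y ^ 4)⁻¹ * u y⁻¹ τ) t
        = (y ^ 4)⁻¹ * deriv (fun τ => u x τ) t := by
      rw [hxdef]
      exact deriv_const_mul _ (by rw [← hxdef]; exact hutdiff)
    -- assemble
    rw [hLHS, hpde]
    rw [hFH.deriv_eq, hHd.deriv]
    rw [show deriv (fun s => (s ^ 4)⁻¹ * u s⁻¹ t) y = deriv vf y from rfl, (hvfd y hy).deriv]
    rw [rpow_neg_one', rpow_neg_one']
    have hfx0 : f x ≠ 0 := ne_of_gt (hfpos x hx)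
    have e1 : u x t = f x := rfl
    have e2 : deriv (fun x' => u x' t) x = deriv f x := rfl
    rw [e1, e2]
    simp only [hGdef, hxdef]
    have hfy0 : f y⁻¹ ≠ 0 := ne_of_gt (hfpos _ (Set.mem_Ioi.2 (inv_pos.2 hy)))
    generalize deriv (fun s => (f s)⁻¹ * deriv f s) y⁻¹ = c
    generalize deriv f y⁻¹ = d
    generalize f y⁻¹ = a at hfy0 ⊢
    field_simp
    ring
end

section
/- Let k ≠ 0 be a real number and let u be a solution of E(-1,1) on (0,∞) × I. Then the function U defined for y ∈ ℝ, t ∈ I by U(y,t) = k^{-2} e^{2y/k} u(e^{y/k}, t) is a positive smooth solution of the nonlinear diffusion equation U_t = ∂_y(U_y/U) on ℝ × I. (This is the finite form of the transformation x' = k ln x, t' = t, u' = k^{-2} x^2 u, which maps the diffusion equation u'_{t'} = (u'_{x'}/u')_{x'} into E(-1,1).) -/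
open Real Set

/-- `U` is a smooth positive solution of the nonlinear diffusion equation
`U_t = ∂ₓ(Uₓ/U)` on the set `D`. -/
def IsSolDiff (U : ℝ → ℝ → ℝ) (D : Set (ℝ × ℝ)) : Prop :=
  ContDiffOn ℝ (⊤ : ℕ∞) (fun p : ℝ × ℝ => U p.1 p.2) D ∧
  (∀ p ∈ D, 0 < U p.1 p.2) ∧
  ∀ p ∈ D,
    deriv (fun t => U p.1 t) p.2 =
      deriv (fun x => deriv (fun x' => U x' p.2) x / U x p.2) p.1

/-- for `k ≠ 0`, if `u` solves `E(-1,1)` on `(0,∞) × I`, then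
`U(y,t) = k⁻² e^{2y/k} u(e^{y/k}, t)` is a smooth positive solution of the
nonlinear diffusion equation `U_t = ∂_y(U_y/U)` on `ℝ × I` (the finite form of
`x' = k ln x, t' = t, u' = k⁻² x² u`). -/
theorem stmt3 (k : ℝ) (hk : k ≠ 0) (I : Set ℝ) (hIopen : IsOpen I)
    (hIconn : I.OrdConnected) (u : ℝ → ℝ → ℝ)
    (hu : IsSolE (-1) 1 u (Ioi 0 ×ˢ I)) :
    IsSolDiff (fun y t => (k ^ 2)⁻¹ * exp (2 * y / k) * u (exp (y / k)) t)
      (univ ×ˢ I) := by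
  obtain ⟨hF, hpos, heq⟩ := hu
  set D : Set (ℝ × ℝ) := Ioi 0 ×ˢ I with hDdef
  have hDopen : IsOpen D := isOpen_Ioi.prod hIopen
  set F : ℝ × ℝ → ℝ := fun p => u p.1 p.2 with hFdef
  set V : ℝ × ℝ → ℝ := fun p => fderiv ℝ F p (1, 0) with hVdef
  have hVC : ContDiffOn ℝ (⊤ : ℕ∞) V D :=
    (hF.fderiv_of_isOpen hDopen (by simp)).clm_apply contDiffOn_const
  have hFd : ∀ p ∈ D, HasFDerivAt F (fderiv ℝ F p) p := fun p hp =>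
    (((hF.contDiffAt (hDopen.mem_nhds hp)).differentiableAt (by simp)).hasFDerivAt)
  have hUx : ∀ x t, (x, t) ∈ D → HasDerivAt (fun x' => u x' t) (V (x, t)) x := by
    intro x t hp
    have h1 : HasDerivAt (fun x' : ℝ => ((x' : ℝ), t)) ((1 : ℝ), (0 : ℝ)) x :=
      (hasDerivAt_id x).prodMk (hasDerivAt_const x t)
    exact (hFd (x, t) hp).comp_hasDerivAt x h1
  have hUt : ∀ x t, (x, t) ∈ D →
      HasDerivAt (fun t' => u x t') (fderiv ℝ F (x, t) (0, 1)) t := by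
    intro x t hp
    have h1 : HasDerivAt (fun t' : ℝ => (x, t')) ((0 : ℝ), (1 : ℝ)) t :=
      (hasDerivAt_const t x).prodMk (hasDerivAt_id t)
    exact (hFd (x, t) hp).comp_hasDerivAt t h1
  have hφ : ContDiff ℝ (⊤ : ℕ∞) (fun p : ℝ × ℝ => (exp (p.1 / k), p.2)) :=
    (Real.contDiff_exp.comp (contDiff_fst.div_const k)).prodMk contDiff_snd
  have hmaps : MapsTo (fun p : ℝ × ℝ => (exp (p.1 / k), p.2)) (univ ×ˢ I) D := by
    rintro ⟨y, t⟩ hp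
    exact ⟨exp_pos _, hp.2⟩
  refine ⟨?_, ?_, ?_⟩
  · have h1 : ContDiffOn ℝ (⊤ : ℕ∞) (fun p : ℝ × ℝ => F (exp (p.1 / k), p.2)) (univ ×ˢ I) :=
      hF.comp hφ.contDiffOn hmaps
    have h2 : ContDiff ℝ (⊤ : ℕ∞) (fun p : ℝ × ℝ => (k ^ 2)⁻¹ * exp (2 * p.1 / k)) :=
      contDiff_const.mul (Real.contDiff_exp.comp ((contDiff_const.mul contDiff_fst).div_const k))
    exact h2.contDiffOn.mul h1
  · rintro ⟨y, t⟩ hp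
    have := hpos (exp (y / k), t) ⟨exp_pos _, hp.2⟩
    have hk2 : (0:ℝ) < k ^ 2 := by positivity
    positivity
  · rintro ⟨y, t⟩ hp
    have htI : t ∈ I := hp.2
    set x0 : ℝ := exp (y / k) with hx0def
    have hx0 : 0 < x0 := exp_pos _
    have hpD : ((x0 : ℝ), t) ∈ D := ⟨hx0, htI⟩
    have hu0 : 0 < u x0 t := hpos _ hpD
    set h : ℝ → ℝ := fun x => (u x t)⁻¹ * V (x, t) with hhdef
    have hhdiff : ∀ x : ℝ, (x, t) ∈ D → DifferentiableAt ℝ h x := by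
      intro x hxD
      have hVx : DifferentiableAt ℝ (fun x' => V (x', t)) x := by
        have hV1 : ContDiffAt ℝ (⊤ : ℕ∞) V (x, t) := hVC.contDiffAt (hDopen.mem_nhds hxD)
        exact (hV1.differentiableAt (by simp)).comp x
          (differentiableAt_id.prodMk (differentiableAt_const t) :
            DifferentiableAt ℝ (fun x' : ℝ => (x', t)) x)
      have hu' : DifferentiableAt ℝ (fun x' => u x' t) x := (hUx x t hxD).differentiableAt
      exact (hu'.inv (ne_of_gt (hpos _ hxD))).mul hVx
    -- rewrite the PDE hypothesis
    have hkey := heq (x0, t) hpD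
    have hEq1 : deriv (fun x => u x t ^ (-1 : ℝ) * deriv (fun x' => u x' t) x) x0
        = deriv h x0 := by
      apply Filter.EventuallyEq.deriv_eq
      filter_upwards [Ioi_mem_nhds hx0] with x hx
      have hxD : ((x : ℝ), t) ∈ D := ⟨hx, htI⟩
      rw [(hUx x t hxD).deriv, Real.rpow_neg_one]
    simp only at hkey
    rw [(hUt x0 t hpD).deriv, (hUx x0 t hpD).deriv, hEq1, Real.rpow_neg_one] at hkey
    -- LHS of the goal
    have hLHS : deriv (fun t' => (k ^ 2)⁻¹ * exp (2 * y / k) * u x0 t') t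
        = (k ^ 2)⁻¹ * exp (2 * y / k) * fderiv ℝ F (x0, t) (0, 1) :=
      ((hUt x0 t hpD).const_mul ((k ^ 2)⁻¹ * exp (2 * y / k))).deriv
    -- spatial derivative of U at an arbitrary point
    have hUyd : ∀ y' : ℝ,
        HasDerivAt (fun y'' => (k ^ 2)⁻¹ * exp (2 * y'' / k) * u (exp (y'' / k)) t)
          ((k ^ 2)⁻¹ * (exp (2 * y' / k) * (2 / k) * u (exp (y' / k)) t
            + exp (2 * y' / k) * (V (exp (y' / k), t) * (exp (y' / k) / k)))) y' := by
      intro y'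
      have hxD : (exp (y' / k), t) ∈ D := ⟨exp_pos _, htI⟩
      have ha : HasDerivAt (fun y'' : ℝ => exp (2 * y'' / k)) (exp (2 * y' / k) * (2 / k)) y' := by
        have h0 : HasDerivAt (fun y'' : ℝ => 2 * y'' / k) (2 / k) y' := by
          simpa using ((hasDerivAt_id y').const_mul 2).div_const k
        exact (Real.hasDerivAt_exp _).comp y' h0
      have hb : HasDerivAt (fun y'' => u (exp (y'' / k)) t)
          (V (exp (y' / k), t) * (exp (y' / k) / k)) y' := by
        have he : HasDerivAt (fun y'' : ℝ => exp (y'' / k)) (exp (y' / k) / k) y' := by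
          have h0 : HasDerivAt (fun y'' : ℝ => y'' / k) (1 / k) y' := by
            simpa using (hasDerivAt_id y').div_const k
          simpa [mul_one_div, div_eq_mul_inv, Function.comp_def] using (Real.hasDerivAt_exp _).comp y' h0
        simpa [Function.comp_def] using (hUx _ t hxD).comp y' he
      simpa [mul_assoc] using (ha.mul hb).const_mul ((k ^ 2)⁻¹)
    -- rewrite the inner quotient function
    have hinner : (fun x => deriv (fun x' => (k ^ 2)⁻¹ * exp (2 * x' / k) * u (exp (x' / k)) t) x
          / ((k ^ 2)⁻¹ * exp (2 * x / k) * u (exp (x / k)) t))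
        = fun y' => 2 / k + (1 / k) * (exp (y' / k) * h (exp (y' / k))) := by
      funext y'
      have hxD : (exp (y' / k), t) ∈ D := ⟨exp_pos _, htI⟩
      have hu' : 0 < u (exp (y' / k)) t := hpos _ hxD
      rw [(hUyd y').deriv]
      simp only [hhdef]
      have hexp : exp (2 * y' / k) ≠ 0 := (exp_pos _).ne'
      field_simp
    -- derivative of the rewritten inner function
    have he0 : HasDerivAt (fun y' : ℝ => exp (y' / k)) (x0 / k) y := by
      have h0 : HasDerivAt (fun y' : ℝ => y' / k) (1 / k) y := by
        simpa using (hasDerivAt_id y).div_const k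
      simpa [mul_one_div, div_eq_mul_inv, Function.comp_def, hx0def] using (Real.hasDerivAt_exp _).comp y h0
    have hcomp : HasDerivAt (fun y' : ℝ => h (exp (y' / k))) (deriv h x0 * (x0 / k)) y := by
      simpa [Function.comp_def] using ((hhdiff x0 hpD).hasDerivAt).comp y he0
    have hgd : HasDerivAt (fun y' : ℝ => 2 / k + (1 / k) * (exp (y' / k) * h (exp (y' / k))))
        ((1 / k) * ((x0 / k) * h x0 + x0 * (deriv h x0 * (x0 / k)))) y := by
      exact ((he0.mul hcomp).const_mul ((1:ℝ) / k)).const_add (2 / k)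
    simp only
    rw [hinner, hLHS, hgd.deriv, hkey]
    have hexp2 : exp (2 * y / k) = x0 * x0 := by
      rw [hx0def, ← Real.exp_add]
      ring_nf
    rw [hexp2]
    simp only [hhdef]
    field_simp
    ring
end

section
/- Let k ≠ 0 be a real number and let u be a solution of E(-1,1) on (0,∞) × (0,∞). Then the function U defined for y > 0, s ∈ ℝ by U(y,s) = k^{-2} x^{2(1-k)} u(x, e^s), where x = (y e^{s/2})^{1/k}, is a smooth positive solution of the equation U_s = ∂_y(U_y/U) + (1/(y U) + y/2) U_y on (0,∞) × ℝ. (This is the finite form of the transformation x' = x^k/√t, t' = ln t, u' = k^{-2} x^{2(1-k)} u.) -/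
open Real Set

private lemma aux_comp2 {u : ℝ → ℝ → ℝ}
    (hs : ContDiffOn ℝ (⊤ : ℕ∞) (fun p : ℝ × ℝ => u p.1 p.2) (Ioi 0 ×ˢ Ioi 0))
    {x t : ℝ} (hx : 0 < x) (ht : 0 < t) {p q : ℝ → ℝ} {r p' q' : ℝ}
    (hp : HasDerivAt p p' r) (hq : HasDerivAt q q' r) (hpr : p r = x) (hqr : q r = t) :
    HasDerivAt (fun z => u (p z) (q z))
      (deriv (fun x' => u x' t) x * p' + deriv (fun t' => u x t') t * q') r := by
  have hD : IsOpen ((Ioi 0 ×ˢ Ioi 0) : Set (ℝ × ℝ)) := isOpen_Ioi.prod isOpen_Ioi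
  have hmem : ((x, t) : ℝ × ℝ) ∈ (Ioi 0 ×ˢ Ioi 0 : Set (ℝ × ℝ)) := ⟨hx, ht⟩
  have hca : ContDiffAt ℝ 1 (fun p : ℝ × ℝ => u p.1 p.2) (x, t) :=
    (hs.contDiffAt (hD.mem_nhds hmem)).of_le (by simp)
  have hdf : DifferentiableAt ℝ (fun p : ℝ × ℝ => u p.1 p.2) (x, t) :=
    hca.differentiableAt one_ne_zero
  have hF : HasFDerivAt (fun p : ℝ × ℝ => u p.1 p.2)
      (fderiv ℝ (fun p : ℝ × ℝ => u p.1 p.2) (x, t)) (x, t) := hdf.hasFDerivAt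
  set L := fderiv ℝ (fun p : ℝ × ℝ => u p.1 p.2) (x, t) with hL
  have key : ∀ {g h : ℝ → ℝ} {r0 g' h' : ℝ}, HasDerivAt g g' r0 → HasDerivAt h h' r0 →
      g r0 = x → h r0 = t → HasDerivAt (fun z => u (g z) (h z)) (L (g', h')) r0 := by
    intro g h r0 g' h' hg hh hgx hht
    have hcurve : HasDerivAt (fun z => ((g z, h z) : ℝ × ℝ)) ((g', h')) r0 := hg.prodMk hh
    have hF' : HasFDerivAt (fun p : ℝ × ℝ => u p.1 p.2) L ((g r0, h r0)) := by
      rw [hgx, hht]; exact hF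
    exact hF'.comp_hasDerivAt r0 hcurve
  have hux : deriv (fun x' => u x' t) x = L (1, 0) := by
    have h1 : HasDerivAt (fun x' => u x' t) (L (1, 0)) x :=
      key (hasDerivAt_id x) (hasDerivAt_const x t) rfl rfl
    exact h1.deriv
  have hut : deriv (fun t' => u x t') t = L (0, 1) := by
    have h1 : HasDerivAt (fun t' => u x t') (L (0, 1)) t :=
      key (hasDerivAt_const t x) (hasDerivAt_id t) rfl rfl
    exact h1.deriv
  have hmain := key hp hq hpr hqr
  have hsplit : ((p', q') : ℝ × ℝ) = p' • ((1 : ℝ), (0 : ℝ)) + q' • ((0 : ℝ), (1 : ℝ)) := by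
    simp [Prod.ext_iff]
  have hLval : L (p', q') = deriv (fun x' => u x' t) x * p' + deriv (fun t' => u x t') t * q' := by
    rw [hsplit, map_add, map_smul, map_smul, hux, hut]
    simp [smul_eq_mul]; ring
  exact hLval ▸ hmain

private lemma aux_sect {u : ℝ → ℝ → ℝ}
    (hs : ContDiffOn ℝ (⊤ : ℕ∞) (fun p : ℝ × ℝ => u p.1 p.2) (Ioi 0 ×ˢ Ioi 0))
    {x t : ℝ} (hx : 0 < x) (ht : 0 < t) :
    HasDerivAt (fun x' => u x' t) (deriv (fun x' => u x' t) x) x := by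
  have := aux_comp2 hs hx ht (hasDerivAt_id x) (hasDerivAt_const x t) rfl rfl
  simpa using this

private lemma aux_uxx {u : ℝ → ℝ → ℝ}
    (hs : ContDiffOn ℝ (⊤ : ℕ∞) (fun p : ℝ × ℝ => u p.1 p.2) (Ioi 0 ×ˢ Ioi 0))
    {x t : ℝ} (hx : 0 < x) (ht : 0 < t) :
    HasDerivAt (fun x' => deriv (fun x'' => u x'' t) x')
      (deriv (fun x' => deriv (fun x'' => u x'' t) x') x) x := by
  have hsec : ContDiffOn ℝ (⊤ : ℕ∞) (fun x' : ℝ => u x' t) (Ioi 0) := by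
    have heq : (fun x' : ℝ => u x' t) =
        (fun p : ℝ × ℝ => u p.1 p.2) ∘ (fun x' : ℝ => (x', t)) := rfl
    rw [heq]
    exact hs.comp ((contDiff_id.prodMk contDiff_const).contDiffOn)
      (fun z hz => ⟨hz, ht⟩)
  have hder : ContDiffOn ℝ 1 (deriv fun x' : ℝ => u x' t) (Ioi 0) :=
    hsec.deriv_of_isOpen isOpen_Ioi (by exact WithTop.coe_le_coe.mpr le_top)
  have hdiff : DifferentiableAt ℝ (fun x' : ℝ => deriv (fun x'' => u x'' t) x') x :=
    (hder.differentiableOn one_ne_zero).differentiableAt (isOpen_Ioi.mem_nhds hx)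
  exact hdiff.hasDerivAt

private lemma aux_pos (k : ℝ) (u : ℝ → ℝ → ℝ)
    (hu : IsSolE (-1) 1 u (Ioi 0 ×ˢ Ioi 0))
    (U : ℝ → ℝ → ℝ)
    (hU : ∀ y s : ℝ, U y s =
      (k ^ 2)⁻¹ * ((y * exp (s / 2)) ^ (1 / k)) ^ (2 * (1 - k)) *
        u ((y * exp (s / 2)) ^ (1 / k)) (exp s))
    (hk : k ≠ 0) {y s : ℝ} (hy : 0 < y) : 0 < U y s := by
  rw [hU]
  have hw : (0:ℝ) < y * exp (s / 2) := by positivity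
  have hx : (0:ℝ) < (y * exp (s / 2)) ^ (1 / k) := rpow_pos_of_pos hw _
  have hup : 0 < u ((y * exp (s / 2)) ^ (1 / k)) (exp s) :=
    hu.2.1 ((y * exp (s / 2)) ^ (1 / k), exp s) ⟨hx, exp_pos s⟩
  have hxr : (0:ℝ) < ((y * exp (s / 2)) ^ (1 / k)) ^ (2 * (1 - k)) := rpow_pos_of_pos hx _
  have hk2 : (0:ℝ) < (k ^ 2)⁻¹ := by positivity
  exact mul_pos (mul_pos hk2 hxr) hup

set_option maxHeartbeats 2000000 in
private lemma aux_pde (k : ℝ) (hk : k ≠ 0) (u : ℝ → ℝ → ℝ)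
    (hu : IsSolE (-1) 1 u (Ioi 0 ×ˢ Ioi 0))
    (U : ℝ → ℝ → ℝ)
    (hU : ∀ y s : ℝ, U y s =
      (k ^ 2)⁻¹ * ((y * exp (s / 2)) ^ (1 / k)) ^ (2 * (1 - k)) *
        u ((y * exp (s / 2)) ^ (1 / k)) (exp s))
    {y s : ℝ} (hy : 0 < y) :
    deriv (fun s' => U y s') s =
      deriv (fun z => deriv (fun y' => U y' s) z / U z s) y +
        (1 / (y * U y s) + y / 2) * deriv (fun z => U z s) y := by
  have hw0 : (0:ℝ) < y * exp (s / 2) := by positivity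
  have hx0 : (0:ℝ) < (y * exp (s / 2)) ^ (1 / k) := rpow_pos_of_pos hw0 _
  have ht0 : (0:ℝ) < exp s := exp_pos s
  have hu0 : 0 < u ((y * exp (s / 2)) ^ (1 / k)) (exp s) :=
    hu.2.1 ((y * exp (s / 2)) ^ (1 / k), exp s) ⟨hx0, ht0⟩
  -- derivative of z ↦ (z e^{s/2})^{1/k}
  have hXz : ∀ z : ℝ, 0 < z → HasDerivAt (fun z' : ℝ => (z' * exp (s / 2)) ^ (1 / k))
      (1 * exp (s / 2) * (1 / k) * (z * exp (s / 2)) ^ (1 / k - 1)) z := by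
    intro z hz
    have hb : HasDerivAt (fun z' : ℝ => z' * exp (s / 2)) (1 * exp (s / 2)) z :=
      (hasDerivAt_id z).mul_const _
    exact hb.rpow_const (Or.inl (by positivity))
  -- h1 : y-derivative of U at any z > 0
  have h1 : ∀ z : ℝ, 0 < z → HasDerivAt (fun z' => U z' s)
      ((k ^ 2)⁻¹ * (exp (s / 2) / k * (z * exp (s / 2)) ^ (1 / k - 1)) *
        (2 * (1 - k) * ((z * exp (s / 2)) ^ (1 / k)) ^ (2 * (1 - k) - 1) *
            u ((z * exp (s / 2)) ^ (1 / k)) (exp s) +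
          ((z * exp (s / 2)) ^ (1 / k)) ^ (2 * (1 - k)) *
            deriv (fun x' => u x' (exp s)) ((z * exp (s / 2)) ^ (1 / k)))) z := by
    intro z hz
    have hwz : (0:ℝ) < z * exp (s / 2) := by positivity
    have hxz : (0:ℝ) < (z * exp (s / 2)) ^ (1 / k) := rpow_pos_of_pos hwz _
    have hX := hXz z hz
    have hpow := hX.rpow_const (p := 2 * (1 - k)) (Or.inl hxz.ne')
    have hsect := aux_sect hu.1 hxz ht0
    have hucomp : HasDerivAt (fun z' : ℝ => u ((z' * exp (s / 2)) ^ (1 / k)) (exp s))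
        (deriv (fun x' => u x' (exp s)) ((z * exp (s / 2)) ^ (1 / k)) *
          (1 * exp (s / 2) * (1 / k) * (z * exp (s / 2)) ^ (1 / k - 1))) z :=
      by have := hsect.comp z hX; exact this
    have hfun : (fun z' => U z' s) = fun z' =>
        (k ^ 2)⁻¹ * ((z' * exp (s / 2)) ^ (1 / k)) ^ (2 * (1 - k)) *
          u ((z' * exp (s / 2)) ^ (1 / k)) (exp s) := funext fun z' => hU z' s
    rw [hfun]
    have hcomb := (hpow.const_mul ((k ^ 2)⁻¹)).mul hucomp
    refine HasDerivAt.congr_deriv hcomb ?_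
    ring
  -- quotient U_y / U : derivative at y
  have hb : HasDerivAt (fun z' : ℝ => z' * exp (s / 2)) (1 * exp (s / 2)) y :=
    (hasDerivAt_id y).mul_const _
  have hq2d : HasDerivAt (fun z : ℝ => (z * exp (s / 2)) ^ (1 / k - 1))
      (1 * exp (s / 2) * (1 / k - 1) * (y * exp (s / 2)) ^ (1 / k - 1 - 1)) y :=
    hb.rpow_const (Or.inl hw0.ne')
  have hA1 := (hq2d.const_mul (exp (s / 2) / k)).const_mul ((k ^ 2)⁻¹)
  have hX := hXz y hy
  have hucompy : HasDerivAt (fun z' : ℝ => u ((z' * exp (s / 2)) ^ (1 / k)) (exp s))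
      (deriv (fun x' => u x' (exp s)) ((y * exp (s / 2)) ^ (1 / k)) *
        (1 * exp (s / 2) * (1 / k) * (y * exp (s / 2)) ^ (1 / k - 1))) y :=
    by have := (aux_sect hu.1 hx0 ht0).comp y hX; exact this
  have hd2compy : HasDerivAt
      (fun z' : ℝ => deriv (fun x'' => u x'' (exp s)) ((z' * exp (s / 2)) ^ (1 / k)))
      (deriv (fun x' => deriv (fun x'' => u x'' (exp s)) x') ((y * exp (s / 2)) ^ (1 / k)) *
        (1 * exp (s / 2) * (1 / k) * (y * exp (s / 2)) ^ (1 / k - 1))) y :=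
    by have := (aux_uxx hu.1 hx0 ht0).comp y hX; exact this
  have ht1 := ((hX.rpow_const (p := 2 * (1 - k) - 1) (Or.inl hx0.ne')).const_mul
      (2 * (1 - k))).mul hucompy
  have ht2 := (hX.rpow_const (p := 2 * (1 - k)) (Or.inl hx0.ne')).mul hd2compy
  have hBig := ht1.add ht2
  have hNum := hA1.mul hBig
  have hUpos : 0 < U y s := aux_pos k u hu U hU hk hy
  have hdiv := hNum.div (h1 y hy) hUpos.ne'
  simp only [Pi.mul_apply, Pi.add_apply] at hdiv
  have hev : (fun z => deriv (fun y' => U y' s) z / U z s) =ᶠ[nhds y]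
      (fun z => ((k ^ 2)⁻¹ * (exp (s / 2) / k * (z * exp (s / 2)) ^ (1 / k - 1)) *
        (2 * (1 - k) * ((z * exp (s / 2)) ^ (1 / k)) ^ (2 * (1 - k) - 1) *
            u ((z * exp (s / 2)) ^ (1 / k)) (exp s) +
          ((z * exp (s / 2)) ^ (1 / k)) ^ (2 * (1 - k)) *
            deriv (fun x' => u x' (exp s)) ((z * exp (s / 2)) ^ (1 / k)))) / U z s) := by
    filter_upwards [isOpen_Ioi.mem_nhds hy] with z hz
    rw [(h1 z hz).deriv]
  have hG := hdiv.congr_of_eventuallyEq hev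
  -- s-derivative of U
  have hhalf : HasDerivAt (fun s' : ℝ => s' / 2) (1 / 2) s := (hasDerivAt_id s).div_const 2
  have hexp2 : HasDerivAt (fun s' : ℝ => exp (s' / 2)) (exp (s / 2) * (1 / 2)) s :=
    by have := (Real.hasDerivAt_exp (s / 2)).comp s hhalf; exact this
  have hwS : HasDerivAt (fun s' : ℝ => y * exp (s' / 2)) (y * (exp (s / 2) * (1 / 2))) s :=
    hexp2.const_mul y
  have hXs : HasDerivAt (fun s' : ℝ => (y * exp (s' / 2)) ^ (1 / k))
      (y * (exp (s / 2) * (1 / 2)) * (1 / k) * (y * exp (s / 2)) ^ (1 / k - 1)) s :=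
    hwS.rpow_const (Or.inl hw0.ne')
  have hPow := hXs.rpow_const (p := 2 * (1 - k)) (Or.inl hx0.ne')
  have hucomp2 := aux_comp2 hu.1 hx0 ht0 hXs (Real.hasDerivAt_exp s) rfl rfl
  have hSder : HasDerivAt (fun s' => U y s')
      ((k ^ 2)⁻¹ * (y * exp (s / 2) / 2 * (1 / k) * (y * exp (s / 2)) ^ (1 / k - 1)) *
        (2 * (1 - k) * ((y * exp (s / 2)) ^ (1 / k)) ^ (2 * (1 - k) - 1) *
            u ((y * exp (s / 2)) ^ (1 / k)) (exp s) +
          ((y * exp (s / 2)) ^ (1 / k)) ^ (2 * (1 - k)) *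
            deriv (fun x' => u x' (exp s)) ((y * exp (s / 2)) ^ (1 / k))) +
        (k ^ 2)⁻¹ * ((y * exp (s / 2)) ^ (1 / k)) ^ (2 * (1 - k)) *
          (deriv (fun t' => u ((y * exp (s / 2)) ^ (1 / k)) t') (exp s) * exp s)) s := by
    have hfun2 : (fun s' => U y s') = fun s' =>
        (k ^ 2)⁻¹ * ((y * exp (s' / 2)) ^ (1 / k)) ^ (2 * (1 - k)) *
          u ((y * exp (s' / 2)) ^ (1 / k)) (exp s') := funext fun s' => hU y s'
    rw [hfun2]
    have hcomb := (hPow.const_mul ((k ^ 2)⁻¹)).mul hucomp2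
    refine HasDerivAt.congr_deriv hcomb ?_
    ring
  -- the PDE satisfied by u at (x, t)
  have hPDE : deriv (fun t' => u ((y * exp (s / 2)) ^ (1 / k)) t') (exp s) =
      deriv (fun x' => u x' (exp s) ^ (-1 : ℝ) *
        deriv (fun x'' => u x'' (exp s)) x') ((y * exp (s / 2)) ^ (1 / k)) +
      1 / ((y * exp (s / 2)) ^ (1 / k)) * u ((y * exp (s / 2)) ^ (1 / k)) (exp s) ^ (-1 : ℝ) *
        deriv (fun x' => u x' (exp s)) ((y * exp (s / 2)) ^ (1 / k)) :=
    hu.2.2 ((y * exp (s / 2)) ^ (1 / k), exp s) ⟨hx0, ht0⟩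
  have hmid : HasDerivAt (fun x' : ℝ => u x' (exp s) ^ (-1 : ℝ) *
      deriv (fun x'' => u x'' (exp s)) x')
      (deriv (fun x' => u x' (exp s)) ((y * exp (s / 2)) ^ (1 / k)) * (-1) *
          u ((y * exp (s / 2)) ^ (1 / k)) (exp s) ^ ((-1 : ℝ) - 1) *
          deriv (fun x'' => u x'' (exp s)) ((y * exp (s / 2)) ^ (1 / k)) +
        u ((y * exp (s / 2)) ^ (1 / k)) (exp s) ^ (-1 : ℝ) *
          deriv (fun x' => deriv (fun x'' => u x'' (exp s)) x') ((y * exp (s / 2)) ^ (1 / k)))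
      ((y * exp (s / 2)) ^ (1 / k)) :=
    ((aux_sect hu.1 hx0 ht0).rpow_const (Or.inl hu0.ne')).mul (aux_uxx hu.1 hx0 ht0)
  rw [hSder.deriv, hG.deriv, (h1 y hy).deriv, hPDE, hmid.deriv, hU y s]
  -- rpow bookkeeping
  have hrw1 : u ((y * exp (s / 2)) ^ (1 / k)) (exp s) ^ (-1 : ℝ) =
      (u ((y * exp (s / 2)) ^ (1 / k)) (exp s))⁻¹ := Real.rpow_neg_one _
  have hrw2 : u ((y * exp (s / 2)) ^ (1 / k)) (exp s) ^ ((-1 : ℝ) - 1) =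
      (u ((y * exp (s / 2)) ^ (1 / k)) (exp s) *
        u ((y * exp (s / 2)) ^ (1 / k)) (exp s))⁻¹ := by
    rw [show ((-1 : ℝ) - 1) = -(2:ℕ) by norm_num, Real.rpow_neg hu0.le, Real.rpow_natCast, sq]
  have eP2 : ((y * exp (s / 2)) ^ (1 / k)) ^ (2 * (1 - k) - 1 - 1) =
      ((y * exp (s / 2)) ^ (1 / k)) ^ (2 * (1 - k) - 1) / (y * exp (s / 2)) ^ (1 / k) :=
    Real.rpow_sub_one hx0.ne' _
  have eP1 : ((y * exp (s / 2)) ^ (1 / k)) ^ (2 * (1 - k) - 1) =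
      ((y * exp (s / 2)) ^ (1 / k)) ^ (2 * (1 - k)) / (y * exp (s / 2)) ^ (1 / k) :=
    Real.rpow_sub_one hx0.ne' _
  have eq3 : (y * exp (s / 2)) ^ (1 / k - 1 - 1) =
      (y * exp (s / 2)) ^ (1 / k - 1) / (y * exp (s / 2)) := Real.rpow_sub_one hw0.ne' _
  have eP : ((y * exp (s / 2)) ^ (1 / k)) ^ (2 * (1 - k)) =
      (y * exp (s / 2)) ^ (1 / k - 1) * (y * exp (s / 2)) ^ (1 / k - 1) := by
    rw [← Real.rpow_add hw0, ← Real.rpow_mul hw0.le]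
    congr 1
    field_simp
    ring
  have eq2 : (y * exp (s / 2)) ^ (1 / k - 1) =
      (y * exp (s / 2)) ^ (1 / k) / (y * exp (s / 2)) := Real.rpow_sub_one hw0.ne' _
  have eT : exp s = exp (s / 2) * exp (s / 2) := by
    rw [← Real.exp_add]; norm_num
  have hu0' : (0:ℝ) < u ((y * exp (s / 2)) ^ (1 / k)) (exp (s / 2) * exp (s / 2)) := by
    rw [← eT]; exact hu0
  rw [hrw1, hrw2, eP2, eP1, eq3, eP, eq2, eT]
  have hEne : exp (s / 2) ≠ 0 := (exp_pos _).ne'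
  have hq1ne : ((y * exp (s / 2)) ^ (1 / k) : ℝ) ≠ 0 := hx0.ne'
  have hune1 : u ((y * exp (s / 2)) ^ (1 / k)) (exp (s / 2) * exp (s / 2)) ≠ 0 := hu0'.ne'
  have hune2 : u ((y * exp (s / 2)) ^ (1 / k)) (exp (s / 2) ^ 2) ≠ 0 := by rw [sq]; exact hu0'.ne'
  field_simp
  ring

/-- for `k ≠ 0`, if `u` solves `E(-1,1)` on `(0,∞) × (0,∞)`, then
`U(y,s) = k⁻² x^{2(1-k)} u(x, e^s)` with `x = (y e^{s/2})^{1/k}` is a smooth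
positive solution of `U_s = ∂_y(U_y/U) + (1/(yU) + y/2) U_y` on `(0,∞) × ℝ`
(the finite form of `x' = x^k/√t, t' = ln t, u' = k⁻² x^{2(1-k)} u`). -/
theorem stmt4 (k : ℝ) (hk : k ≠ 0) (u : ℝ → ℝ → ℝ)
    (hu : IsSolE (-1) 1 u (Ioi 0 ×ˢ Ioi 0))
    (U : ℝ → ℝ → ℝ)
    (hU : ∀ y s : ℝ, U y s =
      (k ^ 2)⁻¹ * ((y * exp (s / 2)) ^ (1 / k)) ^ (2 * (1 - k)) *
        u ((y * exp (s / 2)) ^ (1 / k)) (exp s)) :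
    ContDiffOn ℝ (⊤ : ℕ∞) (fun p : ℝ × ℝ => U p.1 p.2) (Ioi 0 ×ˢ univ) ∧
    (∀ p ∈ (Ioi 0 ×ˢ univ : Set (ℝ × ℝ)), 0 < U p.1 p.2) ∧
    ∀ p ∈ (Ioi 0 ×ˢ univ : Set (ℝ × ℝ)),
      deriv (fun s => U p.1 s) p.2 =
        deriv (fun y => deriv (fun y' => U y' p.2) y / U y p.2) p.1 +
          (1 / (p.1 * U p.1 p.2) + p.1 / 2) * deriv (fun y => U y p.2) p.1 := by
  have hD : IsOpen ((Ioi 0 ×ˢ Ioi 0) : Set (ℝ × ℝ)) := isOpen_Ioi.prod isOpen_Ioi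
  refine ⟨?_, fun p hp => aux_pos k u hu U hU hk hp.1, fun p hp => aux_pde k hk u hu U hU hp.1⟩
  have hfun : (fun p : ℝ × ℝ => U p.1 p.2) = fun p : ℝ × ℝ =>
      (k ^ 2)⁻¹ * ((p.1 * exp (p.2 / 2)) ^ (1 / k)) ^ (2 * (1 - k)) *
        u ((p.1 * exp (p.2 / 2)) ^ (1 / k)) (exp p.2) := funext fun p => hU p.1 p.2
  rw [hfun]
  intro p hp
  have hy : 0 < p.1 := hp.1
  have hw0 : 0 < p.1 * exp (p.2 / 2) := by positivity
  have hb : ContDiffAt ℝ (⊤ : ℕ∞) (fun q : ℝ × ℝ => q.1 * exp (q.2 / 2)) p :=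
    (contDiff_fst.mul (Real.contDiff_exp.comp (contDiff_snd.div_const 2))).contDiffAt
  have hX : ContDiffAt ℝ (⊤ : ℕ∞) (fun q : ℝ × ℝ => (q.1 * exp (q.2 / 2)) ^ (1 / k)) p :=
    hb.rpow_const_of_ne hw0.ne'
  have hx0 : 0 < (p.1 * exp (p.2 / 2)) ^ (1 / k) := rpow_pos_of_pos hw0 _
  have hXe : ContDiffAt ℝ (⊤ : ℕ∞)
      (fun q : ℝ × ℝ => ((q.1 * exp (q.2 / 2)) ^ (1 / k)) ^ (2 * (1 - k))) p :=
    hX.rpow_const_of_ne hx0.ne'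
  have hpair : ContDiffAt ℝ (⊤ : ℕ∞)
      (fun q : ℝ × ℝ => (((q.1 * exp (q.2 / 2)) ^ (1 / k), exp q.2) : ℝ × ℝ)) p :=
    hX.prodMk (Real.contDiff_exp.comp contDiff_snd).contDiffAt
  have hmem : (((p.1 * exp (p.2 / 2)) ^ (1 / k), exp p.2) : ℝ × ℝ) ∈
      (Ioi 0 ×ˢ Ioi 0 : Set (ℝ × ℝ)) := ⟨hx0, exp_pos _⟩
  have huc : ContDiffAt ℝ (⊤ : ℕ∞)
      (fun q : ℝ × ℝ => u ((q.1 * exp (q.2 / 2)) ^ (1 / k)) (exp q.2)) p :=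
    by have := (hu.1.contDiffAt (hD.mem_nhds hmem)).comp p hpair; exact this
  exact (((contDiffAt_const (c := (k ^ 2)⁻¹)).mul hXe).mul huc).contDiffWithinAt
end

section
/- Let n be a real number with n ∉ {-2,-1,0}, set μ = (3n+4)/(n+2), and let C ∈ ℝ. Let u be a solution of E(n,μ) on (0,∞) × I. Then the function U defined by U(y,t) = (x/y)^{2/(n+2)} u(x,t), where x = (y^{(2n+2)/(n+2)} - C)^{(n+2)/(2n+2)}, is again a solution of E(n,μ) on the set of (y,t) with y > 0 and y^{(2n+2)/(n+2)} > C. (This is the one-parameter group x' = (x^{(2n+2)/(n+2)} + C)^{(n+2)/(2n+2)}, t' = t, u' = u x^{2/(n+2)} (x^{(2n+2)/(n+2)} + C)^{-1/(n+1)} generated by the symmetry Γ₄.) -/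
open Real Set Filter Topology

/-- Key calculus identity: if `F y = y^(-c) * w (y^α)` near `y₀`, then the
`E(n,μ)` nonlinear elliptic expression for `F` at `y₀` equals
`α² y₀^(α-2)` times the porous-medium flux derivative of `w` at `y₀^α`. -/
lemma stmt7core (n α μ c : ℝ)
    (hα' : α = c * (n + 1)) (hμ' : μ = α + 1)
    (w F : ℝ → ℝ) (J : Set ℝ) (hJ : IsOpen J)
    (hw : ContDiffOn ℝ (⊤ : ℕ∞) w J) (hwpos : ∀ s ∈ J, 0 < w s)
    (hF : ∀ y : ℝ, 0 < y → y ^ α ∈ J → F y = y ^ (-c) * w (y ^ α))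
    (y₀ : ℝ) (hy₀ : 0 < y₀) (hs₀ : y₀ ^ α ∈ J) :
    deriv (fun y => F y ^ n * deriv F y) y₀ + μ / y₀ * F y₀ ^ n * deriv F y₀
      = α ^ 2 * y₀ ^ (α - 2) * deriv (fun s => w s ^ n * deriv w s) (y₀ ^ α) := by
  have hy₀' : y₀ ≠ 0 := ne_of_gt hy₀
  set S : Set ℝ := {y | 0 < y ∧ y ^ α ∈ J} with hSdef
  have hS : IsOpen S := by
    rw [isOpen_iff_mem_nhds]
    rintro y ⟨hy, hyJ⟩
    have h2 : (fun y' : ℝ => y' ^ α) ⁻¹' J ∈ 𝓝 y :=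
      (Real.continuousAt_rpow_const y α (Or.inl (ne_of_gt hy))).preimage_mem_nhds
        (hJ.mem_nhds hyJ)
    filter_upwards [Ioi_mem_nhds hy, h2] with z hz1 hz2
    exact ⟨hz1, hz2⟩
  have hy₀S : y₀ ∈ S := ⟨hy₀, hs₀⟩
  have hW : 0 < w (y₀ ^ α) := hwpos _ hs₀
  -- derivative facts for w
  have hw1 : ContDiffOn ℝ 1 (deriv w) J := hw.deriv_of_isOpen hJ (by norm_cast)
  have hdw : ∀ s ∈ J, HasDerivAt w (deriv w s) s := fun s hs =>
    ((hw.contDiffAt (hJ.mem_nhds hs)).differentiableAt (by simp)).hasDerivAt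
  have hdw' : ∀ s ∈ J, HasDerivAt (deriv w) (deriv (deriv w) s) s := fun s hs =>
    ((hw1.contDiffAt (hJ.mem_nhds hs)).differentiableAt one_ne_zero).hasDerivAt
  -- explicit formula and its derivative on S
  have hBderiv : ∀ y ∈ S,
      HasDerivAt (fun y' : ℝ => y' ^ (-c) * w (y' ^ α))
        (-c * y ^ (-c - 1) * w (y ^ α) +
          y ^ (-c) * (deriv w (y ^ α) * (α * y ^ (α - 1)))) y := by
    rintro y ⟨hy, hyJ⟩
    have h1 : HasDerivAt (fun y' : ℝ => y' ^ (-c)) (-c * y ^ (-c - 1)) y :=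
      Real.hasDerivAt_rpow_const (Or.inl (ne_of_gt hy))
    have h2 : HasDerivAt (fun y' : ℝ => y' ^ α) (α * y ^ (α - 1)) y :=
      Real.hasDerivAt_rpow_const (Or.inl (ne_of_gt hy))
    have h3 : HasDerivAt (fun y' : ℝ => w (y' ^ α))
        (deriv w (y ^ α) * (α * y ^ (α - 1))) y := (hdw _ hyJ).comp y h2
    exact h1.mul h3
  have hFeq : ∀ y ∈ S, F y = y ^ (-c) * w (y ^ α) := fun y hy => hF y hy.1 hy.2
  have hFderiv : ∀ y ∈ S,
      HasDerivAt F (-c * y ^ (-c - 1) * w (y ^ α) +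
        y ^ (-c) * (deriv w (y ^ α) * (α * y ^ (α - 1)))) y := fun y hy =>
    (hBderiv y hy).congr_of_eventuallyEq
      (Filter.eventuallyEq_of_mem (hS.mem_nhds hy) hFeq)
  have hderF : ∀ y ∈ S, deriv F y =
      -c * y ^ (-c - 1) * w (y ^ α) +
        y ^ (-c) * (deriv w (y ^ α) * (α * y ^ (α - 1))) := fun y hy =>
    (hFderiv y hy).deriv
  -- the flux eventually agrees with the explicit expression
  have hflux : (fun y => F y ^ n * deriv F y) =ᶠ[𝓝 y₀]
      (fun y => (y ^ (-c) * w (y ^ α)) ^ n *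
        (-c * y ^ (-c - 1) * w (y ^ α) +
          y ^ (-c) * (deriv w (y ^ α) * (α * y ^ (α - 1))))) :=
    Filter.eventuallyEq_of_mem (hS.mem_nhds hy₀S) (fun y hy => by
      rw [hFeq y hy, hderF y hy])
  -- derivative of the explicit flux at y₀
  have h1₀ : HasDerivAt (fun y' : ℝ => y' ^ (-c)) (-c * y₀ ^ (-c - 1)) y₀ :=
    Real.hasDerivAt_rpow_const (Or.inl hy₀')
  have h2₀ : HasDerivAt (fun y' : ℝ => y' ^ α) (α * y₀ ^ (α - 1)) y₀ :=
    Real.hasDerivAt_rpow_const (Or.inl hy₀')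
  have h3₀ : HasDerivAt (fun y' : ℝ => w (y' ^ α))
      (deriv w (y₀ ^ α) * (α * y₀ ^ (α - 1))) y₀ := (hdw _ hs₀).comp y₀ h2₀
  have hW3 : HasDerivAt (fun y : ℝ => deriv w (y ^ α))
      (deriv (deriv w) (y₀ ^ α) * (α * y₀ ^ (α - 1))) y₀ := ((hdw' _ hs₀).comp y₀ h2₀ :)
  have hBpos : 0 < y₀ ^ (-c) * w (y₀ ^ α) :=
    mul_pos (Real.rpow_pos_of_pos hy₀ _) hW
  have hBn : HasDerivAt (fun y : ℝ => (y ^ (-c) * w (y ^ α)) ^ n)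
      ((-c * y₀ ^ (-c - 1) * w (y₀ ^ α) +
        y₀ ^ (-c) * (deriv w (y₀ ^ α) * (α * y₀ ^ (α - 1)))) * n *
        (y₀ ^ (-c) * w (y₀ ^ α)) ^ (n - 1)) y₀ :=
    (hBderiv y₀ hy₀S).rpow_const (Or.inl (ne_of_gt hBpos))
  have ht1 : HasDerivAt (fun y : ℝ => -c * y ^ (-c - 1))
      (-c * ((-c - 1) * y₀ ^ (-c - 1 - 1))) y₀ :=
    (Real.hasDerivAt_rpow_const (Or.inl hy₀')).const_mul (-c)
  have ht4 : HasDerivAt (fun y : ℝ => α * y ^ (α - 1))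
      (α * ((α - 1) * y₀ ^ (α - 1 - 1))) y₀ :=
    (Real.hasDerivAt_rpow_const (Or.inl hy₀')).const_mul α
  have hE₁' : HasDerivAt (fun y : ℝ => -c * y ^ (-c - 1) * w (y ^ α) +
      y ^ (-c) * (deriv w (y ^ α) * (α * y ^ (α - 1))))
      ((-c * ((-c - 1) * y₀ ^ (-c - 1 - 1))) * w (y₀ ^ α) +
        (-c * y₀ ^ (-c - 1)) * (deriv w (y₀ ^ α) * (α * y₀ ^ (α - 1))) +
        ((-c * y₀ ^ (-c - 1)) * (deriv w (y₀ ^ α) * (α * y₀ ^ (α - 1))) +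
          y₀ ^ (-c) * ((deriv (deriv w) (y₀ ^ α) * (α * y₀ ^ (α - 1))) *
              (α * y₀ ^ (α - 1)) +
            deriv w (y₀ ^ α) * (α * ((α - 1) * y₀ ^ (α - 1 - 1)))))) y₀ :=
    (ht1.mul h3₀).add (h1₀.mul (hW3.mul ht4))
  have hQ := hBn.fun_mul hE₁'
  -- derivative of the PME flux at s₀
  have hPn : HasDerivAt (fun s : ℝ => w s ^ n)
      (deriv w (y₀ ^ α) * n * w (y₀ ^ α) ^ (n - 1)) (y₀ ^ α) :=
    (hdw _ hs₀).rpow_const (Or.inl hW.ne')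
  have hP : HasDerivAt (fun s : ℝ => w s ^ n * deriv w s)
      ((deriv w (y₀ ^ α) * n * w (y₀ ^ α) ^ (n - 1)) * deriv w (y₀ ^ α) +
        w (y₀ ^ α) ^ n * deriv (deriv w) (y₀ ^ α)) (y₀ ^ α) :=
    hPn.mul (hdw' _ hs₀)
  rw [hflux.deriv_eq, hQ.deriv, hP.deriv, hderF y₀ hy₀S, hFeq y₀ hy₀S]
  -- now a pure rpow computation
  have e1 : y₀ ^ (-c - 1) = y₀ ^ (-c) / y₀ := Real.rpow_sub_one hy₀' (-c)
  have e2 : y₀ ^ (-c - 1 - 1) = y₀ ^ (-c) / y₀ / y₀ := by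
    rw [Real.rpow_sub_one hy₀' (-c - 1), e1]
  have e3 : y₀ ^ (α - 1 - 1) = y₀ ^ (α - 1) / y₀ := Real.rpow_sub_one hy₀' (α - 1)
  have e4 : y₀ ^ (α - 2) = y₀ ^ (α - 1) / y₀ := by
    rw [show α - 2 = α - 1 - 1 by ring, e3]
  have e6 : (y₀ ^ (-c) * w (y₀ ^ α)) ^ (n - 1)
      = (y₀ ^ (-c) * w (y₀ ^ α)) ^ n / (y₀ ^ (-c) * w (y₀ ^ α)) :=
    Real.rpow_sub_one (ne_of_gt hBpos) n
  have e5 : (y₀ ^ (-c) * w (y₀ ^ α)) ^ n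
      = (y₀ ^ (α - 1))⁻¹ * y₀⁻¹ * (y₀ ^ (-c))⁻¹ * w (y₀ ^ α) ^ n := by
    rw [Real.mul_rpow (Real.rpow_nonneg hy₀.le _) hW.le, ← Real.rpow_mul hy₀.le]
    have h : -c * n = -(α - 1) + -1 + c := by rw [hα']; ring
    rw [h, Real.rpow_add hy₀, Real.rpow_add hy₀, Real.rpow_neg hy₀.le,
      Real.rpow_neg_one,
      show y₀ ^ c = (y₀ ^ (-c))⁻¹ by rw [Real.rpow_neg hy₀.le, inv_inv]]
  have e7 : w (y₀ ^ α) ^ (n - 1) = w (y₀ ^ α) ^ n / w (y₀ ^ α) :=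
    Real.rpow_sub_one hW.ne' n
  rw [e6, e5, e7, e1, e2, e3, e4, hμ']
  have hZ : y₀ ^ (α - 1) ≠ 0 := (Real.rpow_pos_of_pos hy₀ _).ne'
  have hY : y₀ ^ (-c) ≠ 0 := (Real.rpow_pos_of_pos hy₀ _).ne'
  have hWn : w (y₀ ^ α) ^ n ≠ 0 := (Real.rpow_pos_of_pos hW _).ne'
  set s₁ : ℝ := y₀ ^ α with hs₁def
  set W : ℝ := w s₁ with hWdef
  set W1 : ℝ := deriv w s₁ with hW1def
  set W2 : ℝ := deriv (deriv w) s₁ with hW2def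
  set Wn : ℝ := W ^ n with hWndef
  set Y : ℝ := y₀ ^ (-c) with hYdef
  set Z : ℝ := y₀ ^ (α - 1) with hZdef
  rw [hα']
  field_simp [hy₀', hY, hZ, hWn, hW.ne']
  ring

/-- for `n ∉ {-2,-1,0}`, `μ = (3n+4)/(n+2)` and `C ∈ ℝ`, the
one-parameter group `x' = (x^{(2n+2)/(n+2)} + C)^{(n+2)/(2n+2)}, t' = t,
u' = u x^{2/(n+2)} (x^{(2n+2)/(n+2)} + C)^{-1/(n+1)}` (generated by `Γ₄`) maps
`E(n,μ)` into itself: if `u` solves `E(n,μ)` on `(0,∞) × I`, then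
`U(y,t) = (x/y)^{2/(n+2)} u(x,t)` with `x = (y^{(2n+2)/(n+2)} - C)^{(n+2)/(2n+2)}`
solves `E(n,μ)` on `{(y,t) : y > 0, y^{(2n+2)/(n+2)} > C, t ∈ I}`. -/
theorem stmt7 (n : ℝ) (hn2 : n ≠ -2) (hn1 : n ≠ -1) (hn0 : n ≠ 0)
    (μ : ℝ) (hμ : μ = (3 * n + 4) / (n + 2)) (C : ℝ)
    (I : Set ℝ) (hIopen : IsOpen I) (hIconn : I.OrdConnected)
    (u : ℝ → ℝ → ℝ) (hu : IsSolE n μ u (Ioi 0 ×ˢ I))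
    (U : ℝ → ℝ → ℝ)
    (hU : ∀ y t : ℝ, U y t =
      ((y ^ ((2 * n + 2) / (n + 2)) - C) ^ ((n + 2) / (2 * n + 2)) / y) ^ (2 / (n + 2)) *
        u ((y ^ ((2 * n + 2) / (n + 2)) - C) ^ ((n + 2) / (2 * n + 2))) t) :
    IsSolE n μ U
      {p : ℝ × ℝ | 0 < p.1 ∧ C < p.1 ^ ((2 * n + 2) / (n + 2)) ∧ p.2 ∈ I} := by
  obtain ⟨husm, hupos, hupde⟩ := hu
  have hm : (n : ℝ) + 2 ≠ 0 := by intro h; exact hn2 (by linarith)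
  have h1 : (n : ℝ) + 1 ≠ 0 := by intro h; exact hn1 (by linarith)
  have h2n : (2 : ℝ) * n + 2 ≠ 0 := by intro h; exact hn1 (by linarith)
  set α : ℝ := (2 * n + 2) / (n + 2) with hαdef
  set β : ℝ := (n + 2) / (2 * n + 2) with hβdef
  set c : ℝ := 2 / (n + 2) with hcdef
  have hα' : α = c * (n + 1) := by rw [hαdef, hcdef]; field_simp
  have hμ' : μ = α + 1 := by rw [hμ, hαdef]; field_simp; ring
  have hβα : β * α = 1 := by rw [hβdef, hαdef]; field_simp
  have hβc : β * c = 1 / (n + 1) := by rw [hβdef, hcdef]; field_simp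
  have hac : α - 2 = -c := by rw [hαdef, hcdef]; field_simp; ring
  have hDopen : IsOpen ((Ioi (0:ℝ)) ×ˢ I) := isOpen_Ioi.prod hIopen
  set w : ℝ → ℝ → ℝ := fun s t => s ^ (1 / (n + 1)) * u (s ^ β) t with hwdef
  -- the basic identity `u x t = x^(-c) * w (x^α) t`
  have hid : ∀ (x t : ℝ), 0 < x → u x t = x ^ (-c) * w (x ^ α) t := by
    intro x t hx
    have e1 : (x ^ α) ^ β = x := by
      rw [← Real.rpow_mul hx.le, show α * β = 1 from by rw [mul_comm]; exact hβα,
        Real.rpow_one]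
    have e2 : (x ^ α) ^ (1 / (n + 1)) = x ^ c := by
      rw [← Real.rpow_mul hx.le,
        show α * (1 / (n + 1)) = c from by rw [hα']; field_simp]
    simp only [hwdef]
    rw [e1, e2, ← mul_assoc, ← Real.rpow_add hx,
      show -c + c = 0 by ring, Real.rpow_zero, one_mul]
  -- smoothness of w
  have hwsm : ContDiffOn ℝ (⊤ : ℕ∞) (fun p : ℝ × ℝ => w p.1 p.2) (Ioi 0 ×ˢ I) := by
    intro p hp
    have hp1 : 0 < p.1 := hp.1
    have hp2 : p.2 ∈ I := hp.2
    apply ContDiffAt.contDiffWithinAt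
    have hfst : ContDiffAt ℝ (⊤ : ℕ∞) (fun q : ℝ × ℝ => q.1 ^ (1 / (n + 1))) p :=
      (Real.contDiffAt_rpow_const_of_ne (ne_of_gt hp1)).comp p contDiffAt_fst
    have hb : ContDiffAt ℝ (⊤ : ℕ∞) (fun q : ℝ × ℝ => q.1 ^ β) p :=
      (Real.contDiffAt_rpow_const_of_ne (ne_of_gt hp1)).comp p contDiffAt_fst
    have hmem : (p.1 ^ β, p.2) ∈ (Ioi (0:ℝ)) ×ˢ I :=
      ⟨Real.rpow_pos_of_pos hp1 β, hp2⟩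
    have hup : ContDiffAt ℝ (⊤ : ℕ∞) (fun q : ℝ × ℝ => u q.1 q.2) (p.1 ^ β, p.2) :=
      husm.contDiffAt (hDopen.mem_nhds hmem)
    exact hfst.mul (hup.comp p (hb.prodMk contDiffAt_snd) :)
  have hwpos : ∀ s t : ℝ, 0 < s → t ∈ I → 0 < w s t := fun s t hs ht =>
    mul_pos (Real.rpow_pos_of_pos hs _)
      (hupos (s ^ β, t) ⟨Real.rpow_pos_of_pos hs β, ht⟩)
  have hwslice : ∀ t ∈ I, ContDiffOn ℝ (⊤ : ℕ∞) (fun s => w s t) (Ioi 0) := by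
    intro t ht s hs
    exact ((hwsm.contDiffAt (hDopen.mem_nhds ⟨hs, ht⟩)).comp s
      (contDiffAt_id.prodMk contDiffAt_const)).contDiffWithinAt
  -- the porous medium equation for w
  have hwpde : ∀ s t : ℝ, 0 < s → t ∈ I →
      deriv (fun τ => w s τ) t
        = α ^ 2 * deriv (fun s' => w s' t ^ n * deriv (fun s'' => w s'' t) s') s := by
    intro s t hs ht
    have hx : 0 < s ^ β := Real.rpow_pos_of_pos hs β
    have hxα : (s ^ β) ^ α = s := by
      rw [← Real.rpow_mul hs.le, hβα, Real.rpow_one]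
    have hcore := stmt7core n α μ c hα' hμ' (fun s' => w s' t) (fun x => u x t)
        (Ioi 0) isOpen_Ioi (hwslice t ht)
        (fun s' hs' => hwpos s' t hs' ht)
        (fun x hx0 _ => hid x t hx0)
        (s ^ β) hx (by rw [hxα]; exact hs)
    rw [hxα] at hcore
    have hpde := hupde (s ^ β, t) ⟨hx, ht⟩
    dsimp only at hpde
    beta_reduce at hcore
    have hL : (fun τ => w s τ) = fun τ => s ^ (1 / (n + 1)) * u (s ^ β) τ := rfl
    rw [hL, deriv_const_mul_field, hpde, hcore]
    have hpow : s ^ (1 / (n + 1)) * (s ^ β) ^ (α - 2) = 1 := by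
      rw [← Real.rpow_mul hs.le, ← Real.rpow_add hs,
        show 1 / (n + 1) + β * (α - 2) = 0 from by
          rw [hβdef, hαdef]; field_simp; ring,
        Real.rpow_zero]
    linear_combination α ^ 2 *
      deriv (fun s' => w s' t ^ n * deriv (fun s'' => w s'' t) s') s * hpow
  -- the transformation identity for U
  have hUid : ∀ y t : ℝ, 0 < y → C < y ^ α → U y t = y ^ (-c) * w (y ^ α - C) t := by
    intro y t hy hC
    have hspos : 0 < y ^ α - C := sub_pos.2 hC
    have hX : 0 < (y ^ α - C) ^ β := Real.rpow_pos_of_pos hspos β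
    rw [hU y t]
    have h3 : ((y ^ α - C) ^ β / y) ^ c
        = y ^ (-c) * (y ^ α - C) ^ (1 / (n + 1)) := by
      rw [Real.div_rpow hX.le hy.le, ← Real.rpow_mul hspos.le, hβc,
        Real.rpow_neg hy.le, div_eq_inv_mul]
    simp only [h3, hwdef, mul_assoc]
  constructor
  · -- smoothness of U
    intro p hp
    obtain ⟨hp1, hp2, hp3⟩ := hp
    apply ContDiffAt.contDiffWithinAt
    have hDopen2 : IsOpen {p : ℝ × ℝ | 0 < p.1 ∧ C < p.1 ^ α ∧ p.2 ∈ I} := by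
      rw [isOpen_iff_mem_nhds]
      rintro q ⟨hq1, hq2, hq3⟩
      have c1 : {r : ℝ × ℝ | 0 < r.1} ∈ 𝓝 q :=
        continuousAt_fst.preimage_mem_nhds (Ioi_mem_nhds hq1)
      have c2 : {r : ℝ × ℝ | C < r.1 ^ α} ∈ 𝓝 q := by
        have hca : ContinuousAt (fun r : ℝ × ℝ => r.1 ^ α) q :=
          (Real.continuousAt_rpow_const q.1 α (Or.inl (ne_of_gt hq1))).comp
            continuousAt_fst
        exact hca.preimage_mem_nhds (Ioi_mem_nhds hq2)
      have c3 : {r : ℝ × ℝ | r.2 ∈ I} ∈ 𝓝 q :=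
        continuousAt_snd.preimage_mem_nhds (hIopen.mem_nhds hq3)
      filter_upwards [c1, c2, c3] with r h1' h2' h3'
      exact ⟨h1', h2', h3'⟩
    have hev : (fun q : ℝ × ℝ => U q.1 q.2) =ᶠ[𝓝 p]
        fun q : ℝ × ℝ => q.1 ^ (-c) * w (q.1 ^ α - C) q.2 :=
      Filter.eventuallyEq_of_mem (hDopen2.mem_nhds ⟨hp1, hp2, hp3⟩)
        (fun q hq => hUid q.1 q.2 hq.1 hq.2.1)
    refine ContDiffAt.congr_of_eventuallyEq ?_ hev
    have hfst : ContDiffAt ℝ (⊤ : ℕ∞) (fun q : ℝ × ℝ => q.1 ^ (-c)) p :=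
      (Real.contDiffAt_rpow_const_of_ne (ne_of_gt hp1)).comp p contDiffAt_fst
    have hmap : ContDiffAt ℝ (⊤ : ℕ∞) (fun q : ℝ × ℝ => (q.1 ^ α - C, q.2)) p :=
      (((Real.contDiffAt_rpow_const_of_ne (ne_of_gt hp1)).comp p
        contDiffAt_fst).sub contDiffAt_const).prodMk contDiffAt_snd
    have hmem : (p.1 ^ α - C, p.2) ∈ (Ioi (0:ℝ)) ×ˢ I := ⟨sub_pos.2 hp2, hp3⟩
    exact hfst.mul ((hwsm.contDiffAt (hDopen.mem_nhds hmem)).comp p hmap :)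
  constructor
  · -- positivity of U
    rintro p ⟨hp1, hp2, hp3⟩
    rw [hUid p.1 p.2 hp1 hp2]
    exact mul_pos (Real.rpow_pos_of_pos hp1 _) (hwpos _ _ (sub_pos.2 hp2) hp3)
  · -- the equation for U
    rintro ⟨y, t⟩ ⟨hp1, hp2, hp3⟩
    dsimp only at hp1 hp2 hp3 ⊢
    have hwtsm : ContDiffOn ℝ (⊤ : ℕ∞) (fun s => w (s - C) t) (Ioi C) := by
      intro s hs
      have hsC : (0:ℝ) < s - C := sub_pos.2 hs
      exact ((hwsm.contDiffAt (hDopen.mem_nhds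
        (show ((s - C, t) : ℝ × ℝ) ∈ Ioi 0 ×ˢ I from ⟨hsC, hp3⟩))).comp s
        ((contDiffAt_id.sub contDiffAt_const).prodMk contDiffAt_const)).contDiffWithinAt
    have hcore := stmt7core n α μ c hα' hμ' (fun s => w (s - C) t)
        (fun y' => U y' t)
        (Ioi C) isOpen_Ioi hwtsm
        (fun s hs => hwpos _ _ (sub_pos.2 hs) hp3)
        (fun y' hy' hy'C => hUid y' t hy' hy'C)
        y hp1 hp2
    beta_reduce at hcore
    rw [hcore]
    have hLfun : (fun t' => U y t') = fun t' => y ^ (-c) * w (y ^ α - C) t' :=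
      funext fun t' => hUid y t' hp1 hp2
    rw [hLfun, deriv_const_mul_field, hwpde (y ^ α - C) t (sub_pos.2 hp2) hp3]
    have hder1 : ∀ s : ℝ, deriv (fun s' => w (s' - C) t) s
        = deriv (fun s'' => w s'' t) (s - C) :=
      fun s => deriv_comp_sub_const (fun s'' => w s'' t) C s
    have hfun2 : (fun s => w (s - C) t ^ n * deriv (fun s' => w (s' - C) t) s)
        = fun s => (fun s' => w s' t ^ n * deriv (fun s'' => w s'' t) s') (s - C) := by
      funext s; rw [hder1 s]
    have hder2 : deriv (fun s =>
          (fun s' => w s' t ^ n * deriv (fun s'' => w s'' t) s') (s - C)) (y ^ α)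
        = deriv (fun s' => w s' t ^ n * deriv (fun s'' => w s'' t) s') (y ^ α - C) :=
      deriv_comp_sub_const (fun s' => w s' t ^ n * deriv (fun s'' => w s'' t) s') C (y ^ α)
    rw [hfun2, hder2, hac]
    ring
end

section
/- Let n ∉ {-1,0} and μ ∈ ℝ with μn + n + 2 ≠ 0. Set α = (μn+n+2)/(2n+2) and λ = (3n+4 - nμ - 2μ)/(μn+n+2). Let u be a solution of E(n,μ) on (0,∞) × I. Then the function U defined by U(y,t) = x^{(μ-1)/(n+1)} u(x,t), where x = (α y)^{1/α}, is a solution of E(n,λ), i.e. of U_t = ∂_y(U^n U_y) + (λ/y) U^n U_y, on the set of (y,t) with α y > 0, t ∈ I. (This is the finite form of the transformation x' = ((2n+2)/(μn+n+2)) x^{(μn+n+2)/(2n+2)}, t' = t, u' = x^{(μ-1)/(n+1)} u.) -/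
open Real Set

private lemma pd1 {f : ℝ × ℝ → ℝ} {x t : ℝ} (hf : DifferentiableAt ℝ f (x, t)) :
    HasDerivAt (fun x' => f (x', t)) (fderiv ℝ f (x, t) ((1:ℝ), (0:ℝ))) x := by
  have := hf.hasFDerivAt.comp_hasDerivAt x ((hasDerivAt_id x).prodMk (hasDerivAt_const x t))
  exact this

private lemma pd2 {f : ℝ × ℝ → ℝ} {x t : ℝ} (hf : DifferentiableAt ℝ f (x, t)) :
    HasDerivAt (fun t' => f (x, t')) (fderiv ℝ f (x, t) ((0:ℝ), (1:ℝ))) t := by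
  have := hf.hasFDerivAt.comp_hasDerivAt t ((hasDerivAt_const t x).prodMk (hasDerivAt_id t))
  exact this

set_option maxHeartbeats 4000000 in
/-- for `n ∉ {-1,0}` and `μ` with `μn + n + 2 ≠ 0`, setting
`α = (μn+n+2)/(2n+2)` and `λ = (3n+4-nμ-2μ)/(μn+n+2)`, the transformation
`x' = ((2n+2)/(μn+n+2)) x^{(μn+n+2)/(2n+2)}, t' = t, u' = x^{(μ-1)/(n+1)} u`
maps `E(n,λ)` into `E(n,μ)` backwards: if `u` solves `E(n,μ)` on `(0,∞) × I`, then
`U(y,t) = x^{(μ-1)/(n+1)} u(x,t)` with `x = (α y)^{1/α}` solves `E(n,λ)` on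
`{(y,t) : α y > 0, t ∈ I}`. -/
theorem stmt8 (n : ℝ) (hn1 : n ≠ -1) (hn0 : n ≠ 0) (μ : ℝ)
    (hμ : μ * n + n + 2 ≠ 0)
    (α lam : ℝ) (hα : α = (μ * n + n + 2) / (2 * n + 2))
    (hlam : lam = (3 * n + 4 - n * μ - 2 * μ) / (μ * n + n + 2))
    (I : Set ℝ) (hIopen : IsOpen I) (hIconn : I.OrdConnected)
    (u : ℝ → ℝ → ℝ) (hu : IsSolE n μ u (Ioi 0 ×ˢ I))
    (U : ℝ → ℝ → ℝ)
    (hU : ∀ y t : ℝ, U y t =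
      ((α * y) ^ (1 / α)) ^ ((μ - 1) / (n + 1)) * u ((α * y) ^ (1 / α)) t) :
    IsSolE n lam U {p : ℝ × ℝ | 0 < α * p.1 ∧ p.2 ∈ I} := by
  have hn1' : n + 1 ≠ 0 := fun h => hn1 (by linarith)
  have h2n2 : 2 * n + 2 ≠ 0 := fun h => hn1 (by linarith)
  have hα0 : α ≠ 0 := by rw [hα]; exact div_ne_zero hμ h2n2
  set β := (μ - 1) / (n + 1) with hβdef
  have hβμ : μ = β + 2 * α - 1 := by
    rw [hβdef, hα]; field_simp; ring
  have hnβ : n * β = 2 * α - 2 := by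
    rw [hβdef, hα]; field_simp; ring
  have hlamα : lam = (2 - α - β) / α := by
    rw [eq_div_iff hα0, hlam, hβdef, hα, div_mul_eq_mul_div, div_eq_iff hμ]; field_simp; ring
  have hβn : β = (2 * α - 2) / n := by rw [eq_div_iff hn0]; linarith
  obtain ⟨hsm, hpos, heq⟩ := hu
  set F : ℝ × ℝ → ℝ := fun p => u p.1 p.2 with hFdef
  set G : ℝ × ℝ → ℝ := fun p => fderiv ℝ F p ((1:ℝ), (0:ℝ)) with hGdef
  have hD : IsOpen (Ioi (0:ℝ) ×ˢ I) := isOpen_Ioi.prod hIopen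
  have hFc : ∀ p ∈ Ioi (0:ℝ) ×ˢ I, ContDiffAt ℝ (⊤ : ℕ∞) F p :=
    fun p hp => hsm.contDiffAt (hD.mem_nhds hp)
  have hGc : ∀ p ∈ Ioi (0:ℝ) ×ˢ I, ContDiffAt ℝ (⊤ : ℕ∞) G p := by
    intro p hp
    have h1 : ContDiffAt ℝ (⊤ : ℕ∞) (fderiv ℝ F) p := (hFc p hp).fderiv_right (by simp)
    exact (ContinuousLinearMap.apply ℝ ℝ ((1:ℝ), (0:ℝ))).contDiff.contDiffAt.comp p h1
  have hFd : ∀ p ∈ Ioi (0:ℝ) ×ˢ I, DifferentiableAt ℝ F p :=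
    fun p hp => (hFc p hp).differentiableAt (by simp)
  have hGd : ∀ p ∈ Ioi (0:ℝ) ×ˢ I, DifferentiableAt ℝ G p :=
    fun p hp => (hGc p hp).differentiableAt (by simp)
  have hux : ∀ x t : ℝ, (x, t) ∈ Ioi (0:ℝ) ×ˢ I →
      HasDerivAt (fun x' => u x' t) (G (x, t)) x := by
    intro x t hp
    have := pd1 (hFd (x, t) hp)
    rw [hGdef]
    exact this
  have hGx : ∀ x t : ℝ, (x, t) ∈ Ioi (0:ℝ) ×ˢ I →
      HasDerivAt (fun x' => G (x', t)) (fderiv ℝ G (x, t) ((1:ℝ), (0:ℝ))) x :=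
    fun x t hp => pd1 (hGd (x, t) hp)
  have hut : ∀ x t : ℝ, (x, t) ∈ Ioi (0:ℝ) ×ˢ I →
      HasDerivAt (fun t' => u x t') (fderiv ℝ F (x, t) ((0:ℝ), (1:ℝ))) t :=
    fun x t hp => pd2 (hFd (x, t) hp)
  -- the PDE for u in canonical form
  have heq' : ∀ x t : ℝ, (x, t) ∈ Ioi (0:ℝ) ×ˢ I →
      fderiv ℝ F (x, t) ((0:ℝ), (1:ℝ)) =
        (n * u x t ^ (n - 1) * G (x, t) * G (x, t)
          + u x t ^ n * fderiv ℝ G (x, t) ((1:ℝ), (0:ℝ)))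
        + μ / x * u x t ^ n * G (x, t) := by
    intro x t hp
    have h0 := heq (x, t) hp
    dsimp only at h0
    rw [(hut x t hp).deriv, (hux x t hp).deriv] at h0
    have hopen : IsOpen {x' : ℝ | (x', t) ∈ Ioi (0:ℝ) ×ˢ I} :=
      hD.preimage (continuous_id.prodMk continuous_const)
    have hev : (fun x' => u x' t ^ n * deriv (fun x'' => u x'' t) x')
        =ᶠ[nhds x] (fun x' => u x' t ^ n * G (x', t)) := by
      filter_upwards [hopen.mem_nhds hp] with x' hx'
      rw [(hux x' t hx').deriv]
    rw [hev.deriv_eq] at h0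
    have hd : HasDerivAt (fun x' => u x' t ^ n * G (x', t))
        (n * u x t ^ (n - 1) * G (x, t) * G (x, t)
          + u x t ^ n * fderiv ℝ G (x, t) ((1:ℝ), (0:ℝ))) x := by
      have h1 := (hux x t hp).rpow_const (p := n) (Or.inl (hpos (x, t) hp).ne')
      have h2 : HasDerivAt (fun x' => u x' t ^ n * G (x', t)) _ x := h1.fun_mul (hGx x t hp)
      convert h2 using 1
      ring
    rw [hd.deriv] at h0
    exact h0
  refine ⟨?_, ?_, ?_⟩
  · -- smoothness
    have hrw : (fun p : ℝ × ℝ => U p.1 p.2)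
        = fun p : ℝ × ℝ => ((α * p.1) ^ (1 / α)) ^ β * F ((α * p.1) ^ (1 / α), p.2) :=
      funext fun p => hU p.1 p.2
    rw [hrw]
    intro q hq
    obtain ⟨y, t⟩ := q
    obtain ⟨hy, ht⟩ := hq
    replace hy : 0 < α * y := hy
    replace ht : t ∈ I := ht
    have hx : (0:ℝ) < (α * y) ^ (1 / α) := Real.rpow_pos_of_pos hy _
    apply ContDiffAt.contDiffWithinAt
    have c1 : ContDiffAt ℝ (⊤ : ℕ∞) (fun q : ℝ × ℝ => (α * q.1) ^ (1 / α)) (y, t) :=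
      (Real.contDiffAt_rpow_const_of_ne (ne_of_gt hy)).comp (y, t)
        ((contDiff_const.mul contDiff_fst).contDiffAt)
    have c2 : ContDiffAt ℝ (⊤ : ℕ∞) (fun q : ℝ × ℝ => ((α * q.1) ^ (1 / α)) ^ β) (y, t) :=
      by have := (Real.contDiffAt_rpow_const_of_ne (p := β) hx.ne').comp (y, t) c1; exact this
    have c3 : ContDiffAt ℝ (⊤ : ℕ∞) (fun q : ℝ × ℝ => F ((α * q.1) ^ (1 / α), q.2)) (y, t) :=
      (hFc ((α * y) ^ (1 / α), t) (Set.mk_mem_prod hx ht)).comp (f := fun q : ℝ × ℝ => ((α * q.1) ^ (1 / α), q.2)) (y, t)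
        (c1.prodMk contDiffAt_snd)
    exact c2.mul c3
  · -- positivity
    rintro ⟨y, t⟩ ⟨hy, ht⟩
    replace hy : 0 < α * y := hy
    replace ht : t ∈ I := ht
    have hx : (0:ℝ) < (α * y) ^ (1 / α) := Real.rpow_pos_of_pos hy _
    rw [hU]
    exact mul_pos (Real.rpow_pos_of_pos hx _) (hpos _ (Set.mk_mem_prod hx ht))
  · -- the PDE
    rintro ⟨y, t⟩ ⟨hy, ht⟩
    replace hy : 0 < α * y := hy
    replace ht : t ∈ I := ht
    dsimp only
    have hXpos : ∀ z : ℝ, 0 < α * z → (0:ℝ) < (α * z) ^ (1 / α) :=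
      fun z hz => Real.rpow_pos_of_pos hz _
    have hMem : ∀ z : ℝ, 0 < α * z → ((α * z) ^ (1 / α), t) ∈ Ioi (0:ℝ) ×ˢ I :=
      fun z hz => Set.mk_mem_prod (hXpos z hz) ht
    have hXd : ∀ z : ℝ, 0 < α * z →
        HasDerivAt (fun w => (α * w) ^ (1 / α)) (((α * z) ^ (1 / α)) ^ (1 - α)) z := by
      intro z hz
      have h1 : HasDerivAt (fun w : ℝ => α * w) α z := by
        simpa using (hasDerivAt_id z).const_mul α
      have h2 := h1.rpow_const (p := 1 / α) (Or.inl (ne_of_gt hz))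
      convert h2 using 1
      rw [← Real.rpow_mul (le_of_lt hz), show 1/α * (1-α) = 1/α - 1 by field_simp]
      field_simp
    set Vex : ℝ → ℝ := fun z => ((α * z) ^ (1 / α)) ^ β * u ((α * z) ^ (1 / α)) t
      with hVexdef
    set Uy : ℝ → ℝ := fun z =>
      ((α * z) ^ (1 / α)) ^ (1 - α) *
        (β * (((α * z) ^ (1 / α)) ^ (β - 1) * u ((α * z) ^ (1 / α)) t)
          + ((α * z) ^ (1 / α)) ^ β * G ((α * z) ^ (1 / α), t)) with hUydef
    have hVd : ∀ z : ℝ, 0 < α * z → HasDerivAt Vex (Uy z) z := by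
      intro z hz
      have hx0 : ((α * z) ^ (1 / α)) ≠ 0 := (hXpos z hz).ne'
      have h1 := (hXd z hz).rpow_const (p := β) (Or.inl hx0)
      have h2 := (hux _ t (hMem z hz)).comp z (hXd z hz)
      simp only [Function.comp_def] at h2
      have h3 : HasDerivAt (fun w => ((α * w) ^ (1 / α)) ^ β * u ((α * w) ^ (1 / α)) t) _ z := h1.fun_mul h2
      rw [hVexdef, hUydef]
      convert h3 using 1
      ring
    have hUVz : ∀ w : ℝ, U w t = Vex w := by
      intro w; rw [hVexdef]; exact hU w t
    have hUV : (fun w => U w t) = Vex := funext hUVz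
    have hUyev : ∀ z : ℝ, 0 < α * z → deriv (fun w => U w t) z = Uy z := by
      intro z hz
      rw [hUV]
      exact (hVd z hz).deriv
    have hmem := hMem y hy
    have hx : (0:ℝ) < (α * y) ^ (1 / α) := hXpos y hy
    -- time derivative
    have hLt : HasDerivAt (fun τ => U y τ)
        (((α * y) ^ (1 / α)) ^ β * fderiv ℝ F ((α * y) ^ (1 / α), t) ((0:ℝ), (1:ℝ))) t := by
      have h1 := (hut _ t hmem).const_mul (((α * y) ^ (1 / α)) ^ β)
      have h2 : (fun τ => U y τ) = fun τ => ((α * y) ^ (1 / α)) ^ β * u ((α * y) ^ (1 / α)) τ :=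
        funext fun τ => hU y τ
      rw [h2]
      exact h1
    rw [hLt.deriv]
    -- derivative of `Uy` at `y`
    have hUyd : HasDerivAt Uy
        ((((1 - α) * ((α * y) ^ (1 / α)) ^ (1 - α - 1)) * ((α * y) ^ (1 / α)) ^ (1 - α)) *
          (β * ((α * y) ^ (1 / α)) ^ (β - 1) * u ((α * y) ^ (1 / α)) t
            + ((α * y) ^ (1 / α)) ^ β * G ((α * y) ^ (1 / α), t))
         + ((α * y) ^ (1 / α)) ^ (1 - α) *
          ((β * ((((β - 1) * ((α * y) ^ (1 / α)) ^ (β - 1 - 1)) * ((α * y) ^ (1 / α)) ^ (1 - α)) *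
              u ((α * y) ^ (1 / α)) t
              + ((α * y) ^ (1 / α)) ^ (β - 1) *
                  (G ((α * y) ^ (1 / α), t) * ((α * y) ^ (1 / α)) ^ (1 - α))))
            + (((β * ((α * y) ^ (1 / α)) ^ (β - 1)) * ((α * y) ^ (1 / α)) ^ (1 - α)) *
                  G ((α * y) ^ (1 / α), t)
              + ((α * y) ^ (1 / α)) ^ β *
                  (fderiv ℝ G ((α * y) ^ (1 / α), t) ((1:ℝ), (0:ℝ)) * ((α * y) ^ (1 / α)) ^ (1 - α))))) y := by
      have hd1 := (hXd y hy).rpow_const (p := 1 - α) (Or.inl hx.ne')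
      have hd2 := (hXd y hy).rpow_const (p := β - 1) (Or.inl hx.ne')
      have hd3 := (hXd y hy).rpow_const (p := β) (Or.inl hx.ne')
      have hdu := (hux _ t hmem).comp y (hXd y hy)
      have hdG := (hGx _ t hmem).comp y (hXd y hy)
      simp only [Function.comp_def] at hdu hdG
      have hA2 := (hd2.fun_mul hdu).const_mul β
      have hA3 := hd3.fun_mul hdG
      have h4 : HasDerivAt (fun z => ((α * z) ^ (1 / α)) ^ (1 - α) * (β * (((α * z) ^ (1 / α)) ^ (β - 1) * u ((α * z) ^ (1 / α)) t) + ((α * z) ^ (1 / α)) ^ β * G ((α * z) ^ (1 / α), t))) _ y := hd1.fun_mul (hA2.fun_add hA3)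
      rw [hUydef]
      convert h4 using 1
      ring
    -- rewrite the space-derivative terms
    have hopen2 : IsOpen {z : ℝ | 0 < α * z} :=
      isOpen_Ioi.preimage (continuous_const.mul continuous_id)
    have hev2 : (fun z => U z t ^ n * deriv (fun z' => U z' t) z)
        =ᶠ[nhds y] fun z => Vex z ^ n * Uy z := by
      filter_upwards [hopen2.mem_nhds hy] with z hz
      rw [hUyev z hz, hUVz z]
    rw [hev2.deriv_eq]
    have hVy : Vex y = ((α * y) ^ (1 / α)) ^ β * u ((α * y) ^ (1 / α)) t := by
      rw [hVexdef]
    have hVpos : 0 < Vex y := by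
      rw [hVy]; exact mul_pos (Real.rpow_pos_of_pos hx _) (hpos _ hmem)
    have hW := ((hVd y hy).rpow_const (p := n) (Or.inl hVpos.ne')).fun_mul hUyd
    rw [hW.deriv, hUyev y hy, hU y t]
    rw [heq' _ t hmem]
    rw [hVy, hUydef]
    dsimp only
    -- now pure algebra in rpow terms
    set x : ℝ := (α * y) ^ (1 / α) with hxdef
    set a : ℝ := u x t with hadef
    set g : ℝ := G (x, t) with hgdef
    set hh : ℝ := fderiv ℝ G (x, t) ((1:ℝ), (0:ℝ)) with hhdef
    have ha : 0 < a := hpos _ hmem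
    have hy0 : y ≠ 0 := by
      intro h0
      rw [h0, mul_zero] at hy
      exact lt_irrefl 0 hy
    have hxα : x ^ α = α * y := by
      rw [hxdef, ← Real.rpow_mul (le_of_lt hy), one_div, inv_mul_cancel₀ hα0, Real.rpow_one]
    have e1 : x ^ (β - 1) = x ^ β / x := by
      rw [Real.rpow_sub hx, Real.rpow_one]
    have e2 : x ^ (1 - α - 1) = (α * y)⁻¹ := by
      rw [show (1:ℝ) - α - 1 = -α by ring, Real.rpow_neg (le_of_lt hx), hxα]
    have e3 : x ^ (β - 1 - 1) = x ^ β / (x * x) := by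
      rw [show β - 1 - 1 = β - 2 by ring, Real.rpow_sub hx,
        show (2:ℝ) = ((2:ℕ):ℝ) by norm_num, Real.rpow_natCast, pow_two]
    have e4 : x ^ (1 - α) = x / (α * y) := by
      rw [Real.rpow_sub hx, Real.rpow_one, hxα]
    have e5 : (x ^ β * a) ^ n = (α * y) * (α * y) / (x * x) * a ^ n := by
      rw [Real.mul_rpow (Real.rpow_nonneg (le_of_lt hx) β) (le_of_lt ha),
        ← Real.rpow_mul (le_of_lt hx), show β * n = α + α - 2 by linarith,
        Real.rpow_sub hx, Real.rpow_add hx, hxα,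
        show (2:ℝ) = ((2:ℕ):ℝ) by norm_num, Real.rpow_natCast, pow_two]
    have e6 : (x ^ β * a) ^ (n - 1) = (x ^ β * a) ^ n / (x ^ β * a) := by
      rw [Real.rpow_sub (mul_pos (Real.rpow_pos_of_pos hx β) ha), Real.rpow_one]
    have e7 : a ^ (n - 1) = a ^ n / a := by
      rw [Real.rpow_sub ha, Real.rpow_one]
    have hxβ : (0:ℝ) < x ^ β := Real.rpow_pos_of_pos hx β
    rw [e6, e5, e7, e1, e2, e3, e4, hlamα, hβμ, hβn]
    have hαy : α * y ≠ 0 := ne_of_gt hy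
    field_simp
    ring
end

section
/- Let n ∉ {-1,0} and μ = -(3n+4)/n. If u is a solution of E(n,μ) on (0,∞) × I, then the function ũ(y,t) = y^{4/n} u(1/y, t) is again a solution of E(n,μ) on (0,∞) × I. Moreover the map T(x,u) = (1/x, x^{-4/n} u) on (0,∞) × (0,∞) is an involution (T ∘ T = id), so the transformation x' = 1/x, t' = t, u' = x^{-4/n} u forms a cyclic group of order 2. -/
open Real Set

/-- The map `T(x,u) = (1/x, x^{-4/n} u)`, the spatial part of the discrete point
transformation `x' = 1/x, t' = t, u' = x^{-4/n} u`. -/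
noncomputable def Tn (n : ℝ) : ℝ × ℝ → ℝ × ℝ :=
  fun p => (p.1⁻¹, p.1 ^ (-4 / n) * p.2)

set_option maxHeartbeats 1000000

/-- for `n ∉ {-1,0}` and `μ = -(3n+4)/n`, if `u` solves `E(n,μ)` on
`(0,∞) × I`, then so does `ũ(y,t) = y^{4/n} u(1/y, t)`; moreover
`T(x,u) = (1/x, x^{-4/n}u)` is an involution of `(0,∞) × (0,∞)`, so the
transformation `x' = 1/x, t' = t, u' = x^{-4/n} u` forms a cyclic group of order 2. -/
theorem stmt9 (n : ℝ) (hn1 : n ≠ -1) (hn0 : n ≠ 0)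
    (μ : ℝ) (hμ : μ = -(3 * n + 4) / n)
    (I : Set ℝ) (hIopen : IsOpen I) (hIconn : I.OrdConnected)
    (u : ℝ → ℝ → ℝ) (hu : IsSolE n μ u (Ioi 0 ×ˢ I)) :
    IsSolE n μ (fun y t => y ^ (4 / n) * u y⁻¹ t) (Ioi 0 ×ˢ I) ∧
    ∀ p : ℝ × ℝ, 0 < p.1 → 0 < p.2 → Tn n (Tn n p) = p := by
  obtain ⟨husm, hupos, hueq⟩ := hu
  constructor
  · refine ⟨?_, ?_, ?_⟩
    · -- smoothness
      have hmap : ContDiffOn ℝ (⊤ : ℕ∞) (fun p : ℝ × ℝ => ((p.1)⁻¹, p.2)) (Ioi 0 ×ˢ I) := by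
        apply ContDiffOn.prodMk
        · intro p hp
          exact ((contDiffAt_inv ℝ (ne_of_gt hp.1)).comp p contDiffAt_fst).contDiffWithinAt
        · exact contDiff_snd.contDiffOn
      have husm2 : ContDiffOn ℝ (⊤ : ℕ∞) (fun p : ℝ × ℝ => u (p.1)⁻¹ p.2) (Ioi 0 ×ˢ I) :=
        husm.comp hmap (fun p hp => ⟨mem_Ioi.2 (inv_pos.2 (mem_Ioi.1 hp.1)), hp.2⟩)
      have hrp : ContDiffOn ℝ (⊤ : ℕ∞) (fun p : ℝ × ℝ => p.1 ^ (4/n)) (Ioi 0 ×ˢ I) := by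
        intro p hp
        exact ((Real.contDiffAt_rpow_const_of_ne (ne_of_gt hp.1)).comp p
          contDiffAt_fst).contDiffWithinAt
      exact hrp.mul husm2
    · -- positivity
      rintro ⟨y, t⟩ ⟨hy, ht⟩
      exact mul_pos (Real.rpow_pos_of_pos hy _) (hupos (y⁻¹, t) ⟨mem_Ioi.2 (inv_pos.2 (mem_Ioi.1 hy)), ht⟩)
    · -- PDE
      rintro ⟨y, t⟩ ⟨hy, ht⟩
      simp only at hy ht ⊢
      rw [mem_Ioi] at hy
      have hy' : y ≠ 0 := ne_of_gt hy
      have hx0 : y⁻¹ ∈ Ioi (0:ℝ) := mem_Ioi.2 (inv_pos.2 hy)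
      have hfsm : ContDiffOn ℝ (⊤ : ℕ∞) (fun x => u x t) (Ioi 0) :=
        husm.comp ((contDiff_id.prodMk contDiff_const).contDiffOn) (fun x hx => ⟨hx, ht⟩)
      have hf1sm : ContDiffOn ℝ (⊤ : ℕ∞) (deriv (fun x' => u x' t)) (Ioi 0) :=
        hfsm.deriv_of_isOpen isOpen_Ioi (by simp)
      have hdf : ∀ x ∈ Ioi (0:ℝ), HasDerivAt (fun x' => u x' t) (deriv (fun x' => u x' t) x) x :=
        fun x hx => ((hfsm.differentiableOn (by simp)).differentiableAt
          (isOpen_Ioi.mem_nhds hx)).hasDerivAt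
      have hdf1 : ∀ x ∈ Ioi (0:ℝ), HasDerivAt (deriv (fun x' => u x' t))
          (deriv (deriv (fun x' => u x' t)) x) x :=
        fun x hx => ((hf1sm.differentiableOn (by simp)).differentiableAt
          (isOpen_Ioi.mem_nhds hx)).hasDerivAt
      have hfpos : ∀ x ∈ Ioi (0:ℝ), 0 < u x t := fun x hx => hupos (x, t) ⟨hx, ht⟩
      -- derivative of the transformed profile on Ioi 0
      have hdw : ∀ x ∈ Ioi (0:ℝ), HasDerivAt (fun x' => x' ^ (4/n) * u x'⁻¹ t)
          (4/n * x ^ (4/n - 1) * u x⁻¹ t +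
            x ^ (4/n) * (deriv (fun x' => u x' t) x⁻¹ * -(x ^ 2)⁻¹)) x := by
        intro x hx
        have hx' : x ≠ 0 := ne_of_gt hx
        have h2 : HasDerivAt (fun x' : ℝ => u x'⁻¹ t)
            (deriv (fun x' => u x' t) x⁻¹ * -(x ^ 2)⁻¹) x :=
          (hdf _ (mem_Ioi.2 (inv_pos.2 hx))).comp x (hasDerivAt_inv hx')
        exact (Real.hasDerivAt_rpow_const (Or.inl hx')).mul h2
      have hderw := fun x hx => (hdw x hx).deriv
      have hEv : (fun x => (x ^ (4/n) * u x⁻¹ t) ^ n * deriv (fun x' => x' ^ (4/n) * u x'⁻¹ t) x)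
          =ᶠ[nhds y] fun x => (x ^ (4/n) * u x⁻¹ t) ^ n *
            (4/n * x ^ (4/n - 1) * u x⁻¹ t +
              x ^ (4/n) * (deriv (fun x' => u x' t) x⁻¹ * -(x ^ 2)⁻¹)) := by
        filter_upwards [isOpen_Ioi.mem_nhds (mem_Ioi.2 hy)] with x hx
        rw [hderw x hx]
      -- second-derivative data at y
      have hinv2 : HasDerivAt (fun x : ℝ => u x⁻¹ t)
          (deriv (fun x' => u x' t) y⁻¹ * -(y ^ 2)⁻¹) y :=
        (hdf _ hx0).comp y (hasDerivAt_inv hy')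
      have hinv1 : HasDerivAt (fun x : ℝ => deriv (fun x' => u x' t) x⁻¹)
          (deriv (deriv (fun x' => u x' t)) y⁻¹ * -(y ^ 2)⁻¹) y :=
        (hdf1 _ hx0).comp y (hasDerivAt_inv hy')
      have hsq : HasDerivAt (fun x : ℝ => -(x ^ 2)⁻¹) (-(-(↑2 * y ^ 1) / (y ^ 2) ^ 2)) y :=
        ((hasDerivAt_pow 2 y).inv (pow_ne_zero 2 hy')).neg
      have ht1 : HasDerivAt (fun x : ℝ => 4/n * x ^ (4/n - 1))
          (4/n * ((4/n - 1) * y ^ (4/n - 1 - 1))) y :=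
        HasDerivAt.const_mul (4/n) (Real.hasDerivAt_rpow_const (Or.inl hy'))
      have hrp' : HasDerivAt (fun x : ℝ => x ^ (4/n)) (4/n * y ^ (4/n - 1)) y :=
        Real.hasDerivAt_rpow_const (Or.inl hy')
      have hg1 := (ht1.mul hinv2).add (hrp'.mul (hinv1.mul hsq))
      have hWpos : 0 < y ^ (4/n) * u y⁻¹ t :=
        mul_pos (Real.rpow_pos_of_pos hy _) (hfpos _ hx0)
      have hWn := HasDerivAt.rpow_const (p := n) (hdw y (mem_Ioi.2 hy)) (Or.inl hWpos.ne')
      have hbig := hWn.mul hg1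
      have hC : HasDerivAt (fun x => u x t ^ n * deriv (fun x' => u x' t) x)
          (deriv (fun x' => u x' t) y⁻¹ * n * u y⁻¹ t ^ (n - 1) * deriv (fun x' => u x' t) y⁻¹ +
            u y⁻¹ t ^ n * deriv (deriv (fun x' => u x' t)) y⁻¹) y⁻¹ :=
        ((hdf _ hx0).rpow_const (Or.inl (hfpos _ hx0).ne')).mul (hdf1 _ hx0)
      have hPDE := hueq (y⁻¹, t) ⟨hx0, ht⟩
      simp only at hPDE
      have hbig' := hbig.deriv
      simp only [Pi.mul_def, Pi.add_def] at hbig'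
      rw [deriv_const_mul_field, hPDE, hC.deriv, hEv.deriv_eq, hbig',
        hderw y (mem_Ioi.2 hy)]
      beta_reduce
      -- algebraic cleanup
      have hapos : 0 < u y⁻¹ t := hfpos _ hx0
      have e1 : y ^ (4/n - 1) = y ^ (4/n) / y := by
        rw [Real.rpow_sub hy, Real.rpow_one]
      have e2 : y ^ (4/n - 1 - 1) = y ^ (4/n) / y / y := by
        rw [Real.rpow_sub hy, Real.rpow_sub hy, Real.rpow_one]
      have e3 : (y ^ (4/n)) ^ n = y ^ (4:ℕ) := by
        rw [← Real.rpow_natCast y 4, ← Real.rpow_mul hy.le, div_mul_cancel₀ _ hn0]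
        norm_num
      have e4 : (y ^ (4/n) * u y⁻¹ t) ^ n = y ^ (4:ℕ) * u y⁻¹ t ^ n := by
        rw [Real.mul_rpow (Real.rpow_nonneg hy.le _) hapos.le, e3]
      have e5 : (y ^ (4/n) * u y⁻¹ t) ^ (n - 1)
          = y ^ (4:ℕ) * u y⁻¹ t ^ n / (y ^ (4/n) * u y⁻¹ t) := by
        rw [Real.rpow_sub hWpos, e4, Real.rpow_one]
      have e6 : u y⁻¹ t ^ (n - 1) = u y⁻¹ t ^ n / u y⁻¹ t := by
        rw [Real.rpow_sub hapos, Real.rpow_one]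
      rw [e1, e2, e4, e5, e6, hμ]
      have hP : (0:ℝ) < y ^ (4/n) := Real.rpow_pos_of_pos hy _
      have hA : (0:ℝ) < u y⁻¹ t ^ n := Real.rpow_pos_of_pos hapos _
      set a := u y⁻¹ t with ha_def
      set b := deriv (fun x' => u x' t) y⁻¹ with hb_def
      set c := deriv (deriv fun x' => u x' t) y⁻¹ with hc_def
      set P := y ^ (4/n) with hP_def
      set A := a ^ n with hA_def
      field_simp
      ring
  · -- involution
    intro p hp1 hp2
    have h1 : p.1 ≠ 0 := ne_of_gt hp1
    simp only [Tn, inv_inv]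
    refine Prod.ext rfl ?_
    show (p.1⁻¹) ^ (-4/n) * (p.1 ^ (-4/n) * p.2) = p.2
    rw [← mul_assoc, ← Real.mul_rpow (inv_nonneg.2 hp1.le) hp1.le,
      inv_mul_cancel₀ h1, Real.one_rpow, one_mul]
end

section
/- Let n ∉ {-1,0} and μ = -(n+2)/n. If u is a solution of E(n,μ) on (0,∞) × I, then the function U(y,t) = e^{-2y/n} u(e^y, t) is a smooth positive solution of the Boussinesq equation of hydrology U_t = ∂_y(U^n U_y) + (2(n+1)/n) U^n U_y on ℝ × I. (This is the finite form of the transformation x' = ln x, t' = t, u' = x^{-2/n} u. In particular, for n = -2 one obtains a map from solutions of u_t = ∂_x(u^{-2}u_x) to solutions of E(-2,0).) -/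
open Real Set

lemma aux10 (n : ℝ) (hn0 : n ≠ 0) (f f' : ℝ → ℝ)
    (hfd : ∀ x ∈ Ioi (0:ℝ), HasDerivAt f (f' x) x)
    (hfpos : ∀ x ∈ Ioi (0:ℝ), 0 < f x)
    (y : ℝ) (g' : ℝ)
    (hg : HasDerivAt (fun x => f x ^ n * f' x) g' (exp y))
    (V : ℝ → ℝ) (hV : ∀ y', V y' = exp (-2 * y' / n) * f (exp y')) :
    deriv (fun y' => V y' ^ n * deriv V y') y + 2 * (n + 1) / n * V y ^ n * deriv V y
      = exp (-2 * y / n) * (g' + -(n + 2) / n / exp y * f (exp y) ^ n * f' (exp y)) := by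
  set c : ℝ := -2 / n with hc
  have hxmem : ∀ y' : ℝ, exp y' ∈ Ioi (0:ℝ) := fun y' => exp_pos y'
  have hb : ∀ y' : ℝ, -2 * y' / n = c * y' := by intro y'; rw [hc]; ring
  -- derivative of V everywhere
  have hVd : ∀ y' : ℝ, HasDerivAt V
      (exp (c * y') * (c * f (exp y') + exp y' * f' (exp y'))) y' := by
    intro y'
    have hlin : HasDerivAt (fun z : ℝ => c * z) c y' := by
      simpa using (hasDerivAt_id y').const_mul c
    have h1 : HasDerivAt (fun z : ℝ => exp (c * z)) (exp (c * y') * c) y' := hlin.exp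
    have h2 : HasDerivAt (fun z : ℝ => f (exp z)) (f' (exp y') * exp y') y' :=
      (hfd (exp y') (hxmem y')).comp y' (hasDerivAt_exp y')
    have h3 : HasDerivAt (fun z : ℝ => exp (c * z) * f (exp z)) _ y' := h1.mul h2
    have h4 : V = fun z => exp (c * z) * f (exp z) := by
      funext z; rw [hV z, hb z]
    rw [h4]; convert h3 using 1; ring
  have hVderiv : deriv V = fun y' =>
      exp (c * y') * (c * f (exp y') + exp y' * f' (exp y')) :=
    funext fun y' => (hVd y').deriv
  -- rewrite the flux function
  have hΦ : (fun y' => V y' ^ n * deriv V y') = fun y' =>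
      exp (c * (n + 1) * y') *
        (c * f (exp y') ^ (n + 1) + exp y' * (f (exp y') ^ n * f' (exp y'))) := by
    funext y'
    have hfp := hfpos (exp y') (hxmem y')
    rw [hVderiv, hV y', hb y', Real.mul_rpow (exp_nonneg _) hfp.le,
      Real.rpow_add_one hfp.ne' n]
    have he1 : exp (c * y') ^ n = exp (c * y' * n) := (Real.exp_mul _ _).symm
    have he2 : exp (c * (n + 1) * y') = exp (c * y' * n) * exp (c * y') := by
      rw [← exp_add]; congr 1; ring
    rw [he1, he2]; ring
  rw [hΦ]
  -- derivative of the flux function at y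
  have hfX := hfd (exp y) (hxmem y)
  have hfpX := hfpos (exp y) (hxmem y)
  have hlin : HasDerivAt (fun z : ℝ => c * (n + 1) * z) (c * (n + 1)) y := by
    simpa using (hasDerivAt_id y).const_mul (c * (n + 1))
  have h1 : HasDerivAt (fun z : ℝ => exp (c * (n + 1) * z))
      (exp (c * (n + 1) * y) * (c * (n + 1))) y := hlin.exp
  have hcomp : HasDerivAt (fun y' : ℝ => f (exp y')) (f' (exp y) * exp y) y :=
    hfX.comp y (hasDerivAt_exp y)
  have hpow : HasDerivAt (fun y' : ℝ => f (exp y') ^ (n + 1))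
      (f' (exp y) * exp y * (n + 1) * f (exp y) ^ (n + 1 - 1)) y :=
    hcomp.rpow_const (Or.inl hfpX.ne')
  rw [add_sub_cancel_right] at hpow
  have hgcomp : HasDerivAt (fun y' : ℝ => f (exp y') ^ n * f' (exp y'))
      (g' * exp y) y := hg.comp y (hasDerivAt_exp y)
  have hmul2 : HasDerivAt (fun y' : ℝ => exp y' * (f (exp y') ^ n * f' (exp y')))
      (exp y * (f (exp y) ^ n * f' (exp y)) + exp y * (g' * exp y)) y :=
    (hasDerivAt_exp y).mul hgcomp
  have hin : HasDerivAt (fun y' : ℝ =>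
      c * f (exp y') ^ (n + 1) + exp y' * (f (exp y') ^ n * f' (exp y')))
      (c * (f' (exp y) * exp y * (n + 1) * f (exp y) ^ n) +
        (exp y * (f (exp y) ^ n * f' (exp y)) + exp y * (g' * exp y))) y :=
    (hpow.const_mul c).add hmul2
  have hΦd : HasDerivAt (fun y' : ℝ => exp (c * (n + 1) * y') *
      (c * f (exp y') ^ (n + 1) + exp y' * (f (exp y') ^ n * f' (exp y'))))
      (exp (c * (n + 1) * y) * (c * (n + 1)) *
          (c * f (exp y) ^ (n + 1) + exp y * (f (exp y) ^ n * f' (exp y))) +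
        exp (c * (n + 1) * y) *
          (c * (f' (exp y) * exp y * (n + 1) * f (exp y) ^ n) +
            (exp y * (f (exp y) ^ n * f' (exp y)) + exp y * (g' * exp y)))) y := h1.mul hin
  rw [hΦd.deriv, hV y, hb y, (hVd y).deriv,
    Real.mul_rpow (exp_nonneg _) hfpX.le, Real.rpow_add_one hfpX.ne' n]
  have he1 : exp (c * y) ^ n = exp (c * y * n) := (Real.exp_mul _ _).symm
  have he3 : exp (c * y * n) = (exp y * exp y)⁻¹ := by
    have h : c * y * n = -(y + y) := by rw [hc]; field_simp; ring
    rw [h, exp_neg, exp_add]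
  have he4 : exp (c * (n + 1) * y) = exp (c * y) * (exp y * exp y)⁻¹ := by
    have h : c * (n + 1) * y = c * y + -(y + y) := by rw [hc]; field_simp; ring
    rw [h, exp_add, exp_neg, exp_add]
  rw [he1, he3, he4, hc]
  have hX : exp y ≠ 0 := (exp_pos y).ne'
  field_simp
  ring


/-- for `n ∉ {-1,0}` and `μ = -(n+2)/n`, if `u` solves `E(n,μ)` on
`(0,∞) × I`, then `U(y,t) = e^{-2y/n} u(e^y, t)` is a smooth positive solution of
the Boussinesq equation of hydrology `U_t = ∂_y(Uⁿ U_y) + (2(n+1)/n) Uⁿ U_y`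
on `ℝ × I` (the finite form of `x' = ln x, t' = t, u' = x^{-2/n} u`). -/
theorem stmt10 (n : ℝ) (hn1 : n ≠ -1) (hn0 : n ≠ 0)
    (μ : ℝ) (hμ : μ = -(n + 2) / n)
    (I : Set ℝ) (hIopen : IsOpen I) (hIconn : I.OrdConnected)
    (u : ℝ → ℝ → ℝ) (hu : IsSolE n μ u (Ioi 0 ×ˢ I))
    (U : ℝ → ℝ → ℝ) (hU : ∀ y t : ℝ, U y t = exp (-2 * y / n) * u (exp y) t) :
    ContDiffOn ℝ (⊤ : ℕ∞) (fun p : ℝ × ℝ => U p.1 p.2) (univ ×ˢ I) ∧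
    (∀ p ∈ (univ ×ˢ I : Set (ℝ × ℝ)), 0 < U p.1 p.2) ∧
    ∀ p ∈ (univ ×ˢ I : Set (ℝ × ℝ)),
      deriv (fun t => U p.1 t) p.2 =
        deriv (fun y => U y p.2 ^ n * deriv (fun y' => U y' p.2) y) p.1 +
          (2 * (n + 1) / n) * U p.1 p.2 ^ n * deriv (fun y => U y p.2) p.1 := by
  obtain ⟨huC, hupos, hupde⟩ := hu
  have hmap : ∀ p : ℝ × ℝ, p ∈ (univ ×ˢ I : Set (ℝ × ℝ)) →
      ((exp p.1, p.2) : ℝ × ℝ) ∈ (Ioi 0 ×ˢ I : Set (ℝ × ℝ)) :=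
    fun p hp => ⟨exp_pos _, hp.2⟩
  refine ⟨?_, ?_, ?_⟩
  · have hUeq : (fun p : ℝ × ℝ => U p.1 p.2)
        = fun p : ℝ × ℝ => exp (-2 * p.1 / n) * u (exp p.1) p.2 :=
      funext fun p => hU p.1 p.2
    rw [hUeq]
    have h1 : ContDiff ℝ (⊤ : ℕ∞) (fun p : ℝ × ℝ => (exp p.1, p.2)) :=
      (contDiff_fst.exp).prodMk contDiff_snd
    have h2 : ContDiffOn ℝ (⊤ : ℕ∞) (fun p : ℝ × ℝ => u (exp p.1) p.2) (univ ×ˢ I) :=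
      huC.comp h1.contDiffOn hmap
    have h3 : ContDiff ℝ (⊤ : ℕ∞) (fun p : ℝ × ℝ => exp (-2 * p.1 / n)) :=
      ((contDiff_const.mul contDiff_fst).div_const n : ContDiff ℝ (⊤ : ℕ∞) (fun p : ℝ × ℝ => (-2) * p.1 / n)).exp
    exact h3.contDiffOn.mul h2
  · intro p hp
    rw [hU]
    exact mul_pos (exp_pos _) (hupos _ (hmap p hp))
  · rintro ⟨y, t⟩ hp
    have ht : t ∈ I := hp.2
    have hx₀ : (0:ℝ) < exp y := exp_pos y
    have hfC : ContDiffOn ℝ (⊤ : ℕ∞) (fun x => u x t) (Ioi 0) := by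
      have h1 : ContDiff ℝ (⊤ : ℕ∞) (fun x : ℝ => (x, t)) := contDiff_id.prodMk contDiff_const
      exact huC.comp h1.contDiffOn (fun x hx => ⟨hx, ht⟩)
    have hfd : ∀ x ∈ Ioi (0:ℝ),
        HasDerivAt (fun x => u x t) (deriv (fun x => u x t) x) x := fun x hx =>
      (((hfC.contDiffAt (isOpen_Ioi.mem_nhds hx)).differentiableAt (by simp))).hasDerivAt
    have hfpos : ∀ x ∈ Ioi (0:ℝ), 0 < u x t := fun x hx => hupos (x, t) ⟨hx, ht⟩
    have hf'C : ContDiffOn ℝ (⊤ : ℕ∞) (deriv (fun x => u x t)) (Ioi 0) :=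
      hfC.deriv_of_isOpen isOpen_Ioi (by simp)
    have hgdiff : DifferentiableAt ℝ
        (fun x => u x t ^ n * deriv (fun x' => u x' t) x) (exp y) := by
      have h1 : ContDiffAt ℝ (⊤ : ℕ∞) (fun x => u x t) (exp y) :=
        hfC.contDiffAt (isOpen_Ioi.mem_nhds hx₀)
      have h2 : ContDiffAt ℝ (⊤ : ℕ∞) (fun x => u x t ^ n) (exp y) :=
        ContDiffAt.comp (exp y)
          (Real.contDiffAt_rpow_const_of_ne (hfpos (exp y) hx₀).ne') h1
      have h3 : ContDiffAt ℝ (⊤ : ℕ∞) (deriv (fun x => u x t)) (exp y) :=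
        hf'C.contDiffAt (isOpen_Ioi.mem_nhds hx₀)
      exact (h2.mul h3).differentiableAt (by simp)
    have hgd : HasDerivAt (fun x => u x t ^ n * deriv (fun x' => u x' t) x)
        (deriv (fun x => u x t ^ n * deriv (fun x' => u x' t) x) (exp y)) (exp y) :=
      hgdiff.hasDerivAt
    have key := aux10 n hn0 (fun x => u x t) (deriv (fun x => u x t)) hfd hfpos y _ hgd
      (fun y' => U y' t) (fun y' => hU y' t)
    show deriv (fun t' => U y t') t = _
    rw [key]
    have hUt : (fun t' => U y t') = fun t' => exp (-2 * y / n) * u (exp y) t' :=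
      funext fun t' => hU y t'
    have htd : DifferentiableAt ℝ (fun t' => u (exp y) t') t := by
      have h1 : ContDiff ℝ (⊤ : ℕ∞) (fun t' : ℝ => ((exp y : ℝ), t')) :=
        contDiff_const.prodMk contDiff_id
      have h2 : ContDiffOn ℝ (⊤ : ℕ∞) (fun t' => u (exp y) t') I :=
        huC.comp h1.contDiffOn (fun t' ht' => ⟨hx₀, ht'⟩)
      exact ((h2.contDiffAt (hIopen.mem_nhds ht)).differentiableAt (by simp))
    rw [hUt, deriv_const_mul _ htd]
    have hpde := hupde (exp y, t) ⟨hx₀, ht⟩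
    dsimp only at hpde
    rw [hpde, hμ]
end

section
/- Let n ∉ {-1,0} and μ ∈ ℝ with μn + n + 2 ≠ 0. Set β = (μn+n+2)/(2n+2) and λ = (3n+4 - nμ - 2μ)/(μn+n+2). Let u be a solution of E(n,μ) on (0,∞) × (0,∞). Then the function U defined by U(y,s) = x^{(μ-1)/(n+1)} u(x, e^s), where x = (β y e^{s/2})^{1/β}, is a smooth positive solution of U_s = ∂_y(U^n U_y) + (λ U^n / y + y/2) U_y on the set of (y,s) with β y > 0. (This is the finite form of the transformation x' = ((2n+2)/(μn+n+2)) x^{(μn+n+2)/(2n+2)}/√t, t' = ln t, u' = x^{(μ-1)/(n+1)} u.) -/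
open Real Set

set_option maxHeartbeats 4000000

/-- for `n ∉ {-1,0}`, `μn + n + 2 ≠ 0`, `β = (μn+n+2)/(2n+2)` and
`λ = (3n+4-nμ-2μ)/(μn+n+2)`, if `u` solves `E(n,μ)` on `(0,∞) × (0,∞)`, then
`U(y,s) = x^{(μ-1)/(n+1)} u(x, e^s)` with `x = (β y e^{s/2})^{1/β}` is a smooth
positive solution of `U_s = ∂_y(Uⁿ U_y) + (λ Uⁿ/y + y/2) U_y` on `{(y,s) : βy > 0}`
(the finite form of `x' = ((2n+2)/(μn+n+2)) x^{(μn+n+2)/(2n+2)}/√t, t' = ln t,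
u' = x^{(μ-1)/(n+1)} u`). -/
theorem stmt11 (n : ℝ) (hn1 : n ≠ -1) (hn0 : n ≠ 0) (μ : ℝ)
    (hμ : μ * n + n + 2 ≠ 0)
    (β lam : ℝ) (hβ : β = (μ * n + n + 2) / (2 * n + 2))
    (hlam : lam = (3 * n + 4 - n * μ - 2 * μ) / (μ * n + n + 2))
    (u : ℝ → ℝ → ℝ) (hu : IsSolE n μ u (Ioi 0 ×ˢ Ioi 0))
    (U : ℝ → ℝ → ℝ)
    (hU : ∀ y s : ℝ, U y s =
      ((β * y * exp (s / 2)) ^ (1 / β)) ^ ((μ - 1) / (n + 1)) *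
        u ((β * y * exp (s / 2)) ^ (1 / β)) (exp s)) :
    ContDiffOn ℝ (⊤ : ℕ∞) (fun p : ℝ × ℝ => U p.1 p.2) {p : ℝ × ℝ | 0 < β * p.1} ∧
    (∀ p ∈ {p : ℝ × ℝ | 0 < β * p.1}, 0 < U p.1 p.2) ∧
    ∀ p ∈ {p : ℝ × ℝ | 0 < β * p.1},
      deriv (fun s => U p.1 s) p.2 =
        deriv (fun y => U y p.2 ^ n * deriv (fun y' => U y' p.2) y) p.1 +
          (lam * U p.1 p.2 ^ n / p.1 + p.1 / 2) * deriv (fun y => U y p.2) p.1 := by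
  obtain ⟨husm, hupos, hueq⟩ := hu
  have hpart12 : ContDiffOn ℝ (⊤ : ℕ∞) (fun p : ℝ × ℝ => U p.1 p.2) {p : ℝ × ℝ | 0 < β * p.1} ∧
      (∀ p ∈ {p : ℝ × ℝ | 0 < β * p.1}, 0 < U p.1 p.2) := by
    have hn1' : n + 1 ≠ 0 := fun h => hn1 (by linarith)
    have h2n : (2:ℝ) * n + 2 ≠ 0 := fun h => hn1 (by linarith)
    have hβ0 : β ≠ 0 := by rw [hβ]; exact div_ne_zero hμ h2n
    have hDopen : IsOpen ((Ioi 0 ×ˢ Ioi 0 : Set (ℝ×ℝ))) := isOpen_Ioi.prod isOpen_Ioi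
    constructor
    · intro p hp
      have hp' : 0 < β * p.1 := hp
      have hbyc : 0 < β * p.1 * exp (p.2 / 2) := mul_pos hp' (exp_pos _)
      have hxpos : 0 < (β * p.1 * exp (p.2/2)) ^ (1/β) := Real.rpow_pos_of_pos hbyc _
      have hmem : ((β * p.1 * exp (p.2 / 2)) ^ (1/β), exp p.2) ∈ (Ioi 0 ×ˢ Ioi 0 : Set (ℝ×ℝ)) :=
        Set.mem_prod.mpr ⟨Set.mem_Ioi.mpr hxpos, Set.mem_Ioi.mpr (exp_pos _)⟩
      have hfun : (fun q : ℝ × ℝ => U q.1 q.2) = fun q : ℝ × ℝ =>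
          ((β * q.1 * exp (q.2 / 2)) ^ (1 / β)) ^ ((μ - 1) / (n + 1)) *
          u ((β * q.1 * exp (q.2 / 2)) ^ (1 / β)) (exp q.2) := funext fun q => hU q.1 q.2
      rw [hfun]
      have hbase : ContDiff ℝ (⊤ : ℕ∞) (fun q : ℝ × ℝ => β * q.1 * exp (q.2 / 2)) :=
        ((contDiff_const.mul contDiff_fst).mul ((contDiff_snd.div_const 2).exp))
      have hxmap : ContDiffAt ℝ (⊤ : ℕ∞) (fun q : ℝ × ℝ => (β * q.1 * exp (q.2 / 2)) ^ (1/β)) p :=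
        by have := (Real.contDiffAt_rpow_const_of_ne (p := 1/β) (ne_of_gt hbyc)).comp p hbase.contDiffAt; exact this
      have hpow : ContDiffAt ℝ (⊤ : ℕ∞) (fun q : ℝ × ℝ =>
          ((β * q.1 * exp (q.2 / 2)) ^ (1/β)) ^ ((μ-1)/(n+1))) p :=
        by have := (Real.contDiffAt_rpow_const_of_ne (p := (μ-1)/(n+1)) (ne_of_gt hxpos)).comp p hxmap; exact this
      have hpair : ContDiffAt ℝ (⊤ : ℕ∞) (fun q : ℝ × ℝ =>
          ((β * q.1 * exp (q.2 / 2)) ^ (1/β), exp q.2)) p :=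
        hxmap.prodMk (contDiff_snd.exp).contDiffAt
      have huc : ContDiffAt ℝ (⊤ : ℕ∞) (fun q : ℝ × ℝ => u q.1 q.2)
          (((β * p.1 * exp (p.2 / 2)) ^ (1/β), exp p.2)) :=
        husm.contDiffAt (hDopen.mem_nhds hmem)
      exact (hpow.mul (huc.comp p hpair)).contDiffWithinAt
    · intro p hp
      have hp' : 0 < β * p.1 := hp
      have hbyc : 0 < β * p.1 * exp (p.2 / 2) := mul_pos hp' (exp_pos _)
      have hxpos : 0 < (β * p.1 * exp (p.2/2)) ^ (1/β) := Real.rpow_pos_of_pos hbyc _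
      have hmem : ((β * p.1 * exp (p.2 / 2)) ^ (1/β), exp p.2) ∈ (Ioi 0 ×ˢ Ioi 0 : Set (ℝ×ℝ)) :=
        Set.mem_prod.mpr ⟨Set.mem_Ioi.mpr hxpos, Set.mem_Ioi.mpr (exp_pos _)⟩
      rw [hU p.1 p.2]
      exact mul_pos (Real.rpow_pos_of_pos hxpos _) (hupos _ hmem)

  refine ⟨hpart12.1, hpart12.2, ?_⟩
  rintro ⟨y, s⟩ hp
  simp only [Set.mem_setOf_eq] at hp
  show deriv (fun s => U y s) s =
        deriv (fun z => U z s ^ n * deriv (fun y' => U y' s) z) y +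
          (lam * U y s ^ n / y + y / 2) * deriv (fun z => U z s) y
  have hn1' : n + 1 ≠ 0 := fun h => hn1 (by linarith)
  have h2n : (2:ℝ) * n + 2 ≠ 0 := fun h => hn1 (by linarith)
  have hβ0 : β ≠ 0 := by rw [hβ]; exact div_ne_zero hμ h2n
  have hDopen : IsOpen ((Ioi 0 ×ˢ Ioi 0 : Set (ℝ×ℝ))) := isOpen_Ioi.prod isOpen_Ioi
  set a : ℝ := (μ - 1) / (n + 1) with ha
  set c : ℝ := exp (s/2) with hc
  set t : ℝ := exp s with htdef
  have hcpos : 0 < c := exp_pos _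
  have htpos : 0 < t := exp_pos _
  have htc : t = c * c := by rw [htdef, hc, ← Real.exp_add]; norm_num
  set v : ℝ → ℝ := fun z => u z t with hv
  have hv' : ∀ z, u z t = v z := fun z => rfl
  have hvsm : ContDiffOn ℝ (⊤ : ℕ∞) v (Ioi 0) := by
    have h1 : ContDiff ℝ (⊤ : ℕ∞) (fun z : ℝ => (z, t)) := contDiff_id.prodMk contDiff_const
    exact husm.comp h1.contDiffOn
      (fun z hz => Set.mem_prod.mpr ⟨hz, Set.mem_Ioi.mpr htpos⟩)
  have hu1sm : ContDiffOn ℝ (⊤ : ℕ∞) (deriv v) (Ioi 0) := hvsm.deriv_of_isOpen isOpen_Ioi (by simp)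
  have hvdiff : ∀ z : ℝ, 0 < z → DifferentiableAt ℝ v z := fun z hz =>
    (hvsm.contDiffAt (isOpen_Ioi.mem_nhds hz)).differentiableAt (by simp)
  have hu1diff : ∀ z : ℝ, 0 < z → DifferentiableAt ℝ (deriv v) z := fun z hz =>
    (hu1sm.contDiffAt (isOpen_Ioi.mem_nhds hz)).differentiableAt (by simp)
  have hvpos : ∀ z : ℝ, 0 < z → 0 < v z := fun z hz =>
    hupos (z, t) (Set.mem_prod.mpr ⟨hz, Set.mem_Ioi.mpr htpos⟩)
  -- the space map and its derivative
  have hg : ∀ y' : ℝ, 0 < β * y' → HasDerivAt (fun z : ℝ => (β * z * c) ^ (1/β))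
      (c * ((β * y' * c) ^ (1/β)) ^ (1 - β)) y' := by
    intro y' hy'
    have hbyc : 0 < β * y' * c := mul_pos hy' hcpos
    have hlin : HasDerivAt (fun z : ℝ => β * z * c) (β * c) y' := by
      have := ((hasDerivAt_id y').const_mul β).mul_const c
      simpa using this
    have h2 := hlin.rpow_const (p := 1/β) (Or.inl (ne_of_gt hbyc))
    convert h2 using 1
    rw [← Real.rpow_mul hbyc.le, show (1/β) * (1-β) = 1/β - 1 by field_simp]
    field_simp
  -- U as a function of y at fixed s
  have hUyfun : (fun z : ℝ => U z s) = fun z => ((β*z*c)^(1/β))^a * v ((β*z*c)^(1/β)) := by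
    funext z
    rw [hU z s, hv' ((β*z*c)^(1/β))]
  have hUy : ∀ y' : ℝ, 0 < β * y' → HasDerivAt (fun z : ℝ => U z s)
      (c * ((β*y'*c)^(1/β))^(1-β) *
        (a * ((β*y'*c)^(1/β))^(a-1) * v ((β*y'*c)^(1/β))
          + ((β*y'*c)^(1/β))^a * deriv v ((β*y'*c)^(1/β)))) y' := by
    intro y' hy'
    have hbyc' : 0 < β*y'*c := mul_pos hy' hcpos
    have hX : 0 < (β*y'*c)^(1/β) := Real.rpow_pos_of_pos hbyc' _
    have hF : HasDerivAt (fun z : ℝ => z ^ a * v z)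
        (a * ((β*y'*c)^(1/β))^(a-1) * v ((β*y'*c)^(1/β))
          + ((β*y'*c)^(1/β))^a * deriv v ((β*y'*c)^(1/β))) ((β*y'*c)^(1/β)) := by
      have h1 := Real.hasDerivAt_rpow_const (x := (β*y'*c)^(1/β)) (p := a)
        (Or.inl (ne_of_gt hX))
      have h2 := (hvdiff _ hX).hasDerivAt
      have := h1.mul h2
      exact this.congr_deriv (by ring)
    rw [hUyfun]
    have := hF.comp y' (hg y' hy')
    exact this.congr_deriv (by ring)
  have hderivU : ∀ y' : ℝ, 0 < β * y' → deriv (fun z : ℝ => U z s) y'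
      = c * ((β*y'*c)^(1/β))^(1-β) * (a * ((β*y'*c)^(1/β))^(a-1) * v ((β*y'*c)^(1/β))
          + ((β*y'*c)^(1/β))^a * deriv v ((β*y'*c)^(1/β))) :=
    fun y' hy' => (hUy y' hy').deriv

  -- key scalar identities
  have hab2 : a * n = 2*β - 2 := by rw [ha, hβ]; field_simp; ring
  have hμa : μ = a*n + a + 1 := by rw [ha]; field_simp; ring
  have hlamβ : lam * β = 1 - μ + β := by rw [hlam, hβ]; field_simp; rw [mul_div_cancel_right₀ _ (by intro h; apply hμ; linarith)]; ring
  have hlam2 : lam = (β - a*n - a) / β := by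
    rw [eq_div_iff hβ0, hlamβ, hμa]; ring
  -- the point x
  have hbyc : 0 < β * y * c := mul_pos hp hcpos
  set x : ℝ := (β * y * c) ^ (1/β) with hxd
  have hxpos : 0 < x := Real.rpow_pos_of_pos hbyc _
  have hxne : x ≠ 0 := ne_of_gt hxpos
  have hxB : x ^ β = β * y * c := by
    rw [hxd, ← Real.rpow_mul hbyc.le, one_div, inv_mul_cancel₀ hβ0, Real.rpow_one]
  have hy : y = x ^ β / (β * c) := by
    rw [hxB]; field_simp
  -- PDE at (x, t)
  -- differentiability of the flux
  have hWdiff : DifferentiableAt ℝ (fun z => v z ^ n * deriv v z) x := by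
    have h1 : DifferentiableAt ℝ (fun z => v z ^ n) x :=
      (hvdiff x hxpos).rpow_const (Or.inl (ne_of_gt (hvpos x hxpos)))
    exact h1.mul (hu1diff x hxpos)
  -- derivative of the transformed flux function H at x
  have h1 : HasDerivAt (fun z : ℝ => z^(a+β-2)) ((a+β-2) * x^(a+β-2-1)) x :=
    Real.hasDerivAt_rpow_const (Or.inl hxne)
  have h2 : HasDerivAt (fun z : ℝ => v z ^ (n+1)) (deriv v x * (n+1) * v x ^ (n+1-1)) x :=
    (hvdiff x hxpos).hasDerivAt.rpow_const (Or.inl (ne_of_gt (hvpos x hxpos)))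
  have h3 : HasDerivAt (fun z : ℝ => z^(a+β-1)) ((a+β-1) * x^(a+β-1-1)) x :=
    Real.hasDerivAt_rpow_const (Or.inl hxne)
  have hH := ((((h1.const_mul a).mul h2).add (h3.mul hWdiff.hasDerivAt)).const_mul c)
  have hgx := hg y hp
  rw [← hxd] at hgx
  have hcomp := hH.comp y hgx
  have hopen : IsOpen {z : ℝ | 0 < β * z} :=
    isOpen_lt continuous_const (continuous_const.mul continuous_id)
  have hEE : (fun z : ℝ => U z s ^ n * deriv (fun y'' : ℝ => U y'' s) z)
      =ᶠ[nhds y] ((fun z : ℝ => c * (a * z^(a+β-2) * v z ^ (n+1)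
          + z^(a+β-1) * (v z ^ n * deriv v z)))
        ∘ (fun z : ℝ => (β * z * c) ^ (1/β))) := by
    filter_upwards [hopen.mem_nhds hp] with z hz
    have hbyc' : 0 < β*z*c := mul_pos hz hcpos
    have hX : 0 < (β*z*c)^(1/β) := Real.rpow_pos_of_pos hbyc' _
    have hVX : 0 < v ((β*z*c)^(1/β)) := hvpos _ hX
    rw [hderivU z hz, hU z s, hv' ((β*z*c)^(1/β)), Function.comp_apply]
    set X := (β*z*c)^(1/β) with hXd
    have e1 : (X^a * v X)^n = X^(a*n) * v X^n := by
      rw [Real.mul_rpow (Real.rpow_pos_of_pos hX a).le hVX.le, ← Real.rpow_mul hX.le]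
    have e2 : v X ^ (n+1) = v X ^ n * v X := by
      rw [Real.rpow_add hVX, Real.rpow_one]
    have m1 : X^(a+β-2) = X^(a*n) * (X^(1-β) * X^(a-1)) := by
      rw [← Real.rpow_add hX, ← Real.rpow_add hX]; congr 1; linarith [hab2]
    have m2 : X^(a+β-1) = X^(a*n) * (X^(1-β) * X^a) := by
      rw [← Real.rpow_add hX, ← Real.rpow_add hX]; congr 1; linarith [hab2]
    rw [e1, e2, m1, m2]; ring
  have hfluxderiv := hEE.deriv_eq.trans hcomp.deriv

  -- ===== s-derivative =====
  have hKpos : 0 < (β*y)^((1:ℝ)/β) := Real.rpow_pos_of_pos hp _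
  have hsplit : ∀ s' : ℝ, (β*y*exp (s'/2))^(1/β) = (β*y)^(1/β) * exp (1/(2*β) * s') := by
    intro s'
    rw [Real.mul_rpow hp.le (exp_nonneg _), ← Real.exp_mul]
    congr 1; ring
  have hxsplit : x = (β*y)^(1/β) * exp (1/(2*β) * s) := by
    rw [hxd, hc]; exact hsplit s
  have hKa : ((β*y)^(1/β))^a * exp (1/(2*β) * s * a) = x ^ a := by
    rw [hxsplit, Real.mul_rpow hKpos.le (exp_nonneg _), ← Real.exp_mul]
  have hUsfun : (fun s' : ℝ => U y s') = fun s' =>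
      ((β*y)^(1/β))^a * exp (1/(2*β) * s' * a)
        * u ((β*y)^(1/β) * exp (1/(2*β) * s')) (exp s') := by
    funext s'
    rw [hU y s', hsplit s', Real.mul_rpow hKpos.le (exp_nonneg _), ← Real.exp_mul]
  -- fderiv of u at (x,t)
  have hud : DifferentiableAt ℝ (fun p : ℝ×ℝ => u p.1 p.2) (x, t) :=
    (husm.contDiffAt (hDopen.mem_nhds
      (Set.mem_prod.mpr ⟨Set.mem_Ioi.mpr hxpos, Set.mem_Ioi.mpr htpos⟩))).differentiableAt (by simp)
  have hF := hud.hasFDerivAt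
  set F := fderiv ℝ (fun p : ℝ×ℝ => u p.1 p.2) (x, t) with hFd
  have hFlin : ∀ p q : ℝ, F (p, q) = p * F (1,0) + q * F (0,1) := by
    intro p q
    have hrep : ((p,q) : ℝ × ℝ) = p • ((1:ℝ),(0:ℝ)) + q • ((0:ℝ),(1:ℝ)) := by
      simp [Prod.ext_iff]
    rw [hrep, map_add, map_smul, map_smul, smul_eq_mul, smul_eq_mul]
  have h10 : HasDerivAt v (F (1,0)) x := by
    have hline : HasDerivAt (fun z : ℝ => (z, t)) ((1:ℝ),(0:ℝ)) x :=
      (hasDerivAt_id x).prodMk (hasDerivAt_const x t)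
    exact hF.comp_hasDerivAt x hline
  have h01 : HasDerivAt (fun t' => u x t') (F (0,1)) t := by
    have hline : HasDerivAt (fun t' : ℝ => (x, t')) ((0:ℝ),(1:ℝ)) t :=
      (hasDerivAt_const t x).prodMk (hasDerivAt_id t)
    exact hF.comp_hasDerivAt t hline
  have hUs : HasDerivAt (fun s' : ℝ => U y s')
      (x^a*(a/(2*β)) * v x + x^a * (x * (1/(2*β)) * F (1,0) + t * F (0,1))) s := by
    rw [hUsfun]
    have harg : HasDerivAt (fun s' : ℝ => 1/(2*β) * s' * a) (1/(2*β) * a) s := by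
      simpa using ((hasDerivAt_id s).const_mul (1/(2*β))).mul_const a
    have eE := harg.exp
    have harg2 : HasDerivAt (fun s' : ℝ => 1/(2*β) * s') (1/(2*β)) s := by
      simpa using (hasDerivAt_id s).const_mul (1/(2*β))
    have eE2 := harg2.exp
    have ecurve : HasDerivAt (fun s' : ℝ => ((β*y)^(1/β) * exp (1/(2*β) * s'), exp s'))
        (((β*y)^(1/β) * (exp (1/(2*β) * s) * (1/(2*β)))), exp s) s :=
      (eE2.const_mul _).prodMk (Real.hasDerivAt_exp s)
    have hGs' : ((β*y)^(1/β) * exp (1/(2*β) * s), exp s) = (x, t) := by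
      rw [← hxsplit, ← htdef]
    have hF' := hF
    rw [← hGs'] at hF'
    have hcompS := hF'.comp_hasDerivAt s ecurve
    have hprod := (eE.const_mul (((β*y)^(1/β))^a)).mul hcompS
    refine hprod.congr_deriv ?_
    simp only [Function.comp]
    have hxx : (β*y)^(1/β) * (exp (1/(2*β) * s) * (1/(2*β))) = x * (1/(2*β)) := by
      rw [hxsplit]; ring
    rw [hxx, ← hxsplit, ← htdef, hv' x, hFlin (x * (1/(2*β))) t]
    linear_combination (a/(2*β) * v x + x * (1/(2*β)) * F (1,0) + t * F (0,1)) * hKa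

  -- ===== final assembly =====
  have hpde := hueq (x, t) (Set.mem_prod.mpr ⟨Set.mem_Ioi.mpr hxpos, Set.mem_Ioi.mpr htpos⟩)
  simp only [hv'] at hpde
  have hF01 : F (0,1) = deriv (fun z => v z ^ n * deriv v z) x
      + μ/x * v x ^ n * deriv v x := h01.deriv.symm.trans hpde
  have hF10 : F (1,0) = deriv v x := h10.deriv.symm
  have hu0pos : 0 < v x := hvpos x hxpos
  have hyne : y ≠ 0 := by
    intro h; rw [h, mul_zero] at hp; exact lt_irrefl 0 hp
  have han2 : a*n + 2 ≠ 0 := by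
    have h2 : a*n + 2 = 2*β := by linarith [hab2]
    rw [h2]; exact mul_ne_zero two_ne_zero hβ0
  have hβa : β = (a*n+2)/2 := by linarith [hab2]
  rw [hUs.deriv, hfluxderiv, hderivU y hp, hU y s, ← hc, ← htdef, ← hxd, hv' x, hF01, hF10]
  have radd : ∀ p q : ℝ, x^(p+q) = x^p * x^q := fun p q => Real.rpow_add hxpos p q
  have rsub : ∀ p q : ℝ, x^(p-q) = x^p / x^q := fun p q => Real.rpow_sub hxpos p q
  have rv1 : v x^(n+1) = v x^n * v x := by rw [Real.rpow_add hu0pos, Real.rpow_one]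
  have rv2 : v x^(n+1-1) = v x^n := by norm_num
  have rU : (x^a * v x)^n = x^β*x^β/(x*x) * v x^n := by
    rw [Real.mul_rpow (Real.rpow_pos_of_pos hxpos a).le hu0pos.le, ← Real.rpow_mul hxpos.le,
        show a*n = β+β-(1+1) by linarith [hab2], rsub, radd, radd]
    simp only [Real.rpow_one]
  have r1 : x^(a-1) = x^a / x := by rw [rsub, Real.rpow_one]
  have r2 : x^(1-β) = x / x^β := by rw [rsub, Real.rpow_one]
  have r3 : x^(a+β-2) = x^a*x^β/(x*x) := by
    rw [show a+β-2 = a+β-(1+1) by ring, rsub, radd, radd]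
    simp only [Real.rpow_one]
  have r4 : x^(a+β-2-1) = x^a*x^β/(x*x*x) := by
    rw [show a+β-2-1 = a+β-(1+1+1) by ring, rsub, radd, radd, radd]
    simp only [Real.rpow_one]
  have r5 : x^(a+β-1) = x^a*x^β/x := by
    rw [rsub, radd, Real.rpow_one]
  have r6 : x^(a+β-1-1) = x^a*x^β/(x*x) := by
    rw [show a+β-1-1 = a+β-(1+1) by ring, rsub, radd, radd]
    simp only [Real.rpow_one]
  rw [rv1, rv2, rU, r1, r2, r3, r4, r5, r6, hxB, htc, hμa, hlam2, hβa]
  have hxane : x ^ a ≠ 0 := (Real.rpow_pos_of_pos hxpos a).ne'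
  field_simp
  ring
end

section
/- Let (u,v) be a smooth pair on an open set D ⊆ (0,∞) × ℝ, with u > 0, solving the potential system S(-2,-1/2): v_x = x u and v_t = x u^{-2} u_x + (3/2) u^{-1}. Let ε ∈ ℝ be such that on D one has 1 - ε v(x,t) > 0 and 2 ε x^2 u(x,t) + 1 - ε v(x,t) ≠ 0, and suppose the map Φ(x,t) = (x/(1 - ε v(x,t))^2, t) is a bijection from D onto an open set D' with smooth inverse. Define, for (ξ,τ) ∈ D' with (x,t) = Φ^{-1}(ξ,τ): u'(ξ,τ) = u(1-εv)^3 / (2εx^2u + 1 - εv) and v'(ξ,τ) = v/(1-εv), where u, v are evaluated at (x,t). Then (u',v') solves the same system S(-2,-1/2) on D': v'_ξ = ξ u' and v'_τ = ξ u'^{-2} u'_ξ + (3/2) u'^{-1}. (This is the one-parameter group generated by the potential symmetry 2xv ∂_x - 2(x^2u^2 + uv) ∂_u + v^2 ∂_v.) -/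
open Real Set

/-- the one-parameter group generated by the potential symmetry
`2xv ∂ₓ - 2(x²u² + uv) ∂ᵤ + v² ∂ᵥ` maps the potential system `S(-2,-1/2)`
(`v_x = xu`, `v_t = x u⁻² u_x + (3/2) u⁻¹`) into itself: if `(u,v)` solves it on
`D`, `1 - εv > 0` and `2εx²u + 1 - εv ≠ 0` on `D`, and
`Φ(x,t) = (x/(1-εv)², t)` is a bijection of `D` onto the open set `D'` with smooth
inverse `Ψ`, then `u' = u(1-εv)³/(2εx²u + 1 - εv)`, `v' = v/(1-εv)` (composed
with `Ψ`) solve the same system on `D'`. -/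
theorem stmt12 (D D' : Set (ℝ × ℝ)) (hD : IsOpen D) (hD' : IsOpen D')
    (hDpos : ∀ p ∈ D, 0 < p.1)
    (u v : ℝ → ℝ → ℝ)
    (hu : ContDiffOn ℝ (⊤ : ℕ∞) (fun p : ℝ × ℝ => u p.1 p.2) D)
    (hv : ContDiffOn ℝ (⊤ : ℕ∞) (fun p : ℝ × ℝ => v p.1 p.2) D)
    (hupos : ∀ p ∈ D, 0 < u p.1 p.2)
    (hsys1 : ∀ p ∈ D, deriv (fun x => v x p.2) p.1 = p.1 * u p.1 p.2)
    (hsys2 : ∀ p ∈ D, deriv (fun t => v p.1 t) p.2 =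
      p.1 * (u p.1 p.2 ^ 2)⁻¹ * deriv (fun x => u x p.2) p.1 +
        (3 / 2) * (u p.1 p.2)⁻¹)
    (ε : ℝ)
    (hε1 : ∀ p ∈ D, 0 < 1 - ε * v p.1 p.2)
    (hε2 : ∀ p ∈ D, 2 * ε * p.1 ^ 2 * u p.1 p.2 + 1 - ε * v p.1 p.2 ≠ 0)
    (Ψ : ℝ × ℝ → ℝ × ℝ) (hΨ : ContDiffOn ℝ (⊤ : ℕ∞) Ψ D')
    (hbij : Set.BijOn (fun p : ℝ × ℝ => (p.1 / (1 - ε * v p.1 p.2) ^ 2, p.2)) D D')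
    (hinv : ∀ p ∈ D, Ψ (p.1 / (1 - ε * v p.1 p.2) ^ 2, p.2) = p)
    (u' v' : ℝ → ℝ → ℝ)
    (hu' : ∀ q ∈ D', u' q.1 q.2 =
      u (Ψ q).1 (Ψ q).2 * (1 - ε * v (Ψ q).1 (Ψ q).2) ^ 3 /
        (2 * ε * (Ψ q).1 ^ 2 * u (Ψ q).1 (Ψ q).2 + 1 - ε * v (Ψ q).1 (Ψ q).2))
    (hv' : ∀ q ∈ D', v' q.1 q.2 =
      v (Ψ q).1 (Ψ q).2 / (1 - ε * v (Ψ q).1 (Ψ q).2)) :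
    ∀ q ∈ D',
      deriv (fun ξ => v' ξ q.2) q.1 = q.1 * u' q.1 q.2 ∧
      deriv (fun τ => v' q.1 τ) q.2 =
        q.1 * (u' q.1 q.2 ^ 2)⁻¹ * deriv (fun ξ => u' ξ q.2) q.1 +
          (3 / 2) * (u' q.1 q.2)⁻¹ := by

  intro q hq
  -- basic facts about Ψ on D'
  have key : ∀ q' ∈ D', Ψ q' ∈ D ∧ (Ψ q').2 = q'.2 ∧
      (Ψ q').1 / (1 - ε * v (Ψ q').1 (Ψ q').2) ^ 2 = q'.1 := by
    intro q' hq'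
    obtain ⟨p', hp'D, hp'⟩ := hbij.surjOn hq'
    have hinvq : Ψ q' = p' := by rw [← hp']; exact hinv p' hp'D
    refine ⟨by rw [hinvq]; exact hp'D, ?_, ?_⟩
    · rw [hinvq, ← hp']
    · rw [hinvq, ← hp']
  obtain ⟨p, hpD, hΦp⟩ := hbij.surjOn hq
  obtain ⟨x, t⟩ := p
  have hΨq : Ψ q = (x, t) := by rw [← hΦp]; exact hinv (x, t) hpD
  have hq1 : q.1 = x / (1 - ε * v x t) ^ 2 := by rw [← hΦp]
  have hq2 : q.2 = t := by rw [← hΦp]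
  have hx : 0 < x := hDpos (x, t) hpD
  have hU0 : 0 < u x t := hupos (x, t) hpD
  have hW : 0 < 1 - ε * v x t := hε1 (x, t) hpD
  have hA : 2 * ε * x ^ 2 * u x t + 1 - ε * v x t ≠ 0 := hε2 (x, t) hpD
  have hWne : (1 : ℝ) - ε * v x t ≠ 0 := ne_of_gt hW
  have hU0ne : u x t ≠ 0 := ne_of_gt hU0
  have hxne : x ≠ 0 := ne_of_gt hx
  -- differentiability
  have hudiff : DifferentiableAt ℝ (fun p : ℝ × ℝ => u p.1 p.2) (x, t) :=
    (hu.contDiffAt (hD.mem_nhds hpD)).differentiableAt (by simp)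
  have hvdiff : DifferentiableAt ℝ (fun p : ℝ × ℝ => v p.1 p.2) (x, t) :=
    (hv.contDiffAt (hD.mem_nhds hpD)).differentiableAt (by simp)
  have hΨdiff : DifferentiableAt ℝ Ψ q :=
    (hΨ.contDiffAt (hD'.mem_nhds hq)).differentiableAt (by simp)
  have hΨdiff' : DifferentiableAt ℝ Ψ (q.1, q.2) := hΨdiff
  -- curves
  have hcx : HasDerivAt (fun a : ℝ => (a, t)) ((1 : ℝ), (0 : ℝ)) x :=
    (hasDerivAt_id x).prodMk (hasDerivAt_const x t)
  have hct : HasDerivAt (fun τ : ℝ => (x, τ)) ((0 : ℝ), (1 : ℝ)) t :=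
    (hasDerivAt_const t x).prodMk (hasDerivAt_id t)
  -- partial derivatives of u and v
  have hudx : DifferentiableAt ℝ (fun a => u a t) x := by have h := hudiff.comp x hcx.differentiableAt; exact h
  set ux := deriv (fun a => u a t) x with hux_def
  have hux : HasDerivAt (fun a => u a t) ux x := hudx.hasDerivAt
  have hvdx : DifferentiableAt ℝ (fun a => v a t) x := by have h := hvdiff.comp x hcx.differentiableAt; exact h
  have hvx : HasDerivAt (fun a => v a t) (x * u x t) x := by
    have h := hvdx.hasDerivAt
    rwa [show deriv (fun a => v a t) x = x * u x t from hsys1 (x, t) hpD] at h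
  have hvdt : DifferentiableAt ℝ (fun τ => v x τ) t := hvdiff.comp t hct.differentiableAt
  set vt := deriv (fun τ => v x τ) t with hvt_def
  have hvt : HasDerivAt (fun τ => v x τ) vt t := hvdt.hasDerivAt
  have hvteq : vt = x * (u x t ^ 2)⁻¹ * ux + 3 / 2 * (u x t)⁻¹ := hsys2 (x, t) hpD
  have hWx : HasDerivAt (fun a => 1 - ε * v a t) (-(ε * (x * u x t))) x :=
    (hvx.const_mul ε).const_sub 1
  have hWt : HasDerivAt (fun τ => 1 - ε * v x τ) (-(ε * vt)) t :=
    (hvt.const_mul ε).const_sub 1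
  -- ψ : first component of Ψ at fixed time q.2
  set gψ : ℝ → ℝ := fun ξ => (Ψ (ξ, q.2)).1 with hgψ_def
  have hgψd : DifferentiableAt ℝ gψ q.1 :=
    (hΨdiff'.comp q.1 ((differentiableAt_id).prodMk (differentiableAt_const q.2))).fst
  set m := deriv gψ q.1 with hm_def
  have hm : HasDerivAt gψ m q.1 := hgψd.hasDerivAt
  have hgq : gψ q.1 = x := by
    show (Ψ (q.1, q.2)).1 = x
    rw [show ((q.1, q.2) : ℝ × ℝ) = q from rfl, hΨq]
  -- x-derivative of Φ₁
  have hf1 : HasDerivAt (fun a => a / (1 - ε * v a t) ^ 2)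
      ((2 * ε * x ^ 2 * u x t + 1 - ε * v x t) / (1 - ε * v x t) ^ 3) x := by
    refine ((hasDerivAt_id x).div (hWx.pow 2) (pow_ne_zero 2 hWne)).congr_deriv ?_
    simp only [Pi.pow_apply, id]
    field_simp
    ring
  have hmemD : ∀ᶠ a in nhds x, (a, t) ∈ D :=
    (continuous_id.prodMk continuous_const).continuousAt.preimage_mem_nhds
      (hD.mem_nhds hpD)
  have hev1 : (fun a => gψ (a / (1 - ε * v a t) ^ 2)) =ᶠ[nhds x] id := by
    filter_upwards [hmemD] with a ha
    show (Ψ (a / (1 - ε * v a t) ^ 2, q.2)).1 = a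
    rw [hq2, hinv (a, t) ha]
  have hmcomp : HasDerivAt (fun a => gψ (a / (1 - ε * v a t) ^ 2))
      (m * ((2 * ε * x ^ 2 * u x t + 1 - ε * v x t) / (1 - ε * v x t) ^ 3)) x := by
    have hm' : HasDerivAt gψ m (x / (1 - ε * v x t) ^ 2) := by
      rw [← hq1]; exact hm
    exact hm'.comp x hf1
  have hm1 : m * ((2 * ε * x ^ 2 * u x t + 1 - ε * v x t) / (1 - ε * v x t) ^ 3) = 1 :=
    hmcomp.unique ((hasDerivAt_id x).congr_of_eventuallyEq hev1)
  have hmval : m = (1 - ε * v x t) ^ 3 / (2 * ε * x ^ 2 * u x t + 1 - ε * v x t) := by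
    rw [eq_div_iff hA]
    field_simp at hm1
    linarith
  -- ξ-derivative of v'
  have hVx : HasDerivAt (fun a => v a t / (1 - ε * v a t))
      (x * u x t / (1 - ε * v x t) ^ 2) x := by
    refine (hvx.div hWx hWne).congr_deriv ?_
    field_simp
    ring
  have hmemD' : ∀ᶠ ξ in nhds q.1, (ξ, q.2) ∈ D' :=
    (continuous_id.prodMk continuous_const).continuousAt.preimage_mem_nhds
      (hD'.mem_nhds hq)
  have hev2 : (fun ξ => v' ξ q.2) =ᶠ[nhds q.1]
      fun ξ => v (gψ ξ) t / (1 - ε * v (gψ ξ) t) := by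
    filter_upwards [hmemD'] with ξ hξ
    have h1 := hv' (ξ, q.2) hξ
    have h2 := (key (ξ, q.2) hξ).2.1
    show v' ξ q.2 = v (Ψ (ξ, q.2)).1 t / (1 - ε * v (Ψ (ξ, q.2)).1 t)
    rw [h1, h2, hq2]
  have hVcomp : HasDerivAt (fun ξ => v (gψ ξ) t / (1 - ε * v (gψ ξ) t))
      (x * u x t / (1 - ε * v x t) ^ 2 * m) q.1 := by
    have hVx' : HasDerivAt (fun a => v a t / (1 - ε * v a t))
        (x * u x t / (1 - ε * v x t) ^ 2) (gψ q.1) := by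
      rw [hgq]; exact hVx
    exact hVx'.comp q.1 hm
  have hderiv_v'ξ : deriv (fun ξ => v' ξ q.2) q.1
      = x * u x t / (1 - ε * v x t) ^ 2 * m := by
    rw [hev2.deriv_eq]; exact hVcomp.deriv
  -- ξ-derivative of u'
  have hNum : HasDerivAt (fun a => u a t * (1 - ε * v a t) ^ 3)
      (ux * (1 - ε * v x t) ^ 3
        + u x t * ((3 : ℝ) * (1 - ε * v x t) ^ 2 * (-(ε * (x * u x t))))) x := by
    exact hux.mul (hWx.pow 3)
  have hDen : HasDerivAt (fun a => 2 * ε * a ^ 2 * u a t + 1 - ε * v a t)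
      (((2 * ε * ((2 : ℝ) * x ^ 1)) * u x t + 2 * ε * x ^ 2 * ux) - ε * (x * u x t)) x := by
    have h1 := ((hasDerivAt_pow 2 x).const_mul (2 * ε)).mul hux
    exact (h1.add_const 1).sub (hvx.const_mul ε)
  have hUder : HasDerivAt
      (fun a => u a t * (1 - ε * v a t) ^ 3 / (2 * ε * a ^ 2 * u a t + 1 - ε * v a t))
      (((ux * (1 - ε * v x t) - 3 * ε * x * u x t ^ 2)
          * (2 * ε * x ^ 2 * u x t + 1 - ε * v x t)
        - u x t * (1 - ε * v x t) * (3 * ε * x * u x t + 2 * ε * x ^ 2 * ux))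
        * (1 - ε * v x t) ^ 2
        / (2 * ε * x ^ 2 * u x t + 1 - ε * v x t) ^ 2) x := by
    refine (hNum.div hDen hA).congr_deriv ?_
    field_simp
    ring
  have hev3 : (fun ξ => u' ξ q.2) =ᶠ[nhds q.1]
      fun ξ => u (gψ ξ) t * (1 - ε * v (gψ ξ) t) ^ 3
        / (2 * ε * (gψ ξ) ^ 2 * u (gψ ξ) t + 1 - ε * v (gψ ξ) t) := by
    filter_upwards [hmemD'] with ξ hξ
    have h1 := hu' (ξ, q.2) hξ
    have h2 := (key (ξ, q.2) hξ).2.1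
    show u' ξ q.2 = u (Ψ (ξ, q.2)).1 t * (1 - ε * v (Ψ (ξ, q.2)).1 t) ^ 3
      / (2 * ε * (Ψ (ξ, q.2)).1 ^ 2 * u (Ψ (ξ, q.2)).1 t + 1 - ε * v (Ψ (ξ, q.2)).1 t)
    rw [h1, h2, hq2]
  have hUcomp : HasDerivAt
      (fun ξ => u (gψ ξ) t * (1 - ε * v (gψ ξ) t) ^ 3
        / (2 * ε * (gψ ξ) ^ 2 * u (gψ ξ) t + 1 - ε * v (gψ ξ) t))
      ((((ux * (1 - ε * v x t) - 3 * ε * x * u x t ^ 2)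
          * (2 * ε * x ^ 2 * u x t + 1 - ε * v x t)
        - u x t * (1 - ε * v x t) * (3 * ε * x * u x t + 2 * ε * x ^ 2 * ux))
        * (1 - ε * v x t) ^ 2
        / (2 * ε * x ^ 2 * u x t + 1 - ε * v x t) ^ 2) * m) q.1 := by
    have hU' : HasDerivAt
        (fun a => u a t * (1 - ε * v a t) ^ 3 / (2 * ε * a ^ 2 * u a t + 1 - ε * v a t))
        (((ux * (1 - ε * v x t) - 3 * ε * x * u x t ^ 2)
            * (2 * ε * x ^ 2 * u x t + 1 - ε * v x t)
          - u x t * (1 - ε * v x t) * (3 * ε * x * u x t + 2 * ε * x ^ 2 * ux))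
          * (1 - ε * v x t) ^ 2
          / (2 * ε * x ^ 2 * u x t + 1 - ε * v x t) ^ 2) (gψ q.1) := by
      rw [hgq]; exact hUder
    exact hU'.comp q.1 hm
  have hderiv_u'ξ : deriv (fun ξ => u' ξ q.2) q.1
      = (((ux * (1 - ε * v x t) - 3 * ε * x * u x t ^ 2)
          * (2 * ε * x ^ 2 * u x t + 1 - ε * v x t)
        - u x t * (1 - ε * v x t) * (3 * ε * x * u x t + 2 * ε * x ^ 2 * ux))
        * (1 - ε * v x t) ^ 2
        / (2 * ε * x ^ 2 * u x t + 1 - ε * v x t) ^ 2) * m := by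
    rw [hev3.deriv_eq]; exact hUcomp.deriv
  -- the curve τ ↦ Ψ(q.1, τ)
  set γ : ℝ → ℝ × ℝ := fun τ => Ψ (q.1, τ) with hγ_def
  have hγd : DifferentiableAt ℝ γ q.2 :=
    hΨdiff'.comp q.2 ((differentiableAt_const q.1).prodMk differentiableAt_id)
  set k := deriv γ q.2 with hk_def
  have hk : HasDerivAt γ k q.2 := hγd.hasDerivAt
  have hγq : γ q.2 = (x, t) := by
    show Ψ (q.1, q.2) = (x, t)
    rw [show ((q.1, q.2) : ℝ × ℝ) = q from rfl, hΨq]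
  have hmemτ : ∀ᶠ τ in nhds q.2, (q.1, τ) ∈ D' :=
    (continuous_const.prodMk continuous_id).continuousAt.preimage_mem_nhds
      (hD'.mem_nhds hq)
  have hk2 : k.2 = 1 := by
    have hγ2 : HasDerivAt (fun τ => (γ τ).2) k.2 q.2 :=
      (ContinuousLinearMap.snd ℝ ℝ ℝ).hasFDerivAt.comp_hasDerivAt q.2 hk
    have h1 : HasDerivAt (fun τ => (γ τ).2) 1 q.2 := by
      refine (hasDerivAt_id q.2).congr_of_eventuallyEq ?_
      filter_upwards [hmemτ] with τ hτ
      exact (key (q.1, τ) hτ).2.1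
    exact hγ2.unique h1
  -- linearity helper
  have hlin : ∀ (T : ℝ × ℝ →L[ℝ] ℝ) (w : ℝ × ℝ),
      T w = w.1 * T (1, 0) + w.2 * T (0, 1) := by
    intro T w
    have hw : w = w.1 • ((1 : ℝ), (0 : ℝ)) + w.2 • ((0 : ℝ), (1 : ℝ)) := by
      simp [Prod.ext_iff]
    calc T w = T (w.1 • ((1 : ℝ), (0 : ℝ)) + w.2 • ((0 : ℝ), (1 : ℝ))) := by rw [← hw]
      _ = w.1 * T (1, 0) + w.2 * T (0, 1) := by
          rw [map_add, map_smul, map_smul]; rfl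
  -- two-variable derivative of Φ₁
  have hWdiff : DifferentiableAt ℝ (fun pt : ℝ × ℝ => (1 - ε * v pt.1 pt.2) ^ 2) (x, t) :=
    (((hvdiff.const_mul ε).const_sub 1).pow 2)
  have hΦ1diff : DifferentiableAt ℝ
      (fun pt : ℝ × ℝ => pt.1 / (1 - ε * v pt.1 pt.2) ^ 2) (x, t) :=
    by
      simp only [div_eq_mul_inv]
      exact differentiableAt_fst.mul (hWdiff.inv (pow_ne_zero 2 hWne))
  set L := fderiv ℝ (fun pt : ℝ × ℝ => pt.1 / (1 - ε * v pt.1 pt.2) ^ 2) (x, t) with hL_def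
  have hL : HasFDerivAt (fun pt : ℝ × ℝ => pt.1 / (1 - ε * v pt.1 pt.2) ^ 2) L (x, t) :=
    hΦ1diff.hasFDerivAt
  have hL1 : L (1, 0) = (2 * ε * x ^ 2 * u x t + 1 - ε * v x t) / (1 - ε * v x t) ^ 3 :=
    by have h := hL.comp_hasDerivAt x hcx; exact h.unique hf1
  have hL2 : L (0, 1) = 2 * ε * x * vt / (1 - ε * v x t) ^ 3 := by
    have h2 : HasDerivAt (fun τ => x / (1 - ε * v x τ) ^ 2)
        (2 * ε * x * vt / (1 - ε * v x t) ^ 3) t := by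
      refine ((hasDerivAt_const t x).div (hWt.pow 2) (pow_ne_zero 2 hWne)).congr_deriv ?_
      simp only [Pi.pow_apply, id]
      field_simp
      ring
    exact (hL.comp_hasDerivAt t hct).unique h2
  have hLk0 : L k = 0 := by
    have hL' : HasFDerivAt (fun pt : ℝ × ℝ => pt.1 / (1 - ε * v pt.1 pt.2) ^ 2)
        L (γ q.2) := by rw [hγq]; exact hL
    have h := hL'.comp_hasDerivAt q.2 hk
    have h0 : HasDerivAt (fun τ => (γ τ).1 / (1 - ε * v (γ τ).1 (γ τ).2) ^ 2) 0 q.2 := by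
      refine (hasDerivAt_const q.2 q.1).congr_of_eventuallyEq ?_
      filter_upwards [hmemτ] with τ hτ
      exact (key (q.1, τ) hτ).2.2
    exact h.unique h0
  have hk1 : k.1 = -(2 * ε * x * vt) / (2 * ε * x ^ 2 * u x t + 1 - ε * v x t) := by
    rw [hlin L k, hL1, hL2, hk2] at hLk0
    rw [eq_div_iff hA]
    have hW3 : (1 - ε * v x t) ^ 3 ≠ 0 := pow_ne_zero 3 hWne
    field_simp at hLk0
    linarith
  -- two-variable derivative of V₂
  have hV2diff : DifferentiableAt ℝ
      (fun pt : ℝ × ℝ => v pt.1 pt.2 / (1 - ε * v pt.1 pt.2)) (x, t) :=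
    by
      simp only [div_eq_mul_inv]
      exact hvdiff.mul (((hvdiff.const_mul ε).const_sub 1).inv hWne)
  set LV := fderiv ℝ (fun pt : ℝ × ℝ => v pt.1 pt.2 / (1 - ε * v pt.1 pt.2)) (x, t)
    with hLV_def
  have hLV : HasFDerivAt (fun pt : ℝ × ℝ => v pt.1 pt.2 / (1 - ε * v pt.1 pt.2))
      LV (x, t) := hV2diff.hasFDerivAt
  have hLV1 : LV (1, 0) = x * u x t / (1 - ε * v x t) ^ 2 :=
    by have h := hLV.comp_hasDerivAt x hcx; exact h.unique hVx
  have hLV2 : LV (0, 1) = vt / (1 - ε * v x t) ^ 2 := by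
    have h2 : HasDerivAt (fun τ => v x τ / (1 - ε * v x τ))
        (vt / (1 - ε * v x t) ^ 2) t := by
      refine (hvt.div hWt hWne).congr_deriv ?_
      field_simp
      ring
    exact (hLV.comp_hasDerivAt t hct).unique h2
  have hevτ : (fun τ => v' q.1 τ) =ᶠ[nhds q.2]
      fun τ => v (γ τ).1 (γ τ).2 / (1 - ε * v (γ τ).1 (γ τ).2) := by
    filter_upwards [hmemτ] with τ hτ
    exact hv' (q.1, τ) hτ
  have hτcomp : HasDerivAt
      (fun τ => v (γ τ).1 (γ τ).2 / (1 - ε * v (γ τ).1 (γ τ).2)) (LV k) q.2 := by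
    have hLV' : HasFDerivAt (fun pt : ℝ × ℝ => v pt.1 pt.2 / (1 - ε * v pt.1 pt.2))
        LV (γ q.2) := by rw [hγq]; exact hLV
    exact hLV'.comp_hasDerivAt q.2 hk
  have hderiv_v'τ : deriv (fun τ => v' q.1 τ) q.2
      = k.1 * (x * u x t / (1 - ε * v x t) ^ 2) + vt / (1 - ε * v x t) ^ 2 := by
    rw [hevτ.deriv_eq, hτcomp.deriv, hlin LV k, hLV1, hLV2, hk2, one_mul]
  -- rewrite u' at q
  have hu'q : u' q.1 q.2 = u x t * (1 - ε * v x t) ^ 3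
      / (2 * ε * x ^ 2 * u x t + 1 - ε * v x t) := by
    have h := hu' q hq
    rw [hΨq] at h
    exact h
  constructor
  · rw [hderiv_v'ξ, hmval, hu'q, hq1]
    field_simp
  · rw [hderiv_v'τ, hk1, hderiv_u'ξ, hmval, hu'q, hq1, hvteq]
    field_simp
    ring
end

section
/- Let (u,v) be a smooth pair on an open set D ⊆ (0,∞) × ℝ, with u > 0, solving the n = -1, μ = 1 potential system: v_x = x u and v_t = (x/u) u_x. Let ε ≠ 0 and suppose the map Φ(x,t) = (e^{t + v(x,t)/2}, t) is a bijection from D onto an open set D' with smooth inverse. Define, for (ξ,τ) ∈ D' with (x,t) = Φ^{-1}(ξ,τ): u'(ξ,τ) = 4ε e^{-(v+2t)}/(u x^2) and v'(ξ,τ) = 2(ε ln x - t), where u, v are evaluated at (x,t). Then on D' the pair (u',v') satisfies v'_ξ = ξ u' and v'_τ = ε (ξ/u') u'_ξ + 2(ε - 1). -/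
open Real Set

/-- if `(u,v)` solves the `n = -1, μ = 1` potential system
`v_x = xu`, `v_t = (x/u) u_x` on `D ⊆ (0,∞) × ℝ`, `ε ≠ 0`, and
`Φ(x,t) = (e^{t+v/2}, t)` is a bijection of `D` onto the open set `D'` with smooth
inverse `Ψ`, then `u' = 4ε e^{-(v+2t)}/(ux²)`, `v' = 2(ε ln x - t)` (composed
with `Ψ`) satisfy `v'_ξ = ξ u'` and `v'_τ = ε (ξ/u') u'_ξ + 2(ε-1)` on `D'`. -/
theorem stmt13 (D D' : Set (ℝ × ℝ)) (hD : IsOpen D) (hD' : IsOpen D')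
    (hDpos : ∀ p ∈ D, 0 < p.1)
    (u v : ℝ → ℝ → ℝ)
    (hu : ContDiffOn ℝ (⊤ : ℕ∞) (fun p : ℝ × ℝ => u p.1 p.2) D)
    (hv : ContDiffOn ℝ (⊤ : ℕ∞) (fun p : ℝ × ℝ => v p.1 p.2) D)
    (hupos : ∀ p ∈ D, 0 < u p.1 p.2)
    (hsys1 : ∀ p ∈ D, deriv (fun x => v x p.2) p.1 = p.1 * u p.1 p.2)
    (hsys2 : ∀ p ∈ D, deriv (fun t => v p.1 t) p.2 =
      (p.1 / u p.1 p.2) * deriv (fun x => u x p.2) p.1)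
    (ε : ℝ) (hε : ε ≠ 0)
    (Ψ : ℝ × ℝ → ℝ × ℝ) (hΨ : ContDiffOn ℝ (⊤ : ℕ∞) Ψ D')
    (hbij : Set.BijOn (fun p : ℝ × ℝ => (exp (p.2 + v p.1 p.2 / 2), p.2)) D D')
    (hinv : ∀ p ∈ D, Ψ (exp (p.2 + v p.1 p.2 / 2), p.2) = p)
    (u' v' : ℝ → ℝ → ℝ)
    (hu' : ∀ q ∈ D', u' q.1 q.2 =
      4 * ε * exp (-(v (Ψ q).1 (Ψ q).2 + 2 * (Ψ q).2)) /
        (u (Ψ q).1 (Ψ q).2 * (Ψ q).1 ^ 2))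
    (hv' : ∀ q ∈ D', v' q.1 q.2 = 2 * (ε * log (Ψ q).1 - (Ψ q).2)) :
    ∀ q ∈ D',
      deriv (fun ξ => v' ξ q.2) q.1 = q.1 * u' q.1 q.2 ∧
      deriv (fun τ => v' q.1 τ) q.2 =
        ε * (q.1 / u' q.1 q.2) * deriv (fun ξ => u' ξ q.2) q.1 + 2 * (ε - 1) := by
  have hlin : ∀ (L : ℝ × ℝ →L[ℝ] ℝ) (w : ℝ × ℝ),
      L w = w.1 * L (1, 0) + w.2 * L (0, 1) := by
    intro L w
    have hw : w = w.1 • ((1:ℝ), (0:ℝ)) + w.2 • ((0:ℝ), (1:ℝ)) := by ext <;> simp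
    rw [hw, map_add, map_smul, map_smul]; simp [smul_eq_mul]
  have hkey : ∀ q' ∈ D', Ψ q' ∈ D ∧ (Ψ q').2 = q'.2 ∧
      exp ((Ψ q').2 + v (Ψ q').1 (Ψ q').2 / 2) = q'.1 := by
    intro q' hq'
    obtain ⟨p', hp', hΦp'⟩ := hbij.surjOn hq'
    have h1 : (exp (p'.2 + v p'.1 p'.2 / 2), p'.2) = q' := hΦp'
    have hΨq' : Ψ q' = p' := by rw [← h1]; exact hinv p' hp'
    refine ⟨hΨq' ▸ hp', by rw [hΨq', ← h1], by rw [hΨq', ← h1]⟩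
  intro q hq
  obtain ⟨hpD, hT, hexpq⟩ := hkey q hq
  have hx : 0 < (Ψ q).1 := hDpos _ hpD
  have hu0 : 0 < u (Ψ q).1 (Ψ q).2 := hupos _ hpD
  have hq1 : 0 < q.1 := hexpq ▸ exp_pos _
  have hxne : (Ψ q).1 ≠ 0 := ne_of_gt hx
  have hune : u (Ψ q).1 (Ψ q).2 ≠ 0 := ne_of_gt hu0
  have hq1ne : q.1 ≠ 0 := ne_of_gt hq1
  -- differentiability
  have hVd : DifferentiableAt ℝ (fun r : ℝ × ℝ => v r.1 r.2) (Ψ q) :=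
    (hv.contDiffAt (hD.mem_nhds hpD)).differentiableAt (by simp)
  have hUd : DifferentiableAt ℝ (fun r : ℝ × ℝ => u r.1 r.2) (Ψ q) :=
    (hu.contDiffAt (hD.mem_nhds hpD)).differentiableAt (by simp)
  have hΨd : DifferentiableAt ℝ Ψ q :=
    (hΨ.contDiffAt (hD'.mem_nhds hq)).differentiableAt (by simp)
  set fV := fderiv ℝ (fun r : ℝ × ℝ => v r.1 r.2) (Ψ q) with hfVdef
  set fU := fderiv ℝ (fun r : ℝ × ℝ => u r.1 r.2) (Ψ q) with hfUdef
  set a := fderiv ℝ Ψ q (1, 0) with hadef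
  set b := fderiv ℝ Ψ q (0, 1) with hbdef
  -- partial derivative identification
  have hvx : fV (1, 0) = (Ψ q).1 * u (Ψ q).1 (Ψ q).2 := by
    rw [← hsys1 _ hpD]
    have h1 : HasDerivAt (fun x : ℝ => (x, (Ψ q).2)) ((1:ℝ), (0:ℝ)) (Ψ q).1 :=
      (hasDerivAt_id _).prodMk (hasDerivAt_const _ _)
    exact ((hVd.hasFDerivAt.comp_hasDerivAt _ h1).deriv).symm
  have hux : fU (1, 0) = deriv (fun x => u x (Ψ q).2) (Ψ q).1 := by
    have h1 : HasDerivAt (fun x : ℝ => (x, (Ψ q).2)) ((1:ℝ), (0:ℝ)) (Ψ q).1 :=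
      (hasDerivAt_id _).prodMk (hasDerivAt_const _ _)
    exact ((hUd.hasFDerivAt.comp_hasDerivAt _ h1).deriv).symm
  have hvt : fV (0, 1) = ((Ψ q).1 / u (Ψ q).1 (Ψ q).2) * fU (1, 0) := by
    have h1 : HasDerivAt (fun t : ℝ => ((Ψ q).1, t)) ((0:ℝ), (1:ℝ)) (Ψ q).2 :=
      (hasDerivAt_const _ _).prodMk (hasDerivAt_id _)
    have h2 : fV (0, 1) = deriv (fun t => v (Ψ q).1 t) (Ψ q).2 :=
      ((hVd.hasFDerivAt.comp_hasDerivAt _ h1).deriv).symm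
    rw [h2, hsys2 _ hpD, hux]
  -- path derivatives
  have hP : HasDerivAt (fun ξ => Ψ (ξ, q.2)) a q.1 := by
    have h1 : HasDerivAt (fun ξ : ℝ => (ξ, q.2)) ((1:ℝ), (0:ℝ)) q.1 :=
      (hasDerivAt_id _).prodMk (hasDerivAt_const _ _)
    exact hΨd.hasFDerivAt.comp_hasDerivAt _ h1
  have hQ : HasDerivAt (fun τ => Ψ (q.1, τ)) b q.2 := by
    have h1 : HasDerivAt (fun τ : ℝ => (q.1, τ)) ((0:ℝ), (1:ℝ)) q.2 :=
      (hasDerivAt_const _ _).prodMk (hasDerivAt_id _)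
    exact hΨd.hasFDerivAt.comp_hasDerivAt _ h1
  have hevP : ∀ᶠ ξ in nhds q.1, (ξ, q.2) ∈ D' := by
    have hc : ContinuousAt (fun ξ : ℝ => (ξ, q.2)) q.1 :=
      (continuous_id.prodMk continuous_const).continuousAt
    exact hc.eventually_mem (hD'.mem_nhds hq)
  have hevQ : ∀ᶠ τ in nhds q.2, (q.1, τ) ∈ D' := by
    have hc : ContinuousAt (fun τ : ℝ => (q.1, τ)) q.2 :=
      (continuous_const.prodMk continuous_id).continuousAt
    exact hc.eventually_mem (hD'.mem_nhds hq)
  have hPfst : HasDerivAt (fun ξ => (Ψ (ξ, q.2)).1) a.1 q.1 := hP.fst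
  have hPsnd : HasDerivAt (fun ξ => (Ψ (ξ, q.2)).2) a.2 q.1 := hP.snd
  have hQfst : HasDerivAt (fun τ => (Ψ (q.1, τ)).1) b.1 q.2 := hQ.fst
  have hQsnd : HasDerivAt (fun τ => (Ψ (q.1, τ)).2) b.2 q.2 := hQ.snd
  have ha2 : a.2 = 0 := by
    have hconst : HasDerivAt (fun ξ => (Ψ (ξ, q.2)).2) 0 q.1 := by
      refine (hasDerivAt_const q.1 q.2).congr_of_eventuallyEq ?_
      filter_upwards [hevP] with ξ hξ
      exact (hkey _ hξ).2.1
    exact hPsnd.unique hconst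
  have hb2 : b.2 = 1 := by
    have hid : HasDerivAt (fun τ => (Ψ (q.1, τ)).2) 1 q.2 := by
      refine (hasDerivAt_id q.2).congr_of_eventuallyEq ?_
      filter_upwards [hevQ] with τ hτ
      exact (hkey _ hτ).2.1
    exact hQsnd.unique hid
  -- v along the paths
  have hvP : HasDerivAt (fun ξ => v (Ψ (ξ, q.2)).1 (Ψ (ξ, q.2)).2) (fV a) q.1 :=
    hVd.hasFDerivAt.comp_hasDerivAt (l := fun r : ℝ × ℝ => v r.1 r.2) _ hP
  have hvQ : HasDerivAt (fun τ => v (Ψ (q.1, τ)).1 (Ψ (q.1, τ)).2) (fV b) q.2 :=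
    hVd.hasFDerivAt.comp_hasDerivAt (l := fun r : ℝ × ℝ => v r.1 r.2) _ hQ
  have huP : HasDerivAt (fun ξ => u (Ψ (ξ, q.2)).1 (Ψ (ξ, q.2)).2) (fU a) q.1 :=
    hUd.hasFDerivAt.comp_hasDerivAt (l := fun r : ℝ × ℝ => u r.1 r.2) _ hP
  -- exp identities give a.1 and b.1
  have hgP : HasDerivAt
      (fun ξ => exp ((Ψ (ξ, q.2)).2 + v (Ψ (ξ, q.2)).1 (Ψ (ξ, q.2)).2 / 2))
      (exp ((Ψ q).2 + v (Ψ q).1 (Ψ q).2 / 2) * (a.2 + fV a / 2)) q.1 :=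
    (hPsnd.add (hvP.div_const 2)).exp
  have hgP1 : exp ((Ψ q).2 + v (Ψ q).1 (Ψ q).2 / 2) * (a.2 + fV a / 2) = 1 := by
    have hid : HasDerivAt
        (fun ξ => exp ((Ψ (ξ, q.2)).2 + v (Ψ (ξ, q.2)).1 (Ψ (ξ, q.2)).2 / 2)) 1 q.1 := by
      refine (hasDerivAt_id q.1).congr_of_eventuallyEq ?_
      filter_upwards [hevP] with ξ hξ
      exact (hkey _ hξ).2.2
    exact hgP.unique hid
  have hgQ : HasDerivAt
      (fun τ => exp ((Ψ (q.1, τ)).2 + v (Ψ (q.1, τ)).1 (Ψ (q.1, τ)).2 / 2))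
      (exp ((Ψ q).2 + v (Ψ q).1 (Ψ q).2 / 2) * (b.2 + fV b / 2)) q.2 :=
    (hQsnd.add (hvQ.div_const 2)).exp
  have hgQ1 : exp ((Ψ q).2 + v (Ψ q).1 (Ψ q).2 / 2) * (b.2 + fV b / 2) = 0 := by
    have hid : HasDerivAt
        (fun τ => exp ((Ψ (q.1, τ)).2 + v (Ψ (q.1, τ)).1 (Ψ (q.1, τ)).2 / 2)) 0 q.2 := by
      refine (hasDerivAt_const q.2 q.1).congr_of_eventuallyEq ?_
      filter_upwards [hevQ] with τ hτ
      exact (hkey _ hτ).2.2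
    exact hgQ.unique hid
  have ha1 : a.1 = 2 / (q.1 * ((Ψ q).1 * u (Ψ q).1 (Ψ q).2)) := by
    have h := hgP1
    rw [hexpq, hlin fV a, ha2, hvx] at h
    field_simp at h ⊢
    linarith [h]
  have hb1 : b.1 = -(2 + ((Ψ q).1 / u (Ψ q).1 (Ψ q).2) * fU (1, 0)) /
      ((Ψ q).1 * u (Ψ q).1 (Ψ q).2) := by
    have h := hgQ1
    rw [hexpq, hlin fV b, hb2, hvx, hvt] at h
    have h2 := (mul_eq_zero.1 h).resolve_left hq1ne
    field_simp at h2 ⊢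
    linear_combination h2
  -- exp(-(v+2t)) = 1/q.1^2
  have hsq : q.1 ^ 2 = exp (v (Ψ q).1 (Ψ q).2 + 2 * (Ψ q).2) := by
    rw [← hexpq, sq, ← Real.exp_add]; congr 1; ring
  have hexpneg : exp (-(v (Ψ q).1 (Ψ q).2 + 2 * (Ψ q).2)) = 1 / q.1 ^ 2 := by
    rw [Real.exp_neg, one_div, hsq]
  -- derivative of v' in ξ
  have hD1 : HasDerivAt (fun ξ => v' ξ q.2)
      (2 * (ε * (a.1 / (Ψ q).1) - a.2)) q.1 := by
    have hlog : HasDerivAt (fun ξ => Real.log (Ψ (ξ, q.2)).1) (a.1 / (Ψ q).1) q.1 :=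
      hPfst.log hxne
    have h := ((hlog.const_mul ε).sub hPsnd).const_mul 2
    refine h.congr_of_eventuallyEq ?_
    filter_upwards [hevP] with ξ hξ
    exact hv' _ hξ
  -- derivative of v' in τ
  have hD2 : HasDerivAt (fun τ => v' q.1 τ)
      (2 * (ε * (b.1 / (Ψ q).1) - b.2)) q.2 := by
    have hlog : HasDerivAt (fun τ => Real.log (Ψ (q.1, τ)).1) (b.1 / (Ψ q).1) q.2 :=
      hQfst.log hxne
    have h := ((hlog.const_mul ε).sub hQsnd).const_mul 2
    refine h.congr_of_eventuallyEq ?_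
    filter_upwards [hevQ] with τ hτ
    exact hv' _ hτ
  -- derivative of u' in ξ
  have hden : HasDerivAt
      (fun ξ => ξ ^ 2 * (u (Ψ (ξ, q.2)).1 (Ψ (ξ, q.2)).2 * (Ψ (ξ, q.2)).1 ^ 2))
      ((2:ℕ) * q.1 ^ 1 * (u (Ψ q).1 (Ψ q).2 * (Ψ q).1 ^ 2) +
        q.1 ^ 2 * (fU a * (Ψ q).1 ^ 2 + u (Ψ q).1 (Ψ q).2 * ((2:ℕ) * (Ψ q).1 ^ 1 * a.1)))
      q.1 :=
    (hasDerivAt_pow 2 q.1).mul (huP.mul (hPfst.pow 2))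
  have hdenne : q.1 ^ 2 * (u (Ψ q).1 (Ψ q).2 * (Ψ q).1 ^ 2) ≠ 0 :=
    ne_of_gt (mul_pos (pow_pos hq1 2) (mul_pos hu0 (pow_pos hx 2)))
  have hU' : HasDerivAt (fun ξ => u' ξ q.2)
      ((0 * (q.1 ^ 2 * (u (Ψ q).1 (Ψ q).2 * (Ψ q).1 ^ 2)) -
        4 * ε * ((2:ℕ) * q.1 ^ 1 * (u (Ψ q).1 (Ψ q).2 * (Ψ q).1 ^ 2) +
          q.1 ^ 2 * (fU a * (Ψ q).1 ^ 2 + u (Ψ q).1 (Ψ q).2 * ((2:ℕ) * (Ψ q).1 ^ 1 * a.1)))) /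
        (q.1 ^ 2 * (u (Ψ q).1 (Ψ q).2 * (Ψ q).1 ^ 2)) ^ 2) q.1 := by
    have h4 := (hasDerivAt_const q.1 (4 * ε)).div hden hdenne
    refine h4.congr_of_eventuallyEq ?_
    filter_upwards [hevP] with ξ hξ
    have he : exp ((Ψ (ξ, q.2)).2 + v (Ψ (ξ, q.2)).1 (Ψ (ξ, q.2)).2 / 2) = ξ :=
      (hkey _ hξ).2.2
    have hune' : u (Ψ (ξ, q.2)).1 (Ψ (ξ, q.2)).2 ≠ 0 := ne_of_gt (hupos _ (hkey _ hξ).1)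
    have hxne' : (Ψ (ξ, q.2)).1 ≠ 0 := ne_of_gt (hDpos _ (hkey _ hξ).1)
    have hξne : ξ ≠ 0 := by rw [← he]; exact (exp_pos _).ne'
    have hsq2 : ξ ^ 2 = exp (v (Ψ (ξ, q.2)).1 (Ψ (ξ, q.2)).2 + 2 * (Ψ (ξ, q.2)).2) := by
      conv_lhs => rw [← he]
      rw [sq, ← Real.exp_add]; congr 1; ring
    simp only [Pi.div_apply]
    rw [hu' _ hξ, Real.exp_neg, ← hsq2]
    field_simp
    try ring
  constructor
  · rw [hD1.deriv, hu' q hq, hexpneg, ha1, ha2]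
    field_simp
    ring
  · rw [hD2.deriv, hU'.deriv, hu' q hq, hexpneg, hlin fU a, ha2, ha1, hb1, hb2]
    push_cast
    field_simp
    ring
end
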